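/- arXiv:2507.09818 — 10 statements merged into one kernel-verified Lean document; each statement's English description precedes it below -/
import Mathlib

section
/- Let f : ℝ → ℝ be a nonnegative function (not assumed measurable) such that for Lebesgue-almost every ξ ∈ ℝ one has ∑_{k∈ℤ} f(ξ+k) = 1 and ∑_{j∈ℤ} f(2^j ξ) = 1 (sums of nonnegative terms, taken in [0,∞]). Then there exists a (possibly non-measurable) set G ⊆ {ξ ∈ ℝ : f(ξ) ≠ 0} such that for Lebesgue-almost every ξ ∈ ℝ there is exactly one k ∈ ℤ with ξ + k ∈ G and exactly one j ∈ ℤ with 2^j ξ ∈ G. -/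
open MeasureTheory

open Function Set MeasureTheory

theorem qmk_exact' {X : Type} {s : Setoid X} {x y : X}
    (h : Quotient.mk s x = Quotient.mk s y) : s.r x y := Quotient.exact h

namespace WaveletAux

/-- dyadic affine relation -/
def DyRel (x y : ℝ) : Prop := ∃ j a m : ℤ, y = 2 ^ j * x + (a : ℝ) * 2 ^ m

lemma dy_coeff {a m mm : ℤ} (h : mm ≤ m) :
    (a : ℝ) * 2 ^ m = ((a * 2 ^ (m - mm).toNat : ℤ) : ℝ) * 2 ^ mm := by
  push_cast
  rw [mul_assoc]
  congr 1
  rw [← zpow_natCast (2:ℝ), Int.toNat_of_nonneg (by omega), ← zpow_add₀ (two_ne_zero (α := ℝ))]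
  congr 1
  omega

lemma dy_add (a m a' m' : ℤ) : ∃ b mm : ℤ, (a:ℝ) * 2 ^ m + (a':ℝ) * 2 ^ m' = (b:ℝ) * 2 ^ mm := by
  refine ⟨a * 2 ^ (m - min m m').toNat + a' * 2 ^ (m' - min m m').toNat, min m m', ?_⟩
  rw [dy_coeff (min_le_left m m'), dy_coeff (min_le_right m m')]
  push_cast
  ring

lemma dy_refl (x : ℝ) : DyRel x x := ⟨0, 0, 0, by simp⟩

lemma dy_addInt (x : ℝ) (k : ℤ) : DyRel x (x + k) := ⟨0, k, 0, by simp⟩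

lemma dy_mulPow (x : ℝ) (j : ℤ) : DyRel x (2 ^ j * x) := ⟨j, 0, 0, by simp⟩

lemma dy_symm {x y : ℝ} (h : DyRel x y) : DyRel y x := by
  obtain ⟨j, a, m, h⟩ := h
  refine ⟨-j, -a, m - j, ?_⟩
  have e1 : (2:ℝ) ^ (-j) * 2 ^ j = 1 := by
    rw [← zpow_add₀ (two_ne_zero (α := ℝ)), neg_add_cancel, zpow_zero]
  have e2 : (2:ℝ) ^ (m - j) = 2 ^ m * 2 ^ (-j) := by
    rw [← zpow_add₀ (two_ne_zero (α := ℝ)), sub_eq_add_neg]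
  rw [h, e2]
  push_cast
  linear_combination (-x) * e1
lemma dy_trans {x y z : ℝ} (h1 : DyRel x y) (h2 : DyRel y z) : DyRel x z := by
  obtain ⟨j, a, m, h1⟩ := h1
  obtain ⟨j', a', m', h2⟩ := h2
  obtain ⟨b, mm, hb⟩ := dy_add a (m + j') a' m'
  refine ⟨j + j', b, mm, ?_⟩
  have e3 : (2:ℝ) ^ (j + j') = 2 ^ j' * 2 ^ j := by
    rw [← zpow_add₀ (two_ne_zero (α := ℝ))]; congr 1; omega
  have e4 : (2:ℝ) ^ (m + j') = 2 ^ j' * 2 ^ m := by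
    rw [← zpow_add₀ (two_ne_zero (α := ℝ))]; congr 1; omega
  rw [h2, h1, e3, ← hb, e4]
  push_cast
  ring

lemma affine_image_null {c b : ℝ} (hc : c ≠ 0) {s : Set ℝ} (hs : volume s = 0) :
    volume ((fun x => c * x + b) '' s) = 0 := by
  have himg : (fun x => c * x + b) '' s = (fun y => c⁻¹ * (y - b)) ⁻¹' s := by
    ext y
    constructor
    · rintro ⟨x, hx, rfl⟩
      show c⁻¹ * (c * x + b - b) ∈ s
      rw [add_sub_cancel_right]
      have hxx : c⁻¹ * (c * x) = x := by field_simp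
      rw [hxx]
      exact hx
    · intro hy
      exact ⟨c⁻¹ * (y - b), hy, by field_simp; ring⟩
  have hcomp : (fun y : ℝ => c⁻¹ * (y - b)) = (fun z => c⁻¹ * z) ∘ (fun y => -b + y) := by
    funext y
    simp [sub_eq_neg_add]
  rw [himg, hcomp, Set.preimage_comp, measure_preimage_add,
    Real.volume_preimage_mul_left (inv_ne_zero hc), hs, mul_zero]

end WaveletAux


theorem csb_form {α β : Type} [Nonempty β] (φ : α → β) (ψ : β → α)
    (hφ : Function.Injective φ) (hψ : Function.Injective ψ) :
    ∃ h : α → β, Function.Bijective h ∧ ∀ a, h a = φ a ∨ ψ (h a) = a := by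
  classical
  set S : Set α := ⋃ n : ℕ, (ψ ∘ φ)^[n] '' (Set.range ψ)ᶜ with hS
  have hS0 : (Set.range ψ)ᶜ ⊆ S := by
    intro a ha
    exact Set.mem_iUnion.2 ⟨0, by simpa using ha⟩
  have hSsucc : ∀ a ∈ S, ψ (φ a) ∈ S := by
    intro a ha
    rcases Set.mem_iUnion.1 ha with ⟨n, x, hx, hxa⟩
    refine Set.mem_iUnion.2 ⟨n + 1, x, hx, ?_⟩
    rw [Function.iterate_succ_apply']
    simp [hxa]
  have hinv : ∀ a ∉ S, ψ (Function.invFun ψ a) = a := by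
    intro a ha
    have : a ∈ Set.range ψ := by
      by_contra h
      exact ha (hS0 h)
    exact Function.invFun_eq this
  refine ⟨fun a => if a ∈ S then φ a else Function.invFun ψ a, ⟨?_, ?_⟩, ?_⟩
  · intro a a' h
    simp only at h
    by_cases h1 : a ∈ S <;> by_cases h2 : a' ∈ S
    · rw [if_pos h1, if_pos h2] at h; exact hφ h
    · rw [if_pos h1, if_neg h2] at h
      exfalso
      have : ψ (φ a) = a' := by rw [h]; exact hinv a' h2
      exact h2 (this ▸ hSsucc a h1)
    · rw [if_neg h1, if_pos h2] at h
      exfalso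
      have : ψ (φ a') = a := by rw [← h]; exact hinv a h1
      exact h1 (this ▸ hSsucc a' h2)
    · rw [if_neg h1, if_neg h2] at h
      have := congrArg ψ h
      rw [hinv a h1, hinv a' h2] at this
      exact this
  · intro b
    by_cases hb : ψ b ∈ S
    · rcases Set.mem_iUnion.1 hb with ⟨n, x, hx, hxa⟩
      cases n with
      | zero =>
        exfalso
        simp only [Function.iterate_zero, id] at hxa
        exact hx ⟨b, hxa.symm⟩
      | succ n =>
        rw [Function.iterate_succ_apply'] at hxa
        set z := (ψ ∘ φ)^[n] x with hz
        have hzS : z ∈ S := Set.mem_iUnion.2 ⟨n, x, hx, rfl⟩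
        have : φ z = b := hψ hxa
        exact ⟨z, by simp [hzS, this]⟩
    · refine ⟨ψ b, ?_⟩
      simp only [hb, if_neg, if_false]
      exact hψ (hinv (ψ b) hb)
  · intro a
    by_cases h1 : a ∈ S
    · left; simp [h1]
    · right; simp only [h1, if_neg, if_false]
      exact hinv a h1

theorem qmk_sound {X : Type} (s : Setoid X) {x y : X} (h : s.r x y) :
    Quotient.mk s x = Quotient.mk s y := Quot.sound h

theorem hall_side {X : Type} {O : Type} [Nonempty X] (wt : X → ENNReal)
    (sA sB : Setoid X)
    (uA : X → ℤ → X)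
    (huA_rel : ∀ x k, sA.r x (uA x k))
    (huA_inj : ∀ x : X, Function.Injective (uA x))
    (hsumA : ∀ x : X, ∑' k : ℤ, wt (uA x k) = 1)
    (uB : X → ℤ → X)
    (huB_surj : ∀ x y : X, sB.r x y → ∃ k, uB x k = y)
    (huB_inj : ∀ x : X, Function.Injective (uB x))
    (hsumB : ∀ x : X, ∑' k : ℤ, wt (uB x k) = 1)
    (π : X → O)
    (hπA : ∀ x y, sA.r x y → π x = π y) (hπB : ∀ x y, sB.r x y → π x = π y)
    (g : ℕ → X → X)
    (hg : ∀ x y : X, π x = π y → ∃ n, g n x = y) :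
    ∃ Φ : Quotient sA → X, (∀ c, wt (Φ c) ≠ 0) ∧
      (∀ c, (Quotient.mk sA (Φ c)) = c) ∧
      Function.Injective (fun c => (Quotient.mk sB (Φ c))) := by
  classical
  set rep : Quotient sA → X := fun c => c.out with hrep
  set bse : Quotient sA → X := fun c =>
    if h : ∃ x : X, π x = π (rep c) then h.choose else Classical.arbitrary X with hbse
  have hbse_spec : ∀ c, π (bse c) = π (rep c) := by
    intro c
    have h : ∃ x : X, π x = π (rep c) := ⟨rep c, rfl⟩
    simp only [hbse, dif_pos h]
    exact h.choose_spec
  have hbse_eq : ∀ c c', π (rep c) = π (rep c') → bse c = bse c' := by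
    intro c c' h
    simp only [hbse, h]
  have hex : ∀ c : Quotient sA, ∃ n, Quotient.mk sA (g n (bse c)) = c := by
    intro c
    obtain ⟨n, hn⟩ := hg (bse c) (rep c) (hbse_spec c)
    exact ⟨n, by rw [hn, hrep]; exact Quotient.out_eq c⟩
  set iidx : Quotient sA → ℕ := fun c => Nat.find (hex c) with hiidx
  have hiidx_spec : ∀ c, Quotient.mk sA (g (iidx c) (bse c)) = c := fun c => Nat.find_spec (hex c)
  have hiidx_inj : ∀ c c', π (rep c) = π (rep c') → iidx c = iidx c' → c = c' := by
    intro c c' h hi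
    have hb := hbse_eq c c' h
    have h1 := hiidx_spec c
    have h2 := hiidx_spec c'
    rw [← h1, ← h2, hi, hb]
  set eps : Quotient sA → ENNReal := fun c => (2 : ENNReal)⁻¹ ^ (iidx c + 2) with heps
  have heps_le_one : ∀ c, eps c ≤ 1 := by
    intro c
    exact pow_le_one' (by simp : (2:ENNReal)⁻¹ ≤ 1) _
  have heps_ne_zero : ∀ c, eps c ≠ 0 := by
    intro c
    apply pow_ne_zero
    simp
  have hKex : ∀ c : Quotient sA, ∃ Kc : Finset ℤ,
      1 - eps c ≤ ∑ k ∈ Kc, wt (uA (rep c) k) ∧ ∀ k ∈ Kc, wt (uA (rep c) k) ≠ 0 := by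
    intro c
    have h1 : (1 : ENNReal) - eps c < ∑' k : ℤ, wt (uA (rep c) k) := by
      rw [hsumA]
      exact ENNReal.sub_lt_self ENNReal.one_ne_top one_ne_zero (heps_ne_zero c)
    rw [ENNReal.tsum_eq_iSup_sum] at h1
    obtain ⟨K0, hK0⟩ := lt_iSup_iff.1 h1
    refine ⟨K0.filter (fun k => wt (uA (rep c) k) ≠ 0), ?_, ?_⟩
    · rw [Finset.sum_filter_ne_zero]
      exact hK0.le
    · intro k hk
      exact (Finset.mem_filter.1 hk).2
  set K : Quotient sA → Finset ℤ := fun c => (hKex c).choose with hK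
  have hKsum : ∀ c, 1 - eps c ≤ ∑ k ∈ K c, wt (uA (rep c) k) := fun c => (hKex c).choose_spec.1
  have hKne : ∀ c, ∀ k ∈ K c, wt (uA (rep c) k) ≠ 0 := fun c => (hKex c).choose_spec.2
  set t : Quotient sA → Finset (Quotient sB) :=
    fun c => (K c).image (fun k => Quotient.mk sB (uA (rep c) k)) with ht
  have hedge_classA : ∀ (c : Quotient sA) (k : ℤ), Quotient.mk sA (uA (rep c) k) = c := by
    intro c k
    have h1 : sA.r (rep c) (uA (rep c) k) := huA_rel _ _
    calc Quotient.mk sA (uA (rep c) k) = Quotient.mk sA (rep c) :=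
          qmk_sound sA (sA.iseqv.symm h1)
      _ = c := Quotient.out_eq c
  have hkey : ∀ (c : Quotient sA), ∀ d ∈ t c, π (Quotient.out d) = π (rep c) := by
    intro c d hd
    obtain ⟨k, _, hk⟩ := Finset.mem_image.1 hd
    have h1 : sB.r (Quotient.out d) (uA (rep c) k) := by
      rw [← hk]
      exact Quotient.mk_out (s := sB) (uA (rep c) k)
    have h2 : π (Quotient.out d) = π (uA (rep c) k) := hπB _ _ h1
    rw [h2]
    exact (hπA _ _ (huA_rel (rep c) k)).symm
  have hall : ∀ s : Finset (Quotient sA), s.card ≤ (s.biUnion t).card := by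
    intro s
    set qOA : Quotient sA → O := fun c => π (rep c) with hqOA
    set qOB : Quotient sB → O := fun d => π (Quotient.out d) with hqOB
    have hmapsto : ∀ c ∈ s, qOA c ∈ s.image qOA := fun c hc => Finset.mem_image_of_mem _ hc
    rw [Finset.card_eq_sum_card_fiberwise hmapsto]
    have hmapsto2 : ∀ d ∈ s.biUnion t, qOB d ∈ s.image qOA := by
      intro d hd
      obtain ⟨c, hc, hdc⟩ := Finset.mem_biUnion.1 hd
      exact Finset.mem_image.2 ⟨c, hc, (hkey c d hdc).symm⟩
    rw [Finset.card_eq_sum_card_fiberwise hmapsto2]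
    apply Finset.sum_le_sum
    intro o _
    set fo := s.filter (fun c => qOA c = o) with hfo
    set Dn := (s.biUnion t).filter (fun d => qOB d = o) with hDn
    have hsub : fo.biUnion t ⊆ Dn := by
      intro d hd
      obtain ⟨c, hc, hdc⟩ := Finset.mem_biUnion.1 hd
      have hc' := Finset.mem_filter.1 hc
      refine Finset.mem_filter.2 ⟨Finset.mem_biUnion.2 ⟨c, hc'.1, hdc⟩, ?_⟩
      show π (Quotient.out d) = o
      rw [hkey c d hdc]
      exact hc'.2
    have hDcard : (fo.biUnion t).card ≤ Dn.card := Finset.card_le_card hsub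
    have hmass : (fo.card : ENNReal) ≤ ((fo.biUnion t).card : ENNReal) + 2⁻¹ := by
      have hlow : (fo.card : ENNReal) ≤
          (∑ c ∈ fo, ∑ k ∈ K c, wt (uA (rep c) k)) + ∑ c ∈ fo, eps c := by
        rw [← Finset.sum_add_distrib]
        calc (fo.card : ENNReal) = ∑ _c ∈ fo, 1 := by simp
          _ ≤ ∑ c ∈ fo, ((∑ k ∈ K c, wt (uA (rep c) k)) + eps c) := by
              apply Finset.sum_le_sum
              intro c _
              calc (1 : ENNReal) = (1 - eps c) + eps c :=
                    (tsub_add_cancel_of_le (heps_le_one c)).symm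
                _ ≤ _ := add_le_add (hKsum c) le_rfl
      have hepsb : ∑ c ∈ fo, eps c ≤ 2⁻¹ := by
        have hinj : ∀ c ∈ fo, ∀ c' ∈ fo, iidx c = iidx c' → c = c' := by
          intro c hc c' hc' h
          have h1 := (Finset.mem_filter.1 hc).2
          have h2 := (Finset.mem_filter.1 hc').2
          exact hiidx_inj c c' (h1.trans h2.symm) h
        calc ∑ c ∈ fo, eps c = ∑ c ∈ fo, (2:ENNReal)⁻¹ ^ (iidx c + 2) := rfl
          _ = ∑ n ∈ fo.image iidx, (2:ENNReal)⁻¹ ^ (n + 2) :=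
              (Finset.sum_image (f := fun n => (2:ENNReal)⁻¹ ^ (n + 2)) hinj).symm
          _ ≤ ∑' n : ℕ, (2:ENNReal)⁻¹ ^ (n + 2) := ENNReal.sum_le_tsum _
          _ = ∑' n : ℕ, (2:ENNReal)⁻¹ ^ n * ((2:ENNReal)⁻¹ * 2⁻¹) := by
              congr 1; funext n; rw [pow_add, pow_two]
          _ = (1 - 2⁻¹)⁻¹ * ((2:ENNReal)⁻¹ * 2⁻¹) := by
              rw [ENNReal.tsum_mul_right, ENNReal.tsum_geometric]
          _ = 2⁻¹ := by
              rw [ENNReal.one_sub_inv_two, inv_inv, ← mul_assoc,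
                ENNReal.mul_inv_cancel two_ne_zero ENNReal.ofNat_ne_top, one_mul]
      have hup : (∑ c ∈ fo, ∑ k ∈ K c, wt (uA (rep c) k)) ≤ ((fo.biUnion t).card : ENNReal) := by
        set D := fo.biUnion t with hD
        set dm : (Σ _ : Quotient sA, ℤ) → Quotient sB :=
          fun p => Quotient.mk sB (uA (rep p.1) p.2) with hdm
        have hmaps : ∀ p ∈ fo.sigma (fun c => K c), dm p ∈ D := by
          intro p hp
          obtain ⟨hp1, hp2⟩ := Finset.mem_sigma.1 hp
          exact Finset.mem_biUnion.2 ⟨p.1, hp1, Finset.mem_image_of_mem _ hp2⟩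
        have hre : ∑ c ∈ fo, ∑ k ∈ K c, wt (uA (rep c) k)
            = ∑ p ∈ fo.sigma (fun c => K c), wt (uA (rep p.1) p.2) := by
          rw [Finset.sum_sigma]
        rw [hre, ← Finset.sum_fiberwise_of_maps_to hmaps (fun p => wt (uA (rep p.1) p.2))]
        have hcard : ((D.card : ENNReal)) = ∑ _d ∈ D, (1:ENNReal) := by simp
        rw [hcard]
        apply Finset.sum_le_sum
        intro d _
        set P := (fo.sigma fun c => K c).filter (fun p => dm p = d) with hP
        -- edges in P are pairwise distinct elements of the sB-class of d.out
        have hedge_inj : ∀ p ∈ P, ∀ q ∈ P, uA (rep p.1) p.2 = uA (rep q.1) q.2 → p = q := by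
          intro p _ q _ h
          obtain ⟨p1, p2⟩ := p
          obtain ⟨q1, q2⟩ := q
          simp only at h
          have h1 : p1 = q1 := by
            rw [← hedge_classA p1 p2, ← hedge_classA q1 q2, h]
          subst h1
          have h2 : p2 = q2 := huA_inj (rep p1) h
          subst h2
          rfl
        have hjex : ∀ p ∈ P, ∃ j, uB (Quotient.out d) j = uA (rep p.1) p.2 := by
          intro p hp
          have hpd : dm p = d := (Finset.mem_filter.1 hp).2
          have h1 : sB.r (Quotient.out d) (uA (rep p.1) p.2) := by
            rw [← hpd]
            exact Quotient.mk_out _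
          exact huB_surj _ _ h1
        set jsel : (Σ _ : Quotient sA, ℤ) → ℤ := fun p =>
          if h : ∃ j, uB (Quotient.out d) j = uA (rep p.1) p.2 then h.choose else 0 with hjsel
        have hjsel_spec : ∀ p ∈ P, uB (Quotient.out d) (jsel p) = uA (rep p.1) p.2 := by
          intro p hp
          have h := hjex p hp
          simp only [hjsel, dif_pos h]
          exact h.choose_spec
        have hjinj : ∀ p ∈ P, ∀ q ∈ P, jsel p = jsel q → p = q := by
          intro p hp q hq h
          apply hedge_inj p hp q hq
          rw [← hjsel_spec p hp, ← hjsel_spec q hq, h]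
        calc ∑ p ∈ P, wt (uA (rep p.1) p.2)
            = ∑ p ∈ P, wt (uB (Quotient.out d) (jsel p)) :=
              Finset.sum_congr rfl (fun p hp => by rw [hjsel_spec p hp])
          _ = ∑ j ∈ P.image jsel, wt (uB (Quotient.out d) j) :=
              (Finset.sum_image (f := fun j => wt (uB (Quotient.out d) j)) hjinj).symm
          _ ≤ ∑' j : ℤ, wt (uB (Quotient.out d) j) := ENNReal.sum_le_tsum _
          _ = 1 := hsumB _
      calc (fo.card : ENNReal) ≤ _ := hlow
        _ ≤ ((fo.biUnion t).card : ENNReal) + 2⁻¹ := add_le_add hup hepsb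
    -- conclude in ℕ
    have : fo.card ≤ (fo.biUnion t).card := by
      by_contra hcon
      push_neg at hcon
      have h1 : ((fo.biUnion t).card : ENNReal) + 1 ≤ (fo.card : ENNReal) := by
        have := Nat.succ_le_of_lt hcon
        exact_mod_cast this
      have h2 : ((fo.biUnion t).card : ENNReal) + 1 ≤ ((fo.biUnion t).card : ENNReal) + 2⁻¹ :=
        h1.trans hmass
      have h3 : (1 : ENNReal) ≤ 2⁻¹ :=
        ENNReal.le_of_add_le_add_left (ENNReal.natCast_ne_top _) h2
      have h4 : (2 : ENNReal)⁻¹ < 1 := by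
        rw [ENNReal.inv_lt_one]
        exact ENNReal.one_lt_two
      exact absurd (h3.trans_lt h4) (lt_irrefl _)
    exact this.trans hDcard
  obtain ⟨F, hFinj, hFmem⟩ := (Finset.all_card_le_biUnion_card_iff_exists_injective t).1 hall
  have hΦex : ∀ c, ∃ k, k ∈ K c ∧ Quotient.mk sB (uA (rep c) k) = F c := by
    intro c
    obtain ⟨k, hk1, hk2⟩ := Finset.mem_image.1 (hFmem c)
    exact ⟨k, hk1, hk2⟩
  set Φ : Quotient sA → X := fun c => uA (rep c) (hΦex c).choose with hΦ
  have hΦB : ∀ c, Quotient.mk sB (Φ c) = F c := fun c => (hΦex c).choose_spec.2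
  refine ⟨Φ, ?_, ?_, ?_⟩
  · intro c
    exact hKne c _ (hΦex c).choose_spec.1
  · intro c
    exact hedge_classA c _
  · intro c c' h
    simp only [hΦB] at h
    exact hFinj h

theorem exists_sel {X O : Type} [Nonempty X] (wt : X → ENNReal)
    (sA sB : Setoid X)
    (uA : X → ℤ → X)
    (huA_rel : ∀ x k, sA.r x (uA x k))
    (huA_surj : ∀ x y : X, sA.r x y → ∃ k, uA x k = y)
    (huA_inj : ∀ x : X, Function.Injective (uA x))
    (hsumA : ∀ x : X, ∑' k : ℤ, wt (uA x k) = 1)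
    (uB : X → ℤ → X)
    (huB_rel : ∀ x k, sB.r x (uB x k))
    (huB_surj : ∀ x y : X, sB.r x y → ∃ k, uB x k = y)
    (huB_inj : ∀ x : X, Function.Injective (uB x))
    (hsumB : ∀ x : X, ∑' k : ℤ, wt (uB x k) = 1)
    (π : X → O)
    (hπA : ∀ x y, sA.r x y → π x = π y) (hπB : ∀ x y, sB.r x y → π x = π y)
    (g : ℕ → X → X)
    (hg : ∀ x y : X, π x = π y → ∃ n, g n x = y) :
    ∃ sel : Quotient sA → X, (∀ c, wt (sel c) ≠ 0) ∧
      (∀ c, Quotient.mk sA (sel c) = c) ∧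
      Function.Bijective (fun c => Quotient.mk sB (sel c)) := by
  classical
  obtain ⟨ΦA, hA0, hA1, hA2⟩ :=
    hall_side wt sA sB uA huA_rel huA_inj hsumA uB huB_surj huB_inj hsumB π hπA hπB g hg
  obtain ⟨ΦB, hB0, hB1, hB2⟩ :=
    hall_side wt sB sA uB huB_rel huB_inj hsumB uA huA_surj huA_inj hsumA π hπB hπA g hg
  haveI : Nonempty (Quotient sB) := ⟨Quotient.mk sB (Classical.arbitrary X)⟩
  set φ : Quotient sA → Quotient sB := fun c => Quotient.mk sB (ΦA c) with hφ
  set ψ : Quotient sB → Quotient sA := fun d => Quotient.mk sA (ΦB d) with hψ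
  obtain ⟨h, hbij, hform⟩ := csb_form φ ψ hA2 hB2
  set sel : Quotient sA → X := fun c => if h c = φ c then ΦA c else ΦB (h c) with hsel
  have hselB : ∀ c, Quotient.mk sB (sel c) = h c := by
    intro c
    simp only [hsel]
    by_cases hc : h c = φ c
    · rw [if_pos hc]; exact hc.symm
    · rw [if_neg hc]
      exact hB1 (h c)
  have hselA : ∀ c, Quotient.mk sA (sel c) = c := by
    intro c
    simp only [hsel]
    by_cases hc : h c = φ c
    · rw [if_pos hc]
      exact hA1 c
    · rw [if_neg hc]
      rcases hform c with h1 | h2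
      · exact absurd h1 hc
      · exact h2
  refine ⟨sel, ?_, hselA, ?_⟩
  · intro c
    simp only [hsel]
    by_cases hc : h c = φ c
    · rw [if_pos hc]; exact hA0 c
    · rw [if_neg hc]; exact hB0 (h c)
  · have : (fun c => Quotient.mk sB (sel c)) = h := funext hselB
    rw [this]
    exact hbij


open WaveletAux

theorem stmt_0 (f : ℝ → ℝ) (hf : ∀ x, 0 ≤ f x)
    (htrans : ∀ᵐ ξ ∂(volume : Measure ℝ),
      ∑' k : ℤ, ENNReal.ofReal (f (ξ + (k : ℝ))) = 1)
    (hdil : ∀ᵐ ξ ∂(volume : Measure ℝ),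
      ∑' j : ℤ, ENNReal.ofReal (f ((2 : ℝ) ^ j * ξ)) = 1) :
    ∃ G : Set ℝ, G ⊆ {ξ : ℝ | f ξ ≠ 0} ∧
      (∀ᵐ ξ ∂(volume : Measure ℝ),
        (∃! k : ℤ, ξ + (k : ℝ) ∈ G) ∧ (∃! j : ℤ, (2 : ℝ) ^ j * ξ ∈ G)) := by
  classical
  set P : ℝ → Prop := fun ξ => ∑' k : ℤ, ENNReal.ofReal (f (ξ + (k:ℝ))) = 1 with hPdef
  set Q : ℝ → Prop := fun ξ => ∑' j : ℤ, ENNReal.ofReal (f ((2:ℝ)^j * ξ)) = 1 with hQdef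
  have hboth : ∀ᵐ ξ ∂(volume : Measure ℝ), P ξ ∧ Q ξ := htrans.and hdil
  set N : Set ℝ := {ξ | ¬ (P ξ ∧ Q ξ)} with hNdef
  have hNnull : volume N = 0 := ae_iff.1 hboth
  set Nstar : Set ℝ := {y | ∃ x ∈ N, DyRel x y} with hNsdef
  have hNsNull : volume Nstar = 0 := by
    have hi : Nstar = ⋃ p : ℤ × ℤ × ℤ, (fun x => 2 ^ p.1 * x + (p.2.1 : ℝ) * 2 ^ p.2.2) '' N := by
      ext y
      simp only [hNsdef, Set.mem_iUnion, Set.mem_image, Set.mem_setOf_eq]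
      constructor
      · rintro ⟨x, hx, j, a, m, hrel⟩
        exact ⟨(j,a,m), x, hx, hrel.symm⟩
      · rintro ⟨⟨j,a,m⟩, x, hx, hrel⟩
        exact ⟨x, hx, j, a, m, hrel.symm⟩
    rw [hi]
    exact measure_iUnion_null fun p =>
      affine_image_null (zpow_ne_zero _ (two_ne_zero (α := ℝ))) hNnull
  set Ω : Set ℝ := Nstarᶜ with hΩdef
  have hNsub : N ⊆ Nstar := fun x hx => ⟨x, hx, dy_refl x⟩
  have hsat : ∀ x ∈ Ω, ∀ y, DyRel x y → y ∈ Ω := by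
    intro x hx y hxy hyN
    obtain ⟨z, hz, hzy⟩ := hyN
    exact hx ⟨z, hz, dy_trans hzy (dy_symm hxy)⟩
  have hPQ : ∀ x ∈ Ω, P x ∧ Q x := by
    intro x hx
    by_contra h
    exact hx (hNsub h)
  have h0 : (0:ℝ) ∉ Ω := by
    intro h0
    have hQ0 := (hPQ 0 h0).2
    simp only [hQdef, mul_zero] at hQ0
    by_cases hf0 : f 0 = 0
    · rw [hf0] at hQ0
      simp at hQ0
    · have hne : ENNReal.ofReal (f 0) ≠ 0 := by
        rw [Ne, ENNReal.ofReal_eq_zero, not_le]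
        exact lt_of_le_of_ne (hf 0) (Ne.symm hf0)
      rw [ENNReal.tsum_const_eq_top_of_ne_zero hne] at hQ0
      exact (ENNReal.top_ne_one hQ0)
  have hΩne : Ω.Nonempty := by
    rw [Set.nonempty_iff_ne_empty]
    intro he
    have huniv : Nstar = Set.univ := by
      have : Nstarᶜ = (∅ : Set ℝ) := he
      rw [← compl_compl Nstar, this, Set.compl_empty]
    rw [huniv, Real.volume_univ] at hNsNull
    exact ENNReal.top_ne_zero hNsNull
  set X := {x : ℝ // x ∈ Ω} with hXdef
  haveI : Nonempty X := ⟨⟨hΩne.choose, hΩne.choose_spec⟩⟩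
  have hx0 : ∀ x : X, (x:ℝ) ≠ 0 := fun x hx => h0 (hx ▸ x.2)
  -- weights
  set wt : X → ENNReal := fun x => ENNReal.ofReal (f (x:ℝ)) with hwt
  -- the two setoids
  have hrAeq : Equivalence (fun x y : X => ∃ k : ℤ, (y:ℝ) = (x:ℝ) + k) := by
    refine ⟨fun x => ⟨0, by simp⟩, ?_, ?_⟩
    · rintro x y ⟨k, hk⟩
      refine ⟨-k, ?_⟩
      rw [hk]; push_cast; ring
    · rintro x y z ⟨k, hk⟩ ⟨k', hk'⟩
      refine ⟨k + k', ?_⟩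
      rw [hk', hk]; push_cast; ring
  set sA : Setoid X := ⟨fun x y => ∃ k : ℤ, (y:ℝ) = (x:ℝ) + k, hrAeq⟩ with hsA
  have hrBeq : Equivalence (fun x y : X => ∃ j : ℤ, (y:ℝ) = 2 ^ j * (x:ℝ)) := by
    refine ⟨fun x => ⟨0, by simp⟩, ?_, ?_⟩
    · rintro x y ⟨j, hj⟩
      refine ⟨-j, ?_⟩
      have e1 : (2:ℝ) ^ (-j) * 2 ^ j = 1 := by
        rw [← zpow_add₀ (two_ne_zero (α := ℝ)), neg_add_cancel, zpow_zero]
      rw [hj]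
      linear_combination (-(x:ℝ)) * e1
    · rintro x y z ⟨j, hj⟩ ⟨j', hj'⟩
      refine ⟨j + j', ?_⟩
      have e3 : (2:ℝ) ^ (j + j') = 2 ^ j' * 2 ^ j := by
        rw [← zpow_add₀ (two_ne_zero (α := ℝ))]; congr 1; omega
      rw [hj', hj, e3]
      ring
  set sB : Setoid X := ⟨fun x y => ∃ j : ℤ, (y:ℝ) = 2 ^ j * (x:ℝ), hrBeq⟩ with hsB
  -- enumerations of classes
  set uA : X → ℤ → X := fun x k => ⟨(x:ℝ) + k, hsat _ x.2 _ (dy_addInt _ _)⟩ with huA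
  set uB : X → ℤ → X := fun x j => ⟨2 ^ j * (x:ℝ), hsat _ x.2 _ (dy_mulPow _ _)⟩ with huB
  have huA_rel : ∀ (x : X) (k : ℤ), sA.r x (uA x k) := fun x k => ⟨k, rfl⟩
  have huB_rel : ∀ (x : X) (j : ℤ), sB.r x (uB x j) := fun x j => ⟨j, rfl⟩
  have huA_surj : ∀ x y : X, sA.r x y → ∃ k, uA x k = y := by
    rintro x y ⟨k, hk⟩
    exact ⟨k, Subtype.ext hk.symm⟩
  have huB_surj : ∀ x y : X, sB.r x y → ∃ j, uB x j = y := by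
    rintro x y ⟨j, hj⟩
    exact ⟨j, Subtype.ext hj.symm⟩
  have huA_inj : ∀ x : X, Function.Injective (uA x) := by
    intro x k k' h
    have h' : (x:ℝ) + k = (x:ℝ) + k' := congrArg Subtype.val h
    have : (k:ℝ) = (k':ℝ) := by linarith
    exact_mod_cast this
  have huB_inj : ∀ x : X, Function.Injective (uB x) := by
    intro x j j' h
    have h' : (2:ℝ) ^ j * (x:ℝ) = 2 ^ j' * (x:ℝ) := congrArg Subtype.val h
    have h2 : (2:ℝ) ^ j = 2 ^ j' := mul_right_cancel₀ (hx0 x) h'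
    exact zpow_right_injective₀ (by norm_num : (0:ℝ) < 2) (by norm_num) h2
  have hsumA : ∀ x : X, ∑' k : ℤ, wt (uA x k) = 1 := by
    intro x
    have := (hPQ x.1 x.2).1
    rw [hPdef] at this
    exact this
  have hsumB : ∀ x : X, ∑' j : ℤ, wt (uB x j) = 1 := by
    intro x
    have := (hPQ x.1 x.2).2
    rw [hQdef] at this
    exact this
  -- the orbit quotient
  set sO : Setoid ℝ := ⟨DyRel, ⟨dy_refl, dy_symm, dy_trans⟩⟩ with hsO
  set π : X → Quotient sO := fun x => Quotient.mk sO (x:ℝ) with hπ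
  have hπA : ∀ x y : X, sA.r x y → π x = π y := by
    rintro x y ⟨k, hk⟩
    exact qmk_sound sO (hk ▸ dy_addInt (x:ℝ) k)
  have hπB : ∀ x y : X, sB.r x y → π x = π y := by
    rintro x y ⟨j, hj⟩
    exact qmk_sound sO (hj ▸ dy_mulPow (x:ℝ) j)
  set g : ℕ → X → X := fun n x =>
    ⟨2 ^ (Denumerable.ofNat (ℤ × ℤ × ℤ) n).1 * (x:ℝ)
      + ((Denumerable.ofNat (ℤ × ℤ × ℤ) n).2.1 : ℝ) * 2 ^ (Denumerable.ofNat (ℤ × ℤ × ℤ) n).2.2,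
      hsat _ x.2 _ ⟨(Denumerable.ofNat (ℤ × ℤ × ℤ) n).1, (Denumerable.ofNat (ℤ × ℤ × ℤ) n).2.1,
        (Denumerable.ofNat (ℤ × ℤ × ℤ) n).2.2, rfl⟩⟩ with hg0
  have hg : ∀ x y : X, π x = π y → ∃ n, g n x = y := by
    intro x y h
    have hrel : DyRel (x:ℝ) (y:ℝ) := qmk_exact' h
    obtain ⟨j, a, m, hy⟩ := hrel
    refine ⟨Encodable.encode ((j, a, m) : ℤ × ℤ × ℤ), Subtype.ext ?_⟩
    show 2 ^ (Denumerable.ofNat (ℤ × ℤ × ℤ) _).1 * (x:ℝ)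
      + ((Denumerable.ofNat (ℤ × ℤ × ℤ) _).2.1 : ℝ) * 2 ^ (Denumerable.ofNat (ℤ × ℤ × ℤ) _).2.2
      = (y:ℝ)
    rw [Denumerable.ofNat_encode]
    exact hy.symm
  obtain ⟨sel, hw, hselA, hbij⟩ := exists_sel wt sA sB uA huA_rel huA_surj huA_inj hsumA
    uB huB_rel huB_surj huB_inj hsumB π hπA hπB g hg
  set G : Set ℝ := Set.range (fun c : Quotient sA => ((sel c : X) : ℝ)) with hGdef
  have hGsub : G ⊆ {ξ : ℝ | f ξ ≠ 0} := by
    rintro ξ ⟨c, hc⟩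
    simp only at hc
    refine fun hfξ => hw c ?_
    show ENNReal.ofReal (f ((sel c : X) : ℝ)) = 0
    rw [hc, hfξ]
    exact ENNReal.ofReal_zero
  refine ⟨G, hGsub, ?_⟩
  have hgood : ∀ ξ, ξ ∈ Ω →
      (∃! k : ℤ, ξ + (k:ℝ) ∈ G) ∧ (∃! j : ℤ, (2:ℝ)^j * ξ ∈ G) := by
    intro ξ hξ
    set x : X := ⟨ξ, hξ⟩ with hx
    have hξ0 : ξ ≠ 0 := hx0 x
    constructor
    · -- translations
      have hcls : Quotient.mk sA (sel (Quotient.mk sA x)) = Quotient.mk sA x := hselA _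
      obtain ⟨k, hk⟩ : sA.r (sel (Quotient.mk sA x)) x := qmk_exact' hcls
      -- hk : ξ = (sel ⟦x⟧ : ℝ) + k
      refine ⟨-k, ⟨Quotient.mk sA x, ?_⟩, ?_⟩
      · show ((sel (Quotient.mk sA x) : X) : ℝ) = ξ + ((-k : ℤ) : ℝ)
        have : (ξ : ℝ) = ((sel (Quotient.mk sA x) : X) : ℝ) + k := hk
        push_cast
        linarith
      · intro y hy
        obtain ⟨c', hc'⟩ := hy
        simp only at hc'
        -- hc' : (sel c' : ℝ) = ξ + y
        have hrel : sA.r (sel c') x := by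
          refine ⟨-y, ?_⟩
          show (ξ : ℝ) = ((sel c' : X) : ℝ) + ((-y : ℤ) : ℝ)
          rw [hc']; push_cast; ring
        have hcc : c' = Quotient.mk sA x := by
          rw [← hselA c']
          exact qmk_sound sA hrel
        rw [hcc] at hc'
        have hk' : ξ = ((sel (Quotient.mk sA x) : X) : ℝ) + (k:ℝ) := hk
        have hy2 : (y:ℝ) = ((-k : ℤ) : ℝ) := by
          push_cast
          rw [hc'] at hk'
          linarith
        exact_mod_cast hy2
    · -- dilations
      obtain ⟨c, hc⟩ := hbij.2 (Quotient.mk sB x)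
      simp only at hc
      obtain ⟨j, hj⟩ : sB.r (sel c) x := qmk_exact' hc
      -- hj : ξ = 2^j * (sel c : ℝ)
      have e1 : (2:ℝ) ^ (-j) * 2 ^ j = 1 := by
        rw [← zpow_add₀ (two_ne_zero (α := ℝ)), neg_add_cancel, zpow_zero]
      refine ⟨-j, ⟨c, ?_⟩, ?_⟩
      · show ((sel c : X) : ℝ) = 2 ^ (-j) * ξ
        have hj' : (ξ : ℝ) = 2 ^ j * ((sel c : X) : ℝ) := hj
        rw [hj']
        linear_combination (-((sel c : X) : ℝ)) * e1
      · intro y hy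
        obtain ⟨c', hc'⟩ := hy
        simp only at hc'
        -- hc' : (sel c' : ℝ) = 2^y * ξ
        have hBc' : Quotient.mk sB (sel c') = Quotient.mk sB x :=
          qmk_sound sB (sB.iseqv.symm ⟨y, hc'⟩)
        have hcc : c' = c := by
          apply hbij.1
          show Quotient.mk sB (sel c') = Quotient.mk sB (sel c)
          rw [hBc', hc]
        rw [hcc] at hc'
        -- hc' : (sel c : ℝ) = 2^y * ξ, and (sel c : ℝ) = 2^(-j) * ξ
        have hval : ((sel c : X) : ℝ) = 2 ^ (-j) * ξ := by
          have hj' : (ξ : ℝ) = 2 ^ j * ((sel c : X) : ℝ) := hj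
          rw [hj']
          linear_combination (-((sel c : X) : ℝ)) * e1
        have h2 : (2:ℝ) ^ (y:ℤ) * ξ = 2 ^ (-j) * ξ := by rw [← hc', hval]
        have h3 : (2:ℝ) ^ (y:ℤ) = 2 ^ (-j) := mul_right_cancel₀ hξ0 h2
        exact zpow_right_injective₀ (by norm_num : (0:ℝ) < 2) (by norm_num) h3
  rw [ae_iff]
  refine measure_mono_null ?_ hNsNull
  intro ξ hbad
  by_contra hξ
  exact hbad (hgood ξ hξ)
end

section
/- Let f : ℝ → ℝ be a nonnegative function such that for Lebesgue-almost every ξ ∈ ℝ one has ∑_{k∈ℤ} f(ξ+k) = 1 and ∑_{j∈ℤ} f(2^j ξ) = 1 (sums of nonnegative terms, taken in [0,∞]). Then there exists a set C ⊆ ℝ \ ℚ of full Lebesgue measure (i.e., m(ℝ \ C) = 0) such that both equalities ∑_{k∈ℤ} f(ξ+k) = 1 and ∑_{j∈ℤ} f(2^j ξ) = 1 hold for every ξ ∈ C, and moreover 2^j·C + q = C for all j ∈ ℤ and all q ∈ ℚ. -/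
open MeasureTheory

theorem stmt_1 (f : ℝ → ℝ) (hf : ∀ x, 0 ≤ f x)
    (htrans : ∀ᵐ ξ ∂(volume : Measure ℝ),
      ∑' k : ℤ, ENNReal.ofReal (f (ξ + (k : ℝ))) = 1)
    (hdil : ∀ᵐ ξ ∂(volume : Measure ℝ),
      ∑' j : ℤ, ENNReal.ofReal (f ((2 : ℝ) ^ j * ξ)) = 1) :
    ∃ C : Set ℝ,
      (∀ ξ ∈ C, Irrational ξ) ∧
      volume Cᶜ = 0 ∧
      (∀ ξ ∈ C,
        (∑' k : ℤ, ENNReal.ofReal (f (ξ + (k : ℝ))) = 1) ∧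
        (∑' j : ℤ, ENNReal.ofReal (f ((2 : ℝ) ^ j * ξ)) = 1)) ∧
      (∀ (j : ℤ) (q : ℚ), (fun x : ℝ => (2 : ℝ) ^ j * x + (q : ℝ)) '' C = C) := by
  set A : Set ℝ := {ξ | (∑' k : ℤ, ENNReal.ofReal (f (ξ + (k : ℝ))) = 1) ∧
      (∑' j : ℤ, ENNReal.ofReal (f ((2 : ℝ) ^ j * ξ)) = 1)} with hAdef
  have hA : ∀ᵐ ξ ∂(volume : Measure ℝ), ξ ∈ A := htrans.and hdil
  -- quasi measure preserving affine maps
  have qmp : ∀ (j : ℤ) (q : ℚ), Measure.QuasiMeasurePreserving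
      (fun x : ℝ => (2 : ℝ) ^ j * x + (q : ℝ)) volume volume := by
    intro j q
    have h2 : ((2 : ℝ) ^ j) ≠ 0 := by positivity
    have hmul : Measure.QuasiMeasurePreserving (fun x : ℝ => (2 : ℝ) ^ j * x)
        volume volume := by
      refine ⟨(measurable_const_mul _), ?_⟩
      rw [Real.map_volume_mul_left h2]
      exact Measure.absolutelyContinuous_of_le_smul le_rfl
    exact ((measurePreserving_add_right volume (q : ℝ)).quasiMeasurePreserving).comp hmul
  -- define C
  set C : Set ℝ := {ξ | Irrational ξ ∧
      ∀ (j : ℤ) (q : ℚ), ((2 : ℝ) ^ j * ξ + (q : ℝ)) ∈ A} with hCdef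
  -- C is invariant under the affine maps
  have hCinv : ∀ ξ ∈ C, ∀ (j : ℤ) (q : ℚ), ((2 : ℝ) ^ j * ξ + (q : ℝ)) ∈ C := by
    rintro ξ ⟨hirr, hmem⟩ j q
    constructor
    · have h2q : ((2 : ℚ) ^ j) ≠ 0 := by positivity
      have : Irrational (((2 : ℚ) ^ j : ℚ) * ξ) := hirr.ratCast_mul h2q
      have h' : Irrational ((2 : ℝ) ^ j * ξ) := by
        have : ((((2 : ℚ) ^ j : ℚ) : ℝ)) = (2 : ℝ) ^ j := by push_cast; ring
        rwa [this] at ‹Irrational (((2 : ℚ) ^ j : ℚ) * ξ)›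
      exact h'.add_ratCast q
    · intro j' q'
      have := hmem (j' + j) ((2 : ℚ) ^ j' * q + q')
      have heq : (2 : ℝ) ^ (j' + j) * ξ + (((2 : ℚ) ^ j' * q + q' : ℚ) : ℝ)
          = (2 : ℝ) ^ j' * ((2 : ℝ) ^ j * ξ + (q : ℝ)) + (q' : ℝ) := by
        push_cast
        rw [zpow_add₀ (by norm_num : (2:ℝ) ≠ 0)]
        ring
      rwa [heq] at this
  refine ⟨C, ?_, ?_, ?_, ?_⟩
  · exact fun ξ hξ => hξ.1
  · -- measure of complement
    have h1 : ∀ᵐ ξ ∂(volume : Measure ℝ), Irrational ξ := by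
      rw [ae_iff]
      have : {ξ : ℝ | ¬Irrational ξ} = Set.range ((↑) : ℚ → ℝ) := by
        ext x; simp [Irrational]
      rw [this]
      exact Set.Countable.measure_zero (Set.countable_range _) _
    have h2 : ∀ᵐ ξ ∂(volume : Measure ℝ),
        ∀ (j : ℤ) (q : ℚ), ((2 : ℝ) ^ j * ξ + (q : ℝ)) ∈ A := by
      rw [MeasureTheory.ae_all_iff]
      intro j
      rw [MeasureTheory.ae_all_iff]
      intro q
      have hnull : volume Aᶜ = 0 := ae_iff.mp hA
      have := (qmp j q).preimage_null hnull
      rw [ae_iff]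
      convert this using 2
      rfl
    have h3 : ∀ᵐ ξ ∂(volume : Measure ℝ), ξ ∈ C := by
      filter_upwards [h1, h2] with ξ ha hb
      exact ⟨ha, hb⟩
    rw [ae_iff] at h3
    exact h3
  · intro ξ hξ
    have := hξ.2 0 0
    exact (by simpa using this : ξ ∈ A)
  · intro j q
    ext x
    constructor
    · rintro ⟨y, hy, rfl⟩
      exact hCinv y hy j q
    · intro hx
      refine ⟨(2 : ℝ) ^ (-j) * x + ((-(2 : ℚ) ^ (-j) * q : ℚ) : ℝ), hCinv x hx (-j) _, ?_⟩
      show (2:ℝ) ^ j * ((2 : ℝ) ^ (-j) * x + ((-(2 : ℚ) ^ (-j) * q : ℚ) : ℝ)) + (q : ℝ) = x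
      have h2 : ((2 : ℝ) ^ j) ≠ 0 := by positivity
      push_cast
      rw [zpow_neg]
      field_simp
      ring
end

section
/- Let A = (a_{mn})_{m,n ∈ ℕ} be a matrix with nonnegative real entries that is doubly stochastic: for every m ∈ ℕ, ∑_{n∈ℕ} a_{mn} = 1, and for every n ∈ ℕ, ∑_{m∈ℕ} a_{mn} = 1 (sums of nonnegative terms). Then A has a positive diagonal: there exists a bijection σ : ℕ → ℕ such that a_{m σ(m)} > 0 for every m ∈ ℕ. -/
open Function

private lemma isbell_exists_pos_inj (a : ℕ → ℕ → ℝ) (ha : ∀ m n, 0 ≤ a m n)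
    (hrow : ∀ m, ∑' n : ℕ, ENNReal.ofReal (a m n) = 1)
    (hcol : ∀ n, ∀ S : Finset ℕ, ∑ m ∈ S, a m n ≤ 1) :
    ∃ f : ℕ → ℕ, Function.Injective f ∧ ∀ m, 0 < a m (f m) := by
  classical
  have heq : (fun m : ℕ => (1/2 : ℝ)^(m+2)) = (fun m : ℕ => (1/2 : ℝ)^m * (1/2)^2) := by
    funext m; ring
  have hgeo : Summable (fun m : ℕ => (1/2 : ℝ)^m) :=
    summable_geometric_of_lt_one (by norm_num) (by norm_num)
  have hsummable : Summable (fun m : ℕ => (1/2 : ℝ)^(m+2)) := by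
    rw [heq]; exact hgeo.mul_right _
  have htsum : ∑' m : ℕ, (1/2 : ℝ)^(m+2) = 1/2 := by
    have h0 : ∑' m : ℕ, (1/2 : ℝ)^m = 2 := by
      rw [tsum_geometric_of_lt_one (by norm_num) (by norm_num)]; norm_num
    rw [heq, tsum_mul_right, h0]; norm_num
  have hF : ∀ m, ∃ F : Finset ℕ, (∀ n ∈ F, 0 < a m n) ∧
      1 - (1/2 : ℝ)^(m+2) ≤ ∑ n ∈ F, a m n := by
    intro m
    have heps : (0:ℝ) < (1/2 : ℝ)^(m+2) := by positivity
    have h1 : ENNReal.ofReal (1 - (1/2 : ℝ)^(m+2)) < ∑' n : ℕ, ENNReal.ofReal (a m n) := by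
      rw [hrow m]
      exact ENNReal.ofReal_lt_one.mpr (by linarith)
    rw [ENNReal.tsum_eq_iSup_sum] at h1
    obtain ⟨T, hT⟩ := lt_iSup_iff.mp h1
    rw [← ENNReal.ofReal_sum_of_nonneg (fun n _ => ha m n)] at hT
    have hle : 1 - (1/2 : ℝ)^(m+2) ≤ ∑ n ∈ T, a m n := by
      rcases le_or_gt (1 - (1/2 : ℝ)^(m+2)) 0 with h | h
      · exact h.trans (Finset.sum_nonneg fun n _ => ha m n)
      · exact le_of_lt ((ENNReal.ofReal_lt_ofReal_iff_of_nonneg h.le).mp hT)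
    refine ⟨T.filter (fun n => 0 < a m n), fun n hn => (Finset.mem_filter.mp hn).2, ?_⟩
    rwa [Finset.sum_filter_of_ne (fun n _ hne => lt_of_le_of_ne (ha m n) (Ne.symm hne))]
  choose F hFpos hFsum using hF
  have hall : ∀ S : Finset ℕ, S.card ≤ (S.biUnion F).card := by
    intro S
    have key : (S.card : ℝ) - 1/2 ≤ ((S.biUnion F).card : ℝ) := by
      have hsmall : ∑ m ∈ S, (1/2 : ℝ)^(m+2) ≤ 1/2 := by
        have := Summable.sum_le_tsum S (fun m _ => by positivity) hsummable
        linarith [htsum ▸ this]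
      calc (S.card : ℝ) - 1/2
          ≤ ∑ m ∈ S, (1 - (1/2 : ℝ)^(m+2)) := by
            rw [Finset.sum_sub_distrib, Finset.sum_const, nsmul_eq_mul, mul_one]
            linarith
        _ ≤ ∑ m ∈ S, ∑ n ∈ F m, a m n := Finset.sum_le_sum fun m _ => hFsum m
        _ ≤ ∑ m ∈ S, ∑ n ∈ S.biUnion F, a m n := by
            refine Finset.sum_le_sum fun m hm => ?_
            exact Finset.sum_le_sum_of_subset_of_nonneg
              (Finset.subset_biUnion_of_mem F hm) (fun n _ _ => ha m n)
        _ = ∑ n ∈ S.biUnion F, ∑ m ∈ S, a m n := Finset.sum_comm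
        _ ≤ ∑ n ∈ S.biUnion F, 1 := Finset.sum_le_sum fun n _ => hcol n S
        _ = ((S.biUnion F).card : ℝ) := by simp
    have : (S.card : ℝ) < ((S.biUnion F).card : ℝ) + 1 := by linarith
    exact_mod_cast Nat.lt_succ_iff.mp (by exact_mod_cast this)
  obtain ⟨f, hfinj, hf⟩ := (Finset.all_card_le_biUnion_card_iff_exists_injective F).mp hall
  exact ⟨f, hfinj, fun m => hFpos m _ (hf m)⟩

private lemma isbell_sb {f g : ℕ → ℕ} (hf : Function.Injective f)
    (hg : Function.Injective g) :
    ∃ σ : ℕ ≃ ℕ, ∀ x, σ x = f x ∨ g (σ x) = x := by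
  classical
  set C : Set ℕ := ⋃ n, (g ∘ f)^[n] '' (Set.range g)ᶜ with hC
  have hmemC : ∀ x, x ∉ C → x ∈ Set.range g := by
    intro x hx
    by_contra h
    exact hx (Set.mem_iUnion.mpr ⟨0, by simpa using h⟩)
  have hshift : ∀ x, x ∈ C → g (f x) ∈ C := by
    intro x hx
    obtain ⟨n, y, hy, rfl⟩ : ∃ n y, y ∈ (Set.range g)ᶜ ∧ (g ∘ f)^[n] y = x := by
      obtain ⟨n, hn⟩ := Set.mem_iUnion.mp hx
      obtain ⟨y, hy, hxy⟩ := hn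
      exact ⟨n, y, hy, hxy⟩
    refine Set.mem_iUnion.mpr ⟨n + 1, ⟨y, hy, ?_⟩⟩
    rw [Function.iterate_succ_apply']
    rfl
  have hshift' : ∀ x, g (f x) ∈ C → x ∈ C := by
    intro x hx
    obtain ⟨n, hn⟩ := Set.mem_iUnion.mp hx
    obtain ⟨y, hy, hxy⟩ := hn
    cases n with
    | zero =>
      simp only [Function.iterate_zero, id] at hxy
      exact absurd ⟨f x, hxy.symm⟩ hy
    | succ n =>
      rw [Function.iterate_succ_apply'] at hxy
      have : f ((g ∘ f)^[n] y) = f x := hg hxy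
      have hx' : (g ∘ f)^[n] y = x := hf this
      exact Set.mem_iUnion.mpr ⟨n, ⟨y, hy, hx'⟩⟩
  let h : ℕ → ℕ := fun x => if x ∈ C then f x else Function.invFun g x
  have hin : ∀ x ∈ C, h x = f x := fun x hx => if_pos hx
  have hout : ∀ x, x ∉ C → g (h x) = x := by
    intro x hx
    have : h x = Function.invFun g x := if_neg hx
    rw [this]
    exact Function.invFun_eq (hmemC x hx)
  have hinj : Function.Injective h := by
    intro x y hxy
    by_cases hx : x ∈ C <;> by_cases hy : y ∈ C
    · exact hf (by rwa [hin x hx, hin y hy] at hxy)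
    · exfalso
      have : g (f x) = y := by rw [← hin x hx, hxy, hout y hy]
      exact hy (this ▸ hshift x hx)
    · exfalso
      have : g (f y) = x := by rw [← hin y hy, ← hxy, hout x hx]
      exact hx (this ▸ hshift y hy)
    · rw [← hout x hx, ← hout y hy, hxy]
  have hsurj : Function.Surjective h := by
    intro y
    by_cases hgy : g y ∈ C
    · obtain ⟨n, hn⟩ := Set.mem_iUnion.mp hgy
      obtain ⟨z, hz, hzy⟩ := hn
      cases n with
      | zero =>
        simp only [Function.iterate_zero, id] at hzy
        exact absurd ⟨y, hzy.symm⟩ hz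
      | succ n =>
        rw [Function.iterate_succ_apply'] at hzy
        have hfx : f ((g ∘ f)^[n] z) = y := hg hzy
        have hxC : (g ∘ f)^[n] z ∈ C := Set.mem_iUnion.mpr ⟨n, ⟨z, hz, rfl⟩⟩
        exact ⟨(g ∘ f)^[n] z, by rw [hin _ hxC, hfx]⟩
    · refine ⟨g y, ?_⟩
      have : h (g y) = Function.invFun g (g y) := if_neg hgy
      rw [this, Function.leftInverse_invFun hg]
  refine ⟨Equiv.ofBijective h ⟨hinj, hsurj⟩, fun x => ?_⟩
  by_cases hx : x ∈ C
  · exact Or.inl (hin x hx)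
  · exact Or.inr (hout x hx)

theorem stmt_2 (a : ℕ → ℕ → ℝ) (ha : ∀ m n, 0 ≤ a m n)
    (hrow : ∀ m, ∑' n : ℕ, ENNReal.ofReal (a m n) = 1)
    (hcol : ∀ n, ∑' m : ℕ, ENNReal.ofReal (a m n) = 1) :
    ∃ σ : ℕ ≃ ℕ, ∀ m, 0 < a m (σ m) := by
  have hfin : ∀ (b : ℕ → ℕ → ℝ), (∀ m n, 0 ≤ b m n) →
      (∀ n, ∑' m : ℕ, ENNReal.ofReal (b m n) = 1) →
      ∀ n, ∀ S : Finset ℕ, ∑ m ∈ S, b m n ≤ 1 := by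
    intro b hb hbcol n S
    have h1 : ∑ m ∈ S, ENNReal.ofReal (b m n) ≤ 1 := (hbcol n) ▸ ENNReal.sum_le_tsum S
    rw [← ENNReal.ofReal_sum_of_nonneg (fun m _ => hb m n)] at h1
    exact ENNReal.ofReal_le_one.mp h1
  obtain ⟨f, hfinj, hfpos⟩ :=
    isbell_exists_pos_inj a ha hrow (hfin a ha hcol)
  obtain ⟨g, hginj, hgpos⟩ :=
    isbell_exists_pos_inj (fun n m => a m n) (fun n m => ha m n) hcol
      (hfin (fun n m => a m n) (fun n m => ha m n) hrow)
  obtain ⟨σ, hσ⟩ := isbell_sb hfinj hginj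
  refine ⟨σ, fun m => ?_⟩
  rcases hσ m with h | h
  · rw [h]; exact hfpos m
  · have := hgpos (σ m)
    rwa [h] at this
end

section
/- Let f : ℝ → ℝ be a Lebesgue measurable function with 0 ≤ f(x) ≤ 1 for almost every x, and suppose ∫_ℝ f dm = c₁ and ∫_ℝ f dν = c₂ where 0 ≤ c₁ < ∞ and 0 ≤ c₂ < ∞, m is Lebesgue measure and ν is the measure with density x ↦ 1/(|x|·log 4) with respect to m. Then there exists a Lebesgue measurable set U ⊆ {x ∈ ℝ : f(x) ≠ 0} such that m(U) = c₁ and ν(U) = c₂. -/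
open MeasureTheory Set Filter Topology
open scoped ENNReal NNReal

/-- The measure `ν` on `ℝ` with density `x ↦ 1 / (|x| * log 4)` with respect to
Lebesgue measure. -/
noncomputable def nuMeasure : Measure ℝ :=
  (volume : Measure ℝ).withDensity fun x => ENNReal.ofReal (1 / (|x| * Real.log 4))


namespace Stmt3Aux

noncomputable def w (x : ℝ) : ℝ≥0∞ := ENNReal.ofReal (1 / (|x| * Real.log 4))
noncomputable def W (r : ℝ) : ℝ≥0∞ := ENNReal.ofReal (1 / (r * Real.log 4))

lemma log4_pos : 0 < Real.log 4 := Real.log_pos (by norm_num)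

lemma w_meas : Measurable w := by
  apply Measurable.ennreal_ofReal
  exact measurable_const.div (continuous_abs.measurable.mul measurable_const)

lemma w_le_W {r x : ℝ} (hr : 0 < r) (hx : r ≤ |x|) : w x ≤ W r := by
  apply ENNReal.ofReal_le_ofReal
  apply one_div_le_one_div_of_le (mul_pos hr log4_pos)
  exact mul_le_mul_of_nonneg_right hx log4_pos.le

lemma W_le_w {r x : ℝ} (hx0 : x ≠ 0) (hx : |x| ≤ r) : W r ≤ w x := by
  apply ENNReal.ofReal_le_ofReal
  apply one_div_le_one_div_of_le (mul_pos (abs_pos.mpr hx0) log4_pos)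
  exact mul_le_mul_of_nonneg_right hx log4_pos.le

lemma W_ne_top (r : ℝ) : W r ≠ ∞ := ENNReal.ofReal_ne_top

lemma w_pos {x : ℝ} (hx : x ≠ 0) : 0 < w x := by
  apply ENNReal.ofReal_pos.mpr
  exact div_pos one_pos (mul_pos (abs_pos.mpr hx) log4_pos)

lemma W_antitone {r s : ℝ} (hr : 0 < r) (hrs : r ≤ s) : W s ≤ W r := by
  apply ENNReal.ofReal_le_ofReal
  apply one_div_le_one_div_of_le (mul_pos hr log4_pos)
  exact mul_le_mul_of_nonneg_right hrs log4_pos.le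

lemma nu_eq : nuMeasure = (volume : Measure ℝ).withDensity w := rfl

lemma nu_ac : nuMeasure ≪ (volume : Measure ℝ) :=
  withDensity_absolutelyContinuous _ _

lemma ae_ne_zero : ∀ᵐ x ∂(volume : Measure ℝ), x ≠ (0 : ℝ) := by
  rw [ae_iff]
  have : {a : ℝ | ¬a ≠ 0} = {(0:ℝ)} := by ext x; simp
  rw [this]
  exact Real.volume_singleton

lemma vol_ac : (volume : Measure ℝ) ≪ nuMeasure := by
  refine withDensity_absolutelyContinuous' w_meas.aemeasurable ?_
  filter_upwards [ae_ne_zero] with x hx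
  exact (w_pos hx).ne'

lemma nu_apply {A : Set ℝ} (hA : MeasurableSet A) :
    nuMeasure A = ∫⁻ x in A, w x ∂volume := withDensity_apply _ hA

lemma setLintegral_nu (g : ℝ → ℝ≥0∞) (hg : Measurable g) {A : Set ℝ} (hA : MeasurableSet A) :
    ∫⁻ x in A, g x ∂nuMeasure = ∫⁻ x in A, g x * w x ∂volume := by
  rw [nu_eq, restrict_withDensity hA, lintegral_withDensity_eq_lintegral_mul _ w_meas hg]
  simp only [Pi.mul_apply, mul_comm]

lemma nu_le_W_mul {A : Set ℝ} {r : ℝ} (hA : MeasurableSet A) (hr : 0 < r)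
    (h : ∀ x ∈ A, r ≤ |x|) : nuMeasure A ≤ W r * volume A := by
  rw [nu_apply hA]
  calc ∫⁻ x in A, w x ∂volume ≤ ∫⁻ _ in A, W r ∂volume :=
        setLIntegral_mono measurable_const fun x hx => w_le_W hr (h x hx)
    _ = W r * volume A := setLIntegral_const A (W r)


section Bathtub

variable {f : ℝ → ℝ}

lemma FG_ae (hf : ∀ᵐ x ∂(volume : Measure ℝ), 0 ≤ f x ∧ f x ≤ 1) :
    ∀ᵐ x ∂(volume : Measure ℝ),
      ENNReal.ofReal (f x) + ENNReal.ofReal (1 - f x) = 1 := by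
  filter_upwards [hf] with x hx
  rw [← ENNReal.ofReal_add hx.1 (by linarith [hx.2])]
  norm_num

lemma key2 (μ : Measure ℝ) (hmeas : Measurable f)
    (hFG : ∀ᵐ x ∂μ, ENNReal.ofReal (f x) + ENNReal.ofReal (1 - f x) = 1)
    {V : Set ℝ} (hVm : MeasurableSet V) :
    (∫⁻ x in V, ENNReal.ofReal (f x) ∂μ) + ∫⁻ x in V, ENNReal.ofReal (1 - f x) ∂μ = μ V := by
  rw [← lintegral_add_left hmeas.ennreal_ofReal]
  rw [lintegral_congr_ae (ae_restrict_of_ae hFG)]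
  simp [lintegral_const]

lemma bathtub_hi (hmeas : Measurable f)
    (hf : ∀ᵐ x ∂(volume : Measure ℝ), 0 ≤ f x ∧ f x ≤ 1)
    {V : Set ℝ} (hVm : MeasurableSet V) {b : ℝ} (hb : 0 < b)
    (hVb : ∀ x ∈ V, |x| ≤ b) (hSb : ∀ x, f x ≠ 0 → x ∉ V → b ≤ |x|)
    (hvol : volume V = ∫⁻ x, ENNReal.ofReal (f x) ∂volume) (hfin : volume V ≠ ∞) :
    ∫⁻ x, ENNReal.ofReal (f x) ∂nuMeasure ≤ nuMeasure V := by
  set F := fun x => ENNReal.ofReal (f x) with hFdef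
  set G := fun x => ENNReal.ofReal (1 - f x) with hGdef
  have hFm : Measurable F := hmeas.ennreal_ofReal
  have hGm : Measurable G := (measurable_const.sub hmeas).ennreal_ofReal
  have htot : ∫⁻ x, F x ∂volume ≠ ∞ := by rw [← hvol]; exact hfin
  have hIfin : ∫⁻ x in V, F x ∂volume ≠ ∞ :=
    ne_top_of_le_ne_top htot (lintegral_mono' Measure.restrict_le_self le_rfl)
  have key1 : (∫⁻ x in V, F x ∂volume) + ∫⁻ x in Vᶜ, F x ∂volume = volume V := by
    rw [lintegral_add_compl F hVm, hvol]
  have key2' := key2 volume hmeas (FG_ae hf) hVm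
  have keyEq : ∫⁻ x in Vᶜ, F x ∂volume = ∫⁻ x in V, G x ∂volume :=
    (ENNReal.add_right_inj hIfin).mp (key1.trans key2'.symm)
  have step1 : ∫⁻ x in Vᶜ, F x ∂nuMeasure ≤ W b * ∫⁻ x in Vᶜ, F x ∂volume := by
    rw [setLintegral_nu F hFm hVm.compl, ← lintegral_const_mul _ hFm]
    refine setLIntegral_mono (measurable_const.mul hFm) fun x hx => ?_
    by_cases hfx : f x = 0
    · simp [hFdef, hfx]
    · rw [mul_comm]
      exact mul_le_mul_left (w_le_W hb (hSb x hfx hx)) _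
  have step2 : W b * ∫⁻ x in V, G x ∂volume ≤ ∫⁻ x in V, G x ∂nuMeasure := by
    rw [setLintegral_nu G hGm hVm, ← lintegral_const_mul _ hGm]
    refine setLIntegral_mono_ae (hGm.mul w_meas).aemeasurable ?_
    filter_upwards [ae_ne_zero] with x hx0 hxV
    rw [mul_comm]
    exact mul_le_mul_right (W_le_w hx0 (hVb x hxV)) _
  have key3 : (∫⁻ x in V, F x ∂nuMeasure) + ∫⁻ x in V, G x ∂nuMeasure = nuMeasure V :=
    key2 nuMeasure hmeas ((FG_ae hf).filter_mono nu_ac.ae_le) hVm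
  calc ∫⁻ x, F x ∂nuMeasure
      = (∫⁻ x in V, F x ∂nuMeasure) + ∫⁻ x in Vᶜ, F x ∂nuMeasure :=
        (lintegral_add_compl F hVm).symm
    _ ≤ (∫⁻ x in V, F x ∂nuMeasure) + W b * ∫⁻ x in Vᶜ, F x ∂volume :=
        add_le_add_right step1 _
    _ = (∫⁻ x in V, F x ∂nuMeasure) + W b * ∫⁻ x in V, G x ∂volume := by rw [keyEq]
    _ ≤ (∫⁻ x in V, F x ∂nuMeasure) + ∫⁻ x in V, G x ∂nuMeasure := add_le_add_right step2 _
    _ = nuMeasure V := key3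

lemma bathtub_lo (hmeas : Measurable f)
    (hf : ∀ᵐ x ∂(volume : Measure ℝ), 0 ≤ f x ∧ f x ≤ 1)
    {V : Set ℝ} (hVm : MeasurableSet V) {b : ℝ} (hb : 0 < b)
    (hVb : ∀ x ∈ V, b ≤ |x|) (hSb : ∀ x, f x ≠ 0 → x ∉ V → |x| ≤ b)
    (hvol : volume V ≤ ∫⁻ x, ENNReal.ofReal (f x) ∂volume)
    (hfin : ∫⁻ x, ENNReal.ofReal (f x) ∂volume ≠ ∞) :
    nuMeasure V ≤ ∫⁻ x, ENNReal.ofReal (f x) ∂nuMeasure := by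
  set F := fun x => ENNReal.ofReal (f x) with hFdef
  set G := fun x => ENNReal.ofReal (1 - f x) with hGdef
  have hFm : Measurable F := hmeas.ennreal_ofReal
  have hGm : Measurable G := (measurable_const.sub hmeas).ennreal_ofReal
  have hIfin : ∫⁻ x in V, F x ∂volume ≠ ∞ := by
    refine ne_top_of_le_ne_top hfin ?_
    exact lintegral_mono' Measure.restrict_le_self le_rfl
  have key1 : (∫⁻ x in V, F x ∂volume) + ∫⁻ x in Vᶜ, F x ∂volume
      = ∫⁻ x, F x ∂volume := lintegral_add_compl F hVm
  have key2' := key2 volume hmeas (FG_ae hf) hVm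
  have keyLe : ∫⁻ x in V, G x ∂volume ≤ ∫⁻ x in Vᶜ, F x ∂volume := by
    have : (∫⁻ x in V, F x ∂volume) + ∫⁻ x in V, G x ∂volume
        ≤ (∫⁻ x in V, F x ∂volume) + ∫⁻ x in Vᶜ, F x ∂volume := by
      rw [key1, key2']; exact hvol
    exact (ENNReal.add_le_add_iff_left hIfin).mp this
  have step1 : ∫⁻ x in V, G x ∂nuMeasure ≤ W b * ∫⁻ x in V, G x ∂volume := by
    rw [setLintegral_nu G hGm hVm, ← lintegral_const_mul _ hGm]
    refine setLIntegral_mono (measurable_const.mul hGm) fun x hx => ?_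
    rw [mul_comm]
    exact mul_le_mul_left (w_le_W hb (hVb x hx)) _
  have step2 : W b * ∫⁻ x in Vᶜ, F x ∂volume ≤ ∫⁻ x in Vᶜ, F x ∂nuMeasure := by
    rw [setLintegral_nu F hFm hVm.compl, ← lintegral_const_mul _ hFm]
    refine setLIntegral_mono_ae (hFm.mul w_meas).aemeasurable ?_
    filter_upwards [ae_ne_zero] with x hx0 hxV
    by_cases hfx : f x = 0
    · simp [hFdef, hfx]
    · rw [mul_comm]
      exact mul_le_mul_right (W_le_w hx0 (hSb x hfx hxV)) _
  have key3 : (∫⁻ x in V, F x ∂nuMeasure) + ∫⁻ x in V, G x ∂nuMeasure = nuMeasure V :=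
    key2 nuMeasure hmeas ((FG_ae hf).filter_mono nu_ac.ae_le) hVm
  calc nuMeasure V
      = (∫⁻ x in V, F x ∂nuMeasure) + ∫⁻ x in V, G x ∂nuMeasure := key3.symm
    _ ≤ (∫⁻ x in V, F x ∂nuMeasure) + W b * ∫⁻ x in V, G x ∂volume := add_le_add_right step1 _
    _ ≤ (∫⁻ x in V, F x ∂nuMeasure) + W b * ∫⁻ x in Vᶜ, F x ∂volume := by
        exact add_le_add_right (mul_le_mul_right keyLe _) _
    _ ≤ (∫⁻ x in V, F x ∂nuMeasure) + ∫⁻ x in Vᶜ, F x ∂nuMeasure := add_le_add_right step2 _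
    _ = ∫⁻ x, F x ∂nuMeasure := lintegral_add_compl F hVm

end Bathtub

section Geometry

variable {S : Set ℝ}

/-- cumulative mass of `S` in the closed ball of radius `t`. -/
noncomputable def Phi (S : Set ℝ) (t : ℝ) : ℝ≥0∞ := volume (S ∩ Metric.closedBall 0 t)

noncomputable def Efun (S : Set ℝ) (t : ℝ) : ℝ := (Phi S t).toReal

lemma Phi_fin (t : ℝ) : Phi S t ≠ ∞ :=
  ne_top_of_le_ne_top (measure_closedBall_lt_top (x := (0:ℝ)) (r := t)).ne
    (measure_mono inter_subset_right)

lemma Phi_mono {t t' : ℝ} (h : t ≤ t') : Phi S t ≤ Phi S t' :=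
  measure_mono (inter_subset_inter_right _ (Metric.closedBall_subset_closedBall h))

lemma E_mono {t t' : ℝ} (h : t ≤ t') : Efun S t ≤ Efun S t' :=
  ENNReal.toReal_mono (Phi_fin t') (Phi_mono h)

lemma E_nonneg (t : ℝ) : 0 ≤ Efun S t := ENNReal.toReal_nonneg

lemma E_zero : Efun S 0 = 0 := by
  have hsub : S ∩ Metric.closedBall 0 0 ⊆ ({0} : Set ℝ) := fun x hx => by simpa using hx.2
  have : Phi S 0 = 0 := measure_mono_null hsub Real.volume_singleton
  simp [Efun, this]

lemma vol_pair_zero (a b : ℝ) : volume ({a, b} : Set ℝ) = 0 :=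
  (Set.to_countable _).measure_zero _

lemma sphere_null (t : ℝ) : volume (Metric.sphere (0:ℝ) t) = 0 := by
  refine measure_mono_null (fun x hx => ?_) (vol_pair_zero t (-t))
  have habs : |x| = t := by simpa [Real.norm_eq_abs] using hx
  have ht : 0 ≤ t := habs ▸ abs_nonneg x
  rcases (abs_eq ht).mp habs with h | h
  · exact h ▸ mem_insert _ _
  · exact h ▸ mem_insert_of_mem _ rfl

lemma Phi_le_add {t t' : ℝ} (h : t ≤ t') :
    Phi S t' ≤ Phi S t + ENNReal.ofReal (2 * (t' - t)) := by
  have hsub : S ∩ Metric.closedBall 0 t' ⊆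
      (S ∩ Metric.closedBall 0 t) ∪ (Icc (-t') (-t) ∪ Icc t t') := by
    intro x ⟨hxS, hx⟩
    rw [Metric.mem_closedBall, Real.dist_0_eq_abs] at hx
    by_cases hxt : |x| ≤ t
    · exact Or.inl ⟨hxS, by rwa [Metric.mem_closedBall, Real.dist_0_eq_abs]⟩
    · push_neg at hxt
      rcases le_or_gt 0 x with hx0 | hx0
      · rw [abs_of_nonneg hx0] at hxt hx
        exact Or.inr (Or.inr ⟨hxt.le, hx⟩)
      · rw [abs_of_neg hx0] at hxt hx
        exact Or.inr (Or.inl ⟨by linarith, by linarith⟩)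
  calc Phi S t' ≤ volume ((S ∩ Metric.closedBall 0 t) ∪ (Icc (-t') (-t) ∪ Icc t t')) :=
        measure_mono hsub
    _ ≤ Phi S t + volume (Icc (-t') (-t) ∪ Icc t t') := measure_union_le _ _
    _ ≤ Phi S t + (volume (Icc (-t') (-t)) + volume (Icc t t')) :=
        add_le_add_right (measure_union_le _ _) _
    _ = Phi S t + ENNReal.ofReal (2 * (t' - t)) := by
        rw [Real.volume_Icc, Real.volume_Icc, ← ENNReal.ofReal_add (by linarith) (by linarith)]
        ring_nf

lemma E_le_add {t t' : ℝ} (h : t ≤ t') : Efun S t' ≤ Efun S t + 2 * (t' - t) := by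
  have h2 : (0:ℝ) ≤ 2 * (t' - t) := by linarith
  have := ENNReal.toReal_mono (by simp [Phi_fin t, ENNReal.add_ne_top, ENNReal.mul_eq_top]) (Phi_le_add (S := S) h)
  rwa [ENNReal.toReal_add (Phi_fin t) ENNReal.ofReal_ne_top, ENNReal.toReal_ofReal h2] at this

lemma E_cont : Continuous (Efun S) := by
  refine (LipschitzWith.of_dist_le_mul (K := 2) fun x y => ?_).continuous
  have h2 : ((2 : ℝ≥0) : ℝ) = 2 := by norm_num
  rw [h2]
  rcases le_total x y with h | h
  · rw [Real.dist_eq, Real.dist_eq, abs_sub_comm,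
      abs_of_nonneg (sub_nonneg.mpr (E_mono (S := S) h)), abs_sub_comm x y,
      abs_of_nonneg (sub_nonneg.mpr h)]
    linarith [E_le_add (S := S) h]
  · rw [Real.dist_eq, Real.dist_eq,
      abs_of_nonneg (sub_nonneg.mpr (E_mono (S := S) h)),
      abs_of_nonneg (sub_nonneg.mpr h)]
    linarith [E_le_add (S := S) h]

lemma exists_Phi_gt {r : ℝ≥0∞} (hr : r < volume S) : ∃ n : ℕ, r < Phi S n := by
  have hU : S = ⋃ n : ℕ, S ∩ Metric.closedBall 0 n := by
    ext x
    simp only [mem_iUnion, mem_inter_iff, Metric.mem_closedBall, Real.dist_0_eq_abs]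
    constructor
    · intro hx
      obtain ⟨n, hn⟩ := exists_nat_ge |x|
      exact ⟨n, hx, hn⟩
    · rintro ⟨n, hn, -⟩; exact hn
  have hmono : Monotone fun n : ℕ => S ∩ Metric.closedBall (0:ℝ) n := fun m n hmn =>
    inter_subset_inter_right _ (Metric.closedBall_subset_closedBall (by exact_mod_cast hmn))
  rw [hU, hmono.directed_le.measure_iUnion] at hr
  exact lt_iSup_iff.mp hr

lemma vol_ball_eq (t : ℝ) : volume (S ∩ Metric.ball 0 t) = Phi S t := by
  refine le_antisymm (measure_mono (inter_subset_inter_right _ Metric.ball_subset_closedBall)) ?_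
  have : S ∩ Metric.closedBall 0 t ⊆ (S ∩ Metric.ball 0 t) ∪ Metric.sphere 0 t := by
    rw [← Metric.ball_union_sphere]
    intro x hx
    rcases hx.2 with h | h
    · exact Or.inl ⟨hx.1, h⟩
    · exact Or.inr h
  calc Phi S t ≤ volume (S ∩ Metric.ball 0 t) + volume (Metric.sphere (0:ℝ) t) :=
        le_trans (measure_mono this) (measure_union_le _ _)
    _ = volume (S ∩ Metric.ball 0 t) := by rw [sphere_null, add_zero]

/-- the part of `S` in the annulus `u ≤ |x| ≤ v`. -/
def An (S : Set ℝ) (u v : ℝ) : Set ℝ := (S \ Metric.ball 0 u) ∩ Metric.closedBall 0 v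

lemma An_meas (hS : MeasurableSet S) (u v : ℝ) : MeasurableSet (An S u v) :=
  (hS.diff measurableSet_ball).inter measurableSet_closedBall

lemma An_subset (u v : ℝ) : An S u v ⊆ S := fun _ hx => hx.1.1

lemma mem_An {u v x : ℝ} : x ∈ An S u v ↔ x ∈ S ∧ u ≤ |x| ∧ |x| ≤ v := by
  simp only [An, mem_inter_iff, mem_diff, Metric.mem_ball, Metric.mem_closedBall,
    Real.dist_0_eq_abs, not_lt]
  tauto

lemma vol_An_add {u v : ℝ} (huv : u ≤ v) :
    Phi S u + volume (An S u v) = Phi S v := by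
  have hball : Metric.ball (0:ℝ) u ⊆ Metric.closedBall 0 v :=
    Metric.ball_subset_closedBall.trans (Metric.closedBall_subset_closedBall huv)
  have h1 : (S ∩ Metric.closedBall 0 v) ∩ Metric.ball 0 u = S ∩ Metric.ball 0 u := by
    rw [inter_assoc, inter_eq_self_of_subset_right hball]
  have h2 : (S ∩ Metric.closedBall 0 v) \ Metric.ball 0 u = An S u v := by
    rw [An]; ext x; simp only [mem_inter_iff, mem_diff]; tauto
  have h := measure_inter_add_diff (μ := (volume : Measure ℝ))
    (S ∩ Metric.closedBall 0 v) (measurableSet_ball (x := (0:ℝ)) (ε := u))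
  rw [h1, h2, vol_ball_eq] at h
  exact h

lemma vol_An_fin (u v : ℝ) : volume (An S u v) ≠ ∞ :=
  ne_top_of_le_ne_top (Phi_fin (S := S) v)
    (measure_mono (fun x hx => ⟨hx.1.1, hx.2⟩))

lemma vol_An {u v : ℝ} (huv : u ≤ v) :
    volume (An S u v) = ENNReal.ofReal (Efun S v - Efun S u) := by
  have hfin : volume (An S u v) ≠ ∞ := by
    refine ne_top_of_le_ne_top (Phi_fin (S := S) v) ?_
    rw [← vol_An_add huv]; exact le_add_self
  have h := congrArg ENNReal.toReal (vol_An_add (S := S) huv)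
  rw [ENNReal.toReal_add (Phi_fin u) hfin] at h
  have h2 : (volume (An S u v)).toReal = Efun S v - Efun S u := by
    rw [Efun, Efun]; linarith
  rw [← h2, ENNReal.ofReal_toReal hfin]

/-- the tail mass. -/
noncomputable def Tl (S : Set ℝ) (a : ℝ) : ℝ≥0∞ := volume (S \ Metric.ball 0 a)

lemma Tl_add (a : ℝ) : Phi S a + Tl S a = volume S := by
  have h := measure_inter_add_diff (μ := (volume : Measure ℝ)) S
    (measurableSet_ball (x := (0:ℝ)) (ε := a))
  rw [vol_ball_eq] at h
  exact h

lemma Tl_antitone {a a' : ℝ} (h : a ≤ a') : Tl S a' ≤ Tl S a :=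
  measure_mono (diff_subset_diff_right (Metric.ball_subset_ball h))

end Geometry

section BFun

variable {S : Set ℝ} {c₁ : ℝ}

lemma pos_of_E_pos {b : ℝ} (h : 0 < Efun S b) : 0 < b := by
  by_contra hb
  push_neg at hb
  have := E_mono (S := S) hb
  rw [E_zero] at this
  linarith

lemma exists_E_eq {a : ℝ} (hc : 0 < c₁) (hgood : ENNReal.ofReal c₁ < Tl S a) :
    ∃ b, Efun S b = Efun S a + c₁ := by
  have h1 : Phi S a + ENNReal.ofReal c₁ < volume S := by
    rw [← Tl_add (S := S) a]
    exact ENNReal.add_lt_add_left (Phi_fin a) hgood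
  obtain ⟨n, hn⟩ := exists_Phi_gt h1
  have hfin : Phi S a + ENNReal.ofReal c₁ ≠ ∞ :=
    ENNReal.add_ne_top.mpr ⟨Phi_fin a, ENNReal.ofReal_ne_top⟩
  have hlt : Efun S a + c₁ < Efun S n := by
    have := (ENNReal.toReal_lt_toReal hfin (Phi_fin (S := S) n)).mpr hn
    rwa [ENNReal.toReal_add (Phi_fin a) ENNReal.ofReal_ne_top,
      ENNReal.toReal_ofReal hc.le] at this
  have han : a ≤ (n : ℝ) := by
    by_contra hna
    push_neg at hna
    have := E_mono (S := S) hna.le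
    linarith [E_nonneg (S := S) a]
  have hmem : Efun S a + c₁ ∈ Icc (Efun S a) (Efun S n) := ⟨by linarith, hlt.le⟩
  obtain ⟨b, -, hb⟩ := intermediate_value_Icc han (E_cont (S := S)).continuousOn hmem
  exact ⟨b, hb⟩

/-- the right endpoint function. -/
noncomputable def bfun (S : Set ℝ) (c₁ : ℝ) (a : ℝ) : ℝ :=
  sInf {b | Efun S b = Efun S a + c₁}

lemma bfun_bddBelow (hc : 0 < c₁) (a : ℝ) :
    BddBelow {b | Efun S b = Efun S a + c₁} := by
  refine ⟨0, fun b hb => ?_⟩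
  have : 0 < Efun S b := by
    rw [hb]; have := E_nonneg (S := S) a; linarith
  exact (pos_of_E_pos this).le

lemma bfun_spec {a : ℝ} (hc : 0 < c₁) (hgood : ENNReal.ofReal c₁ < Tl S a) :
    0 < bfun S c₁ a ∧ Efun S (bfun S c₁ a) = Efun S a + c₁ := by
  have hne : {b | Efun S b = Efun S a + c₁}.Nonempty := exists_E_eq hc hgood
  have hcl : IsClosed {b | Efun S b = Efun S a + c₁} :=
    isClosed_eq (E_cont (S := S)) continuous_const
  have hmem := hcl.csInf_mem hne (bfun_bddBelow hc a)
  have hval : Efun S (bfun S c₁ a) = Efun S a + c₁ := hmem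
  have hpos : 0 < Efun S (bfun S c₁ a) := by
    rw [hval]; have := E_nonneg (S := S) a; linarith
  exact ⟨pos_of_E_pos hpos, hval⟩

lemma lt_bfun {a : ℝ} (hc : 0 < c₁) (hgood : ENNReal.ofReal c₁ < Tl S a) :
    a < bfun S c₁ a := by
  have h := (bfun_spec hc hgood).2
  by_contra hab
  push_neg at hab
  have := E_mono (S := S) hab
  rw [h] at this
  linarith

lemma good_mono {a a' : ℝ} (h : a ≤ a') (hgood' : ENNReal.ofReal c₁ < Tl S a') :
    ENNReal.ofReal c₁ < Tl S a := lt_of_lt_of_le hgood' (Tl_antitone h)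

lemma bfun_mono {a a' : ℝ} (hc : 0 < c₁) (h : a ≤ a')
    (hgood' : ENNReal.ofReal c₁ < Tl S a') : bfun S c₁ a ≤ bfun S c₁ a' := by
  have hgood := good_mono h hgood'
  refine le_csInf (exists_E_eq hc hgood') fun b' hb' => ?_
  have hb'pos : 0 < b' := by
    refine pos_of_E_pos (S := S) ?_
    rw [hb']; have := E_nonneg (S := S) a'; linarith
  have hmem : Efun S a + c₁ ∈ Icc (Efun S 0) (Efun S b') := by
    rw [E_zero, hb']
    exact ⟨by have := E_nonneg (S := S) a; linarith, by have := E_mono (S := S) h; linarith⟩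
  obtain ⟨b, hbmem, hb⟩ := intermediate_value_Icc hb'pos.le (E_cont (S := S)).continuousOn hmem
  exact le_trans (csInf_le (bfun_bddBelow hc a) hb) hbmem.2

noncomputable def psi (S : Set ℝ) (c₁ a : ℝ) : ℝ≥0∞ := nuMeasure (An S a (bfun S c₁ a))

noncomputable def phi (S : Set ℝ) (c₁ a : ℝ) : ℝ := (psi S c₁ a).toReal

lemma vol_psi_set {a : ℝ} (hc : 0 < c₁) (hgood : ENNReal.ofReal c₁ < Tl S a) :
    volume (An S a (bfun S c₁ a)) = ENNReal.ofReal c₁ := by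
  rw [vol_An (lt_bfun hc hgood).le, (bfun_spec hc hgood).2]
  ring_nf

lemma psi_le {a : ℝ} (hS : MeasurableSet S) (hc : 0 < c₁) (ha : 0 < a)
    (hgood : ENNReal.ofReal c₁ < Tl S a) :
    psi S c₁ a ≤ W a * ENNReal.ofReal c₁ := by
  rw [psi, ← vol_psi_set hc hgood]
  exact nu_le_W_mul (An_meas hS _ _) ha fun x hx => (mem_An.mp hx).2.1

lemma psi_fin {a : ℝ} (hS : MeasurableSet S) (hc : 0 < c₁) (ha : 0 < a)
    (hgood : ENNReal.ofReal c₁ < Tl S a) : psi S c₁ a ≠ ∞ :=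
  ne_top_of_le_ne_top (ENNReal.mul_ne_top (W_ne_top a) ENNReal.ofReal_ne_top)
    (psi_le hS hc ha hgood)

lemma phi_diff_le (hS : MeasurableSet S) (hc : 0 < c₁) {a₀ a a' : ℝ}
    (h0 : 0 < a₀) (h1 : a₀ ≤ a) (h2 : a ≤ a')
    (hgood' : ENNReal.ofReal c₁ < Tl S a') :
    |phi S c₁ a' - phi S c₁ a| ≤
      ((W a₀).toReal + (W (bfun S c₁ a₀)).toReal) * (Efun S a' - Efun S a) := by
  have hgood : ENNReal.ofReal c₁ < Tl S a := good_mono h2 hgood'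
  have hgood0 : ENNReal.ofReal c₁ < Tl S a₀ := good_mono (h1.trans h2) hgood'
  set b₀ := bfun S c₁ a₀ with hb₀
  set b := bfun S c₁ a with hb
  set b' := bfun S c₁ a' with hb'
  have hb₀pos : 0 < b₀ := (bfun_spec hc hgood0).1
  have hbpos : 0 < b := (bfun_spec hc hgood).1
  have hbb : b₀ ≤ b := bfun_mono hc h1 hgood
  have hbb' : b ≤ b' := bfun_mono hc h2 hgood'
  have hEb : Efun S b = Efun S a + c₁ := (bfun_spec hc hgood).2
  have hEb' : Efun S b' = Efun S a' + c₁ := (bfun_spec hc hgood').2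
  have ha : 0 < a := lt_of_lt_of_le h0 h1
  have ha' : 0 < a' := lt_of_lt_of_le ha h2
  set d := Efun S a' - Efun S a with hd
  have hd0 : 0 ≤ d := by have := E_mono (S := S) h2; simp [hd]; linarith
  have ineq1 : psi S c₁ a ≤ psi S c₁ a' + nuMeasure (An S a a') := by
    rw [psi, psi]
    refine le_trans (measure_mono (fun x hx => ?_)) (measure_union_le _ _)
    rw [mem_An] at hx
    rcases le_or_gt a' |x| with hax | hax
    · exact Or.inl (mem_An.mpr ⟨hx.1, hax, hx.2.2.trans hbb'⟩)
    · exact Or.inr (mem_An.mpr ⟨hx.1, hx.2.1, hax.le⟩)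
  have ineq2 : psi S c₁ a' ≤ psi S c₁ a + nuMeasure (An S b b') := by
    rw [psi, psi]
    refine le_trans (measure_mono (fun x hx => ?_)) (measure_union_le _ _)
    rw [mem_An] at hx
    rcases le_or_gt |x| b with hax | hax
    · exact Or.inl (mem_An.mpr ⟨hx.1, (h2.trans hx.2.1 : a ≤ |x|), hax⟩)
    · exact Or.inr (mem_An.mpr ⟨hx.1, hax.le, hx.2.2⟩)
  have bound1 : nuMeasure (An S a a') ≤ W a₀ * ENNReal.ofReal d := by
    calc nuMeasure (An S a a') ≤ W a * volume (An S a a') :=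
          nu_le_W_mul (An_meas hS _ _) ha fun x hx => (mem_An.mp hx).2.1
      _ = W a * ENNReal.ofReal d := by rw [vol_An h2]
      _ ≤ W a₀ * ENNReal.ofReal d := mul_le_mul_left (W_antitone h0 h1) _
  have bound2 : nuMeasure (An S b b') ≤ W b₀ * ENNReal.ofReal d := by
    have hEdiff : Efun S b' - Efun S b = d := by rw [hEb, hEb', hd]; ring
    calc nuMeasure (An S b b') ≤ W b * volume (An S b b') :=
          nu_le_W_mul (An_meas hS _ _) hbpos fun x hx => (mem_An.mp hx).2.1
      _ = W b * ENNReal.ofReal d := by rw [vol_An hbb', hEdiff]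
      _ ≤ W b₀ * ENNReal.ofReal d := mul_le_mul_left (W_antitone hb₀pos hbb) _
  have hfin : psi S c₁ a ≠ ∞ := psi_fin hS hc ha hgood
  have hfin' : psi S c₁ a' ≠ ∞ := psi_fin hS hc ha' hgood'
  have hWfin : ∀ r : ℝ, W r * ENNReal.ofReal d ≠ ∞ :=
    fun r => ENNReal.mul_ne_top (W_ne_top r) ENNReal.ofReal_ne_top
  have real1 : phi S c₁ a ≤ phi S c₁ a' + (W a₀).toReal * d := by
    have := ENNReal.toReal_mono
      (ENNReal.add_ne_top.mpr ⟨hfin', hWfin a₀⟩)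
      (le_trans ineq1 (add_le_add_right bound1 _))
    rwa [ENNReal.toReal_add hfin' (hWfin a₀), ENNReal.toReal_mul,
      ENNReal.toReal_ofReal hd0] at this
  have real2 : phi S c₁ a' ≤ phi S c₁ a + (W b₀).toReal * d := by
    have := ENNReal.toReal_mono
      (ENNReal.add_ne_top.mpr ⟨hfin, hWfin b₀⟩)
      (le_trans ineq2 (add_le_add_right bound2 _))
    rwa [ENNReal.toReal_add hfin (hWfin b₀), ENNReal.toReal_mul,
      ENNReal.toReal_ofReal hd0] at this
  have hK1 : 0 ≤ (W a₀).toReal := ENNReal.toReal_nonneg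
  have hK2 : 0 ≤ (W b₀).toReal := ENNReal.toReal_nonneg
  rw [abs_sub_le_iff]
  constructor
  · nlinarith
  · nlinarith

lemma phi_contOn (hS : MeasurableSet S) (hc : 0 < c₁) {a₀ a₁ : ℝ}
    (h0 : 0 < a₀) (h01 : a₀ ≤ a₁) (hgood₁ : ENNReal.ofReal c₁ < Tl S a₁) :
    ContinuousOn (phi S c₁) (Icc a₀ a₁) := by
  set K : ℝ := ((W a₀).toReal + (W (bfun S c₁ a₀)).toReal) * 2 with hK
  have hK0 : 0 ≤ K := by positivity
  refine (LipschitzOnWith.of_dist_le_mul (K := K.toNNReal) fun x hx y hy => ?_).continuousOn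
  rw [Real.coe_toNNReal _ hK0]
  have key : ∀ u v : ℝ, u ∈ Icc a₀ a₁ → v ∈ Icc a₀ a₁ → u ≤ v →
      dist (phi S c₁ v) (phi S c₁ u) ≤ K * dist v u := by
    intro u v hu hv huv
    have hgood' : ENNReal.ofReal c₁ < Tl S v := good_mono hv.2 hgood₁
    have h := phi_diff_le hS hc h0 hu.1 huv hgood'
    rw [Real.dist_eq, Real.dist_eq]
    have hE : Efun S v - Efun S u ≤ 2 * (v - u) := by
      have := E_le_add (S := S) huv; linarith
    have habs : |v - u| = v - u := abs_of_nonneg (by linarith)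
    rw [habs, hK]
    have hKK : 0 ≤ (W a₀).toReal + (W (bfun S c₁ a₀)).toReal := by positivity
    nlinarith [abs_nonneg (phi S c₁ v - phi S c₁ u)]
  rcases le_total x y with h | h
  · rw [dist_comm (phi S c₁ x), dist_comm x]
    exact key x y hx hy h
  · exact key y x hy hx h

end BFun

section Endgame

variable {S : Set ℝ} {c₁ c₂ : ℝ}

lemma nu_U0_iSup (hS : MeasurableSet S) {b₀ : ℝ} :
    nuMeasure (S ∩ Metric.closedBall 0 b₀) =
      ⨆ n : ℕ, nuMeasure (An S (1 / (n + 1)) b₀) := by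
  have hmono : Monotone fun n : ℕ => An S (1 / (n + 1)) b₀ := by
    intro m n hmn x hx
    rw [mem_An] at hx ⊢
    refine ⟨hx.1, le_trans ?_ hx.2.1, hx.2.2⟩
    have h1 : (0:ℝ) < m + 1 := by positivity
    have h2 : (m : ℝ) + 1 ≤ n + 1 := by exact_mod_cast Nat.succ_le_succ hmn
    exact one_div_le_one_div_of_le h1 h2
  have hUnion : (⋃ n : ℕ, An S (1 / (n + 1)) b₀) = (S ∩ Metric.closedBall 0 b₀) \ {0} := by
    ext x
    simp only [mem_iUnion, mem_An, mem_diff, mem_inter_iff, Metric.mem_closedBall,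
      Real.dist_0_eq_abs, mem_singleton_iff]
    constructor
    · rintro ⟨n, hxS, hn, hb⟩
      have h1 : (0:ℝ) < 1 / (n + 1) := by positivity
      exact ⟨⟨hxS, hb⟩, fun h => by rw [h, abs_zero] at hn; linarith⟩
    · rintro ⟨⟨hxS, hb⟩, hx0⟩
      obtain ⟨n, hn⟩ := exists_nat_one_div_lt (abs_pos.mpr hx0)
      exact ⟨n, hxS, hn.le, hb⟩
  rw [← hmono.directed_le.measure_iUnion, hUnion,
    measure_diff_null (nu_ac Real.volume_singleton)]

lemma final_ivt (hS : MeasurableSet S) (hc : 0 < c₁) (hc2 : 0 ≤ c₂) {a₀ a₁ : ℝ}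
    (h0 : 0 < a₀) (h01 : a₀ ≤ a₁) (hgood₁ : ENNReal.ofReal c₁ < Tl S a₁)
    (hhi : c₂ ≤ phi S c₁ a₀) (hlo : phi S c₁ a₁ ≤ c₂) :
    ∃ U : Set ℝ, MeasurableSet U ∧ U ⊆ S ∧
      volume U = ENNReal.ofReal c₁ ∧ nuMeasure U = ENNReal.ofReal c₂ := by
  obtain ⟨a, hamem, ha⟩ := intermediate_value_Icc' h01
    (phi_contOn hS hc h0 h01 hgood₁) ⟨hlo, hhi⟩
  have hgood : ENNReal.ofReal c₁ < Tl S a := good_mono hamem.2 hgood₁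
  have hapos : 0 < a := lt_of_lt_of_le h0 hamem.1
  refine ⟨An S a (bfun S c₁ a), An_meas hS _ _, An_subset _ _, vol_psi_set hc hgood, ?_⟩
  have hfin : psi S c₁ a ≠ ∞ := psi_fin hS hc hapos hgood
  rw [show nuMeasure (An S a (bfun S c₁ a)) = psi S c₁ a from rfl,
    ← ENNReal.ofReal_toReal hfin]
  exact congrArg ENNReal.ofReal ha


lemma anti_tail (S : Set ℝ) (t : ℝ) :
    Antitone fun n : ℕ => S \ Metric.ball 0 (t - 1 / (n + 1)) := by
  intro n m hnm
  refine diff_subset_diff_right (Metric.ball_subset_ball ?_)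
  have h2 : 1 / ((m:ℝ) + 1) ≤ 1 / ((n:ℝ) + 1) :=
    one_div_le_one_div_of_le (by positivity) (by exact_mod_cast Nat.succ_le_succ hnm)
  linarith

lemma iInter_tail (S : Set ℝ) (t : ℝ) :
    (⋂ n : ℕ, S \ Metric.ball 0 (t - 1 / (n + 1))) = S \ Metric.ball 0 t := by
  ext x
  simp only [mem_iInter, mem_diff, Metric.mem_ball, Real.dist_0_eq_abs, not_lt]
  constructor
  · intro h
    refine ⟨(h 0).1, ?_⟩
    by_contra hlt
    push_neg at hlt
    obtain ⟨n, hn⟩ := exists_nat_one_div_lt (sub_pos.mpr hlt)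
    have := (h n).2
    linarith
  · intro h n
    have h1 : (0:ℝ) < 1 / (n + 1) := by positivity
    exact ⟨h.1, by linarith [h.2]⟩

lemma mono_tail_up (S : Set ℝ) (t : ℝ) :
    Monotone fun n : ℕ => S \ Metric.ball 0 (t + 1 / (n + 1)) := by
  intro n m hnm
  refine diff_subset_diff_right (Metric.ball_subset_ball ?_)
  have h2 : 1 / ((m:ℝ) + 1) ≤ 1 / ((n:ℝ) + 1) :=
    one_div_le_one_div_of_le (by positivity) (by exact_mod_cast Nat.succ_le_succ hnm)
  linarith

lemma iUnion_tail (S : Set ℝ) (t : ℝ) :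
    (⋃ n : ℕ, S \ Metric.ball 0 (t + 1 / (n + 1))) = S \ Metric.closedBall 0 t := by
  ext x
  simp only [mem_iUnion, mem_diff, Metric.mem_ball, Metric.mem_closedBall,
    Real.dist_0_eq_abs, not_lt, not_le]
  constructor
  · rintro ⟨n, hxS, hn⟩
    have h1 : (0:ℝ) < 1 / (n + 1) := by positivity
    exact ⟨hxS, by linarith⟩
  · rintro ⟨hxS, hlt⟩
    obtain ⟨n, hn⟩ := exists_nat_one_div_lt (sub_pos.mpr hlt)
    exact ⟨n, hxS, by linarith⟩

end Endgame

end Stmt3Aux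

open Stmt3Aux in
theorem stmt_3 (f : ℝ → ℝ) (hmeas : Measurable f)
    (hf : ∀ᵐ x ∂(volume : Measure ℝ), 0 ≤ f x ∧ f x ≤ 1)
    (c₁ c₂ : ℝ) (hc₁ : 0 ≤ c₁) (hc₂ : 0 ≤ c₂)
    (h₁ : ∫⁻ x, ENNReal.ofReal (f x) ∂(volume : Measure ℝ) = ENNReal.ofReal c₁)
    (h₂ : ∫⁻ x, ENNReal.ofReal (f x) ∂nuMeasure = ENNReal.ofReal c₂) :
    ∃ U : Set ℝ, MeasurableSet U ∧ U ⊆ {x : ℝ | f x ≠ 0} ∧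
      volume U = ENNReal.ofReal c₁ ∧ nuMeasure U = ENNReal.ofReal c₂ := by
  classical
  set S := {x : ℝ | f x ≠ 0} with hSdef
  have hS : MeasurableSet S := by
    have h : S = (f ⁻¹' {0})ᶜ := by ext x; simp [hSdef]
    rw [h]; exact (hmeas (measurableSet_singleton 0)).compl
  have hFm : Measurable fun x => ENNReal.ofReal (f x) := hmeas.ennreal_ofReal
  have htotFin : ∫⁻ x, ENNReal.ofReal (f x) ∂(volume : Measure ℝ) ≠ ∞ := by
    rw [h₁]; exact ENNReal.ofReal_ne_top
  rcases eq_or_lt_of_le hc₁ with hc10 | hc1pos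
  · -- c₁ = 0
    have hF0 : (fun x => ENNReal.ofReal (f x)) =ᵐ[(volume : Measure ℝ)] 0 := by
      rw [← lintegral_eq_zero_iff hFm, h₁, ← hc10, ENNReal.ofReal_zero]
    have h2z : ENNReal.ofReal c₂ = 0 := by
      rw [← h₂, lintegral_congr_ae (hF0.filter_mono nu_ac.ae_le)]; simp
    exact ⟨∅, MeasurableSet.empty, empty_subset _, by simp [← hc10], by simp [h2z]⟩
  rcases eq_or_lt_of_le hc₂ with hc20 | hc2pos
  · -- c₂ = 0 : impossible since c₁ > 0
    exfalso
    have hF0 : (fun x => ENNReal.ofReal (f x)) =ᵐ[nuMeasure] 0 := by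
      rw [← lintegral_eq_zero_iff hFm, h₂, ← hc20, ENNReal.ofReal_zero]
    have hF0v : (fun x => ENNReal.ofReal (f x)) =ᵐ[(volume : Measure ℝ)] 0 :=
      hF0.filter_mono vol_ac.ae_le
    have hz : ENNReal.ofReal c₁ = 0 := by
      rw [← h₁, lintegral_congr_ae hF0v]; simp
    rw [ENNReal.ofReal_eq_zero] at hz
    linarith
  -- now 0 < c₁ and 0 < c₂
  have hindle : ∀ᵐ x ∂(volume : Measure ℝ),
      ENNReal.ofReal (f x) ≤ S.indicator (fun _ => (1 : ℝ≥0∞)) x := by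
    filter_upwards [hf] with x hx
    by_cases hx0 : f x = 0
    · simp [hx0]
    · rw [Set.indicator_of_mem (show x ∈ S from hx0)]
      exact ENNReal.ofReal_le_one.mpr hx.2
  have hInd : ∫⁻ x, S.indicator (fun _ => (1 : ℝ≥0∞)) x ∂(volume : Measure ℝ) = volume S := by
    rw [lintegral_indicator hS]; simp
  have hc1le : ENNReal.ofReal c₁ ≤ volume S := by
    rw [← h₁, ← hInd]
    exact lintegral_mono_ae hindle
  rcases lt_or_ge (ENNReal.ofReal c₁) (volume S) with hSbig | hSle
  swap
  · -- volume S = ofReal c₁ : take U = S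
    have heq : volume S = ENNReal.ofReal c₁ := le_antisymm hSle hc1le
    have hIm : Measurable (S.indicator fun _ : ℝ => (1 : ℝ≥0∞)) :=
      measurable_const.indicator hS
    have hsub0 : ∫⁻ x, (S.indicator (fun _ => (1 : ℝ≥0∞)) x - ENNReal.ofReal (f x))
        ∂(volume : Measure ℝ) = 0 := by
      rw [lintegral_sub hFm htotFin hindle, h₁, hInd, heq, tsub_self]
    have haeeq : (fun x => S.indicator (fun _ => (1 : ℝ≥0∞)) x)
        =ᵐ[(volume : Measure ℝ)] fun x => ENNReal.ofReal (f x) := by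
      have h0 := (lintegral_eq_zero_iff (hIm.sub hFm)).mp hsub0
      filter_upwards [h0, hindle] with x hx1 hx2
      exact le_antisymm (tsub_eq_zero_iff_le.mp hx1) hx2
    have hnuS : nuMeasure S = ENNReal.ofReal c₂ := by
      have hae' := haeeq.filter_mono nu_ac.ae_le
      rw [← h₂, ← lintegral_congr_ae hae', lintegral_indicator hS]
      simp
    exact ⟨S, hS, subset_rfl, heq, hnuS⟩
  -- main case
  have hgood0 : ENNReal.ofReal c₁ < Tl S 0 := by
    have h : Tl S 0 = volume S := by
      rw [Tl, Metric.ball_zero, diff_empty]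
    rw [h]; exact hSbig
  set b₀ := bfun S c₁ 0 with hb₀def
  have hspec₀ := bfun_spec (S := S) hc1pos hgood0
  have hEb₀ : Efun S b₀ = c₁ := by rw [hspec₀.2, E_zero, zero_add]
  have hvolU₀ : volume (S ∩ Metric.closedBall 0 b₀) = ENNReal.ofReal c₁ := by
    have h : volume (S ∩ Metric.closedBall 0 b₀) = Phi S b₀ := rfl
    rw [h, ← ENNReal.ofReal_toReal (Phi_fin (S := S) b₀)]
    exact congrArg ENNReal.ofReal hEb₀
  have hbathhi : ENNReal.ofReal c₂ ≤ nuMeasure (S ∩ Metric.closedBall 0 b₀) := by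
    rw [← h₂]
    refine bathtub_hi hmeas hf (hS.inter measurableSet_closedBall) hspec₀.1
      (fun x hx => by simpa [Real.dist_0_eq_abs] using hx.2) (fun x hfx hxV => ?_) ?_ ?_
    · have hxS : x ∈ S := hfx
      have h : x ∉ Metric.closedBall (0:ℝ) b₀ := fun h => hxV ⟨hxS, h⟩
      rw [Metric.mem_closedBall, Real.dist_0_eq_abs, not_le] at h
      exact h.le
    · rw [hvolU₀, h₁]
    · rw [hvolU₀]; exact ENNReal.ofReal_ne_top
  by_cases hU₀eq : nuMeasure (S ∩ Metric.closedBall 0 b₀) = ENNReal.ofReal c₂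
  · exact ⟨S ∩ Metric.closedBall 0 b₀, hS.inter measurableSet_closedBall,
      inter_subset_left, hvolU₀, hU₀eq⟩
  have hU₀lt : ENNReal.ofReal c₂ < nuMeasure (S ∩ Metric.closedBall 0 b₀) :=
    lt_of_le_of_ne hbathhi (Ne.symm hU₀eq)
  rw [nu_U0_iSup hS, lt_iSup_iff] at hU₀lt
  obtain ⟨n₀, hn₀⟩ := hU₀lt
  set a₀ : ℝ := 1 / (n₀ + 1) with ha₀def
  have ha₀pos : 0 < a₀ := by positivity
  have hgooda₀ : ENNReal.ofReal c₁ < Tl S a₀ := by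
    by_contra hbad
    push_neg at hbad
    have hDle : nuMeasure (S \ Metric.ball 0 a₀) ≤ ENNReal.ofReal c₂ := by
      rw [← h₂]
      refine bathtub_lo hmeas hf (hS.diff measurableSet_ball) ha₀pos
        (fun x hx => ?_) (fun x hfx hxV => ?_) ?_ htotFin
      · have := hx.2
        rwa [Metric.mem_ball, Real.dist_0_eq_abs, not_lt] at this
      · have hxS : x ∈ S := hfx
        have h : x ∈ Metric.ball (0:ℝ) a₀ := by
          by_contra h
          exact hxV ⟨hxS, h⟩
        rw [Metric.mem_ball, Real.dist_0_eq_abs] at h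
        exact h.le
      · rw [h₁]; exact hbad
    have hsub : An S a₀ b₀ ⊆ S \ Metric.ball 0 a₀ := by
      intro x hx
      rw [mem_An] at hx
      exact ⟨hx.1, by rw [Metric.mem_ball, Real.dist_0_eq_abs, not_lt]; exact hx.2.1⟩
    exact absurd (le_trans (measure_mono hsub) hDle) (not_le.mpr hn₀)
  have hpsia₀ : ENNReal.ofReal c₂ < psi S c₁ a₀ := by
    refine lt_of_lt_of_le hn₀ (measure_mono fun x hx => ?_)
    rw [mem_An] at hx ⊢
    exact ⟨hx.1, hx.2.1, hx.2.2.trans (bfun_mono hc1pos ha₀pos.le hgooda₀)⟩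
  have hphia₀ : c₂ < phi S c₁ a₀ := by
    have h := (ENNReal.toReal_lt_toReal ENNReal.ofReal_ne_top
      (psi_fin hS hc1pos ha₀pos hgooda₀)).mpr hpsia₀
    rwa [ENNReal.toReal_ofReal hc₂] at h
  by_cases hB : ∀ a : ℝ, ENNReal.ofReal c₁ < Tl S a
  · -- B1 : all tails big
    set a₁ : ℝ := max a₀ (c₁ / (c₂ * Real.log 4) + 1) with ha₁def
    have ha₁pos : 0 < a₁ := lt_of_lt_of_le ha₀pos (le_max_left _ _)
    have ha01 : a₀ ≤ a₁ := le_max_left _ _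
    have hphia₁ : phi S c₁ a₁ < c₂ := by
      have hLpos : 0 < Real.log 4 := log4_pos
      have hkey : 1 / (a₁ * Real.log 4) * c₁ < c₂ := by
        have ha₁gt : c₁ / (c₂ * Real.log 4) < a₁ :=
          lt_of_lt_of_le (lt_add_one _) (le_max_right _ _)
        have h := (div_lt_iff₀ (mul_pos hc2pos hLpos)).mp ha₁gt
        rw [div_mul_eq_mul_div, one_mul, div_lt_iff₀ (by positivity)]
        nlinarith
      have hle1 : psi S c₁ a₁ ≤ ENNReal.ofReal (1 / (a₁ * Real.log 4) * c₁) := by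
        have h := psi_le hS hc1pos ha₁pos (hB a₁)
        rwa [W, ← ENNReal.ofReal_mul (by positivity)] at h
      calc phi S c₁ a₁ ≤ (ENNReal.ofReal (1 / (a₁ * Real.log 4) * c₁)).toReal :=
            ENNReal.toReal_mono ENNReal.ofReal_ne_top hle1
        _ = 1 / (a₁ * Real.log 4) * c₁ := ENNReal.toReal_ofReal (by positivity)
        _ < c₂ := hkey
    exact final_ivt hS hc1pos hc₂ ha₀pos ha01 (hB a₁) hphia₀.le hphia₁.le
  · -- B2 : some tail small
    push_neg at hB
    obtain ⟨ahat, hahat⟩ := hB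
    have hvolSfin : volume S ≠ ∞ := by
      rw [← Tl_add (S := S) ahat]
      exact ENNReal.add_ne_top.mpr ⟨Phi_fin ahat,
        ne_top_of_le_ne_top ENNReal.ofReal_ne_top hahat⟩
    set bad := {a : ℝ | Tl S a ≤ ENNReal.ofReal c₁} with hbaddef
    have hbadne : bad.Nonempty := ⟨ahat, hahat⟩
    have hbadlb : ∀ a ∈ bad, a₀ ≤ a := by
      intro a ha
      by_contra hlt
      push_neg at hlt
      exact absurd (le_trans (Tl_antitone hlt.le) ha) (not_le.mpr hgooda₀)
    have hbddb : BddBelow bad := ⟨a₀, hbadlb⟩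
    set astar := sInf bad with hastardef
    have hastar_ge : a₀ ≤ astar := le_csInf hbadne hbadlb
    have hastar_pos : 0 < astar := lt_of_lt_of_le ha₀pos hastar_ge
    have hgood_lt : ∀ a < astar, ENNReal.ofReal c₁ < Tl S a := by
      intro a ha
      by_contra h
      push_neg at h
      exact absurd (csInf_le hbddb h) (not_le.mpr ha)
    have hTl_le : Tl S astar ≤ ENNReal.ofReal c₁ := by
      have hsup : volume (S \ Metric.closedBall 0 astar) ≤ ENNReal.ofReal c₁ := by
        rw [← iUnion_tail S astar, (mono_tail_up S astar).directed_le.measure_iUnion]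
        refine iSup_le fun n => ?_
        have hlt : sInf bad < astar + 1 / (n + 1) := by
          have : (0:ℝ) < 1 / (n + 1) := by positivity
          rw [← hastardef]; linarith
        obtain ⟨e, he, helt⟩ := (csInf_lt_iff hbddb hbadne).mp hlt
        exact le_trans (Tl_antitone helt.le) he
      have hsub : S \ Metric.ball 0 astar ⊆
          (S \ Metric.closedBall 0 astar) ∪ Metric.sphere 0 astar := by
        intro x hx
        rcases hx with ⟨hxS, hxb⟩
        rw [Metric.mem_ball, Real.dist_0_eq_abs, not_lt] at hxb
        rcases eq_or_lt_of_le hxb with h | h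
        · exact Or.inr (by simp [Real.norm_eq_abs, ← h])
        · exact Or.inl ⟨hxS, by rw [Metric.mem_closedBall, Real.dist_0_eq_abs, not_le]; exact h⟩
      calc Tl S astar ≤ volume (S \ Metric.closedBall 0 astar) +
            volume (Metric.sphere (0:ℝ) astar) :=
            le_trans (measure_mono hsub) (measure_union_le _ _)
        _ ≤ ENNReal.ofReal c₁ := by rw [sphere_null, add_zero]; exact hsup
    have hTl_ge : ENNReal.ofReal c₁ ≤ Tl S astar := by
      have htend := tendsto_measure_iInter_atTop (μ := (volume : Measure ℝ))
        (fun n => (hS.diff measurableSet_ball).nullMeasurableSet) (anti_tail S astar)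
        ⟨0, ne_top_of_le_ne_top hvolSfin (measure_mono diff_subset)⟩
      rw [iInter_tail S astar] at htend
      refine ge_of_tendsto htend (Filter.Eventually.of_forall fun n => ?_)
      refine (hgood_lt _ ?_).le
      have : (0:ℝ) < 1 / (n + 1) := by positivity
      linarith
    have hTl_eq : Tl S astar = ENNReal.ofReal c₁ := le_antisymm hTl_le hTl_ge
    have hV₁le : nuMeasure (S \ Metric.ball 0 astar) ≤ ENNReal.ofReal c₂ := by
      rw [← h₂]
      refine bathtub_lo hmeas hf (hS.diff measurableSet_ball) hastar_pos
        (fun x hx => ?_) (fun x hfx hxV => ?_) ?_ htotFin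
      · have := hx.2
        rwa [Metric.mem_ball, Real.dist_0_eq_abs, not_lt] at this
      · have hxS : x ∈ S := hfx
        have h : x ∈ Metric.ball (0:ℝ) astar := by
          by_contra h
          exact hxV ⟨hxS, h⟩
        rw [Metric.mem_ball, Real.dist_0_eq_abs] at h
        exact h.le
      · rw [h₁]; exact hTl_le
    by_cases hV₁eq : nuMeasure (S \ Metric.ball 0 astar) = ENNReal.ofReal c₂
    · exact ⟨S \ Metric.ball 0 astar, hS.diff measurableSet_ball, diff_subset,
        hTl_eq, hV₁eq⟩
    have hV₁lt : nuMeasure (S \ Metric.ball 0 astar) < ENNReal.ofReal c₂ :=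
      lt_of_le_of_ne hV₁le hV₁eq
    have hastar_gt : a₀ < astar := by
      rcases lt_or_eq_of_le hastar_ge with h | h
      · exact h
      · exfalso
        rw [← h] at hTl_le
        exact absurd hTl_le (not_le.mpr hgooda₀)
    obtain ⟨i₀, hi₀⟩ := exists_nat_one_div_lt hastar_pos
    have hfin_i : nuMeasure (S \ Metric.ball 0 (astar - 1 / (i₀ + 1))) ≠ ∞ := by
      have hrpos : (0:ℝ) < astar - 1 / (i₀ + 1) := by linarith
      refine ne_top_of_le_ne_top
        (ENNReal.mul_ne_top (W_ne_top (astar - 1 / (i₀ + 1))) hvolSfin) ?_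
      calc nuMeasure (S \ Metric.ball 0 (astar - 1 / (i₀ + 1)))
          ≤ W (astar - 1 / (i₀ + 1)) * volume (S \ Metric.ball 0 (astar - 1 / (i₀ + 1))) :=
            nu_le_W_mul (hS.diff measurableSet_ball) hrpos (fun x hx => by
              have := hx.2
              rwa [Metric.mem_ball, Real.dist_0_eq_abs, not_lt] at this)
        _ ≤ W (astar - 1 / (i₀ + 1)) * volume S :=
            mul_le_mul_right (measure_mono diff_subset) _
    have htendν := tendsto_measure_iInter_atTop (μ := nuMeasure)
      (fun n => (hS.diff measurableSet_ball).nullMeasurableSet) (anti_tail S astar)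
      ⟨i₀, hfin_i⟩
    rw [iInter_tail S astar] at htendν
    have hev := htendν.eventually_lt_const hV₁lt
    have hev2 : ∀ᶠ n : ℕ in atTop, a₀ < astar - 1 / (n + 1) := by
      obtain ⟨m, hm⟩ := exists_nat_one_div_lt (sub_pos.mpr hastar_gt)
      refine eventually_atTop.mpr ⟨m, fun n hn => ?_⟩
      have h2 : 1 / ((n:ℝ) + 1) ≤ 1 / ((m:ℝ) + 1) :=
        one_div_le_one_div_of_le (by positivity) (by exact_mod_cast Nat.succ_le_succ hn)
      linarith
    obtain ⟨n, hn1, hn2⟩ := (hev.and hev2).exists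
    have ha₁lt : astar - 1 / (n + 1) < astar := by
      have : (0:ℝ) < 1 / (n + 1) := by positivity
      linarith
    have hgooda₁ := hgood_lt _ ha₁lt
    have hphia₁ : phi S c₁ (astar - 1 / (n + 1)) < c₂ := by
      have hle : psi S c₁ (astar - 1 / (n + 1)) ≤
          nuMeasure (S \ Metric.ball 0 (astar - 1 / (n + 1))) := by
        refine measure_mono fun x hx => ?_
        rw [mem_An] at hx
        exact ⟨hx.1, by rw [Metric.mem_ball, Real.dist_0_eq_abs, not_lt]; exact hx.2.1⟩
      have h := lt_of_le_of_lt hle hn1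
      have h2 := (ENNReal.toReal_lt_toReal
        (psi_fin hS hc1pos (lt_trans ha₀pos hn2) hgooda₁) ENNReal.ofReal_ne_top).mpr h
      rwa [ENNReal.toReal_ofReal hc₂] at h2
    exact final_ivt hS hc1pos hc₂ ha₀pos hn2.le hgooda₁ hphia₀.le hphia₁.le
end

section
/- Let U and V be Lebesgue measurable subsets of ℝ such that m(U) = m(V) = 1 and ν(U) ≤ 1 ≤ ν(V), where m is Lebesgue measure and ν is the measure with density x ↦ 1/(|x|·log 4) with respect to m. Then there exists a Lebesgue measurable set W ⊆ U ∪ V such that m(W) = 1 and ν(W) = 1. -/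
open MeasureTheory

namespace Stmt4Aux
open Set

/-- The region `{x : s ≤ |x|}`. -/
def ann (s : ℝ) : Set ℝ := {x : ℝ | s ≤ |x|}

lemma measurableSet_ann (s : ℝ) : MeasurableSet (ann s) :=
  (isClosed_le continuous_const continuous_abs).measurableSet

lemma ann_zero : ann (0:ℝ) = Set.univ := by
  ext x; simp [ann, abs_nonneg]

lemma ann_antitone {s s' : ℝ} (h : s ≤ s') : ann s' ⊆ ann s :=
  fun x hx => le_trans h hx

lemma vol_ann_diff {s s' : ℝ} (h : s ≤ s') :
    volume (ann s \ ann s') ≤ ENNReal.ofReal (2 * (s' - s)) := by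
  have hsub : ann s \ ann s' ⊆ Icc (-s') (-(max s 0)) ∪ Icc (max s 0) s' := by
    rintro x ⟨hx1, hx2⟩
    simp only [ann, mem_setOf_eq, not_le] at hx1 hx2
    have h0 : max s 0 ≤ |x| := max_le hx1 (abs_nonneg x)
    rcases le_or_gt 0 x with hx | hx
    · right; rw [abs_of_nonneg hx] at h0 hx2; exact ⟨h0, hx2.le⟩
    · left; rw [abs_of_neg hx] at h0 hx2
      constructor <;> linarith
  calc volume (ann s \ ann s') ≤ volume (Icc (-s') (-(max s 0)) ∪ Icc (max s 0) s') :=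
        measure_mono hsub
    _ ≤ volume (Icc (-s') (-(max s 0))) + volume (Icc (max s 0) s') := measure_union_le _ _
    _ ≤ ENNReal.ofReal (s' - s) + ENNReal.ofReal (s' - s) := by
        rw [Real.volume_Icc, Real.volume_Icc]
        have h1 := le_max_left s 0
        exact add_le_add (ENNReal.ofReal_le_ofReal (by linarith)) (ENNReal.ofReal_le_ofReal (by linarith))
    _ = ENNReal.ofReal (2 * (s' - s)) := by
        rw [← ENNReal.ofReal_add (by linarith) (by linarith)]; ring_nf



/-- `alpha A s` is the Lebesgue measure of `A ∩ {|x| ≥ s}`, as a real number. -/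
noncomputable def alpha (A : Set ℝ) (s : ℝ) : ℝ := (volume (A ∩ ann s)).toReal

variable {A : Set ℝ}

lemma alpha_nonneg (A : Set ℝ) (s : ℝ) : 0 ≤ alpha A s := ENNReal.toReal_nonneg

lemma alpha_zero (A : Set ℝ) : alpha A 0 = (volume A).toReal := by
  rw [alpha, ann_zero, Set.inter_univ]

lemma alpha_antitone (hAfin : volume A ≠ ⊤) : Antitone (alpha A) := by
  intro s s' h
  apply ENNReal.toReal_mono (ne_top_of_le_ne_top hAfin (measure_mono Set.inter_subset_left))
  exact measure_mono (Set.inter_subset_inter_right _ (ann_antitone h))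

lemma alpha_lip (hAfin : volume A ≠ ⊤) {s s' : ℝ} (h : s ≤ s') :
    alpha A s ≤ alpha A s' + 2 * (s' - s) := by
  have key : volume (A ∩ ann s) ≤ volume (A ∩ ann s') + ENNReal.ofReal (2 * (s' - s)) := by
    calc volume (A ∩ ann s)
        ≤ volume (A ∩ ann s ∩ ann s') + volume ((A ∩ ann s) \ ann s') :=
          le_of_eq (measure_inter_add_diff _ (measurableSet_ann s')).symm
      _ ≤ volume (A ∩ ann s') + ENNReal.ofReal (2 * (s' - s)) := by
          refine add_le_add (measure_mono ?_) (le_trans (measure_mono ?_) (vol_ann_diff h))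
          · exact fun x hx => ⟨hx.1.1, hx.2⟩
          · exact fun x hx => ⟨hx.1.2, hx.2⟩
  have h1 : volume (A ∩ ann s) ≠ ⊤ := ne_top_of_le_ne_top hAfin (measure_mono Set.inter_subset_left)
  have h2 : volume (A ∩ ann s') ≠ ⊤ := ne_top_of_le_ne_top hAfin (measure_mono Set.inter_subset_left)
  have := ENNReal.toReal_mono (by finiteness) key
  rwa [ENNReal.toReal_add h2 ENNReal.ofReal_ne_top, ENNReal.toReal_ofReal (by linarith)] at this

/-- `alpha` tends to `0`: for every `t > 0` there is `N ≥ 0` with `alpha A N < t`. -/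
lemma alpha_small (hA : MeasurableSet A) (hAfin : volume A ≠ ⊤) {t : ℝ} (ht : 0 < t) :
    ∃ N : ℝ, 0 ≤ N ∧ alpha A N < t := by
  have hmono : Antitone (fun n : ℕ => A ∩ ann (n : ℝ)) := by
    intro m n h
    exact Set.inter_subset_inter_right _ (ann_antitone (by exact_mod_cast h))
  have hempty : (⋂ n : ℕ, A ∩ ann (n : ℝ)) = ∅ := by
    ext x
    simp only [Set.mem_iInter, Set.mem_empty_iff_false, iff_false, not_forall]
    obtain ⟨n, hn⟩ := exists_nat_gt |x|
    exact ⟨n, fun hx => absurd hx.2 (not_le.mpr hn)⟩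
  have htend : Filter.Tendsto (fun n : ℕ => volume (A ∩ ann (n : ℝ)))
      Filter.atTop (nhds 0) := by
    have := MeasureTheory.tendsto_measure_iInter_atTop
      (μ := volume) (s := fun n : ℕ => A ∩ ann (n : ℝ))
      (fun n => (hA.inter (measurableSet_ann _)).nullMeasurableSet) hmono
      ⟨0, ne_top_of_le_ne_top hAfin (measure_mono Set.inter_subset_left)⟩
    rwa [hempty, measure_empty] at this
  have : ∀ᶠ n : ℕ in Filter.atTop, volume (A ∩ ann (n : ℝ)) < ENNReal.ofReal t := by
    apply htend.eventually_lt_const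
    simpa using ht
  obtain ⟨n, hn⟩ := this.exists
  exact ⟨n, Nat.cast_nonneg n, by
    rw [alpha]
    calc (volume (A ∩ ann (n:ℝ))).toReal < (ENNReal.ofReal t).toReal := by
          apply ENNReal.toReal_strict_mono ENNReal.ofReal_ne_top hn
      _ = t := ENNReal.toReal_ofReal ht.le⟩



/-- The generalized inverse of `alpha`. -/
noncomputable def sigma (A : Set ℝ) (t : ℝ) : ℝ := sSup {s : ℝ | 0 ≤ s ∧ t ≤ alpha A s}

section Sigma

variable (hA : MeasurableSet A) (hAfin : volume A ≠ ⊤) {t : ℝ}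
  (ht0 : 0 < t) (htc : t ≤ alpha A 0)

include hA hAfin ht0 htc

lemma sigma_mem_nonempty : {s : ℝ | 0 ≤ s ∧ t ≤ alpha A s}.Nonempty :=
  ⟨0, le_refl 0, htc⟩

lemma sigma_bddAbove : BddAbove {s : ℝ | 0 ≤ s ∧ t ≤ alpha A s} := by
  obtain ⟨N, hN0, hN⟩ := alpha_small hA hAfin ht0
  refine ⟨N, fun s hs => ?_⟩
  by_contra hcon
  push_neg at hcon
  exact absurd (hs.2.trans (alpha_antitone hAfin hcon.le)) (not_le.mpr hN)

lemma sigma_nonneg : 0 ≤ sigma A t :=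
  le_csSup (sigma_bddAbove hA hAfin ht0 htc) ⟨le_refl 0, htc⟩

lemma alpha_sigma : alpha A (sigma A t) = t := by
  have hbdd := sigma_bddAbove hA hAfin ht0 htc
  have hne := sigma_mem_nonempty hA hAfin ht0 htc
  refine le_antisymm ?_ ?_
  · -- alpha (sigma) ≤ t
    refine le_of_forall_pos_le_add fun ε hε => ?_
    have hnotin : sigma A t + ε / 2 ∉ {s : ℝ | 0 ≤ s ∧ t ≤ alpha A s} := by
      intro hmem
      have h2 : sigma A t + ε / 2 ≤ sigma A t := le_csSup hbdd hmem
      linarith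
    have hge0 : 0 ≤ sigma A t + ε / 2 := by
      have := sigma_nonneg hA hAfin ht0 htc; linarith
    have hlt : alpha A (sigma A t + ε / 2) < t := by
      by_contra hcon; push_neg at hcon; exact hnotin ⟨hge0, hcon⟩
    have := alpha_lip hAfin (le_of_lt (by linarith : sigma A t < sigma A t + ε / 2))
    calc alpha A (sigma A t) ≤ alpha A (sigma A t + ε/2) + 2 * (sigma A t + ε/2 - sigma A t) := this
      _ ≤ t + ε := by linarith
  · -- t ≤ alpha (sigma)
    refine le_of_forall_pos_le_add fun ε hε => ?_
    obtain ⟨s, hs, hlt⟩ := exists_lt_of_lt_csSup hne (by linarith : sigma A t - ε / 2 < sigma A t)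
    have hsle : s ≤ sigma A t := le_csSup hbdd hs
    calc t ≤ alpha A s := hs.2
      _ ≤ alpha A (sigma A t) + 2 * (sigma A t - s) := alpha_lip hAfin hsle
      _ ≤ alpha A (sigma A t) + ε := by linarith

lemma sigma_pos (htlt : t < alpha A 0) : 0 < sigma A t := by
  have hs : (alpha A 0 - t) / 4 ∈ {s : ℝ | 0 ≤ s ∧ t ≤ alpha A s} := by
    constructor
    · linarith
    · have := alpha_lip hAfin (by linarith : (0:ℝ) ≤ (alpha A 0 - t) / 4)
      linarith
  have := le_csSup (sigma_bddAbove hA hAfin ht0 htc) hs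
  calc (0:ℝ) < (alpha A 0 - t)/4 := by linarith
    _ ≤ sigma A t := this

end Sigma

lemma sigma_antitone (hA : MeasurableSet A) (hAfin : volume A ≠ ⊤) {t t' : ℝ}
    (ht0 : 0 < t) (h : t ≤ t') (htc : t' ≤ alpha A 0) : sigma A t' ≤ sigma A t := by
  apply csSup_le_csSup (sigma_bddAbove hA hAfin ht0 (h.trans htc))
    (sigma_mem_nonempty hA hAfin (ht0.trans_le h) htc)
  exact fun s hs => ⟨hs.1, h.trans hs.2⟩

/-- The truncated set `A ∩ {|x| ≥ sigma A t}`, of Lebesgue measure exactly `t`. -/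
noncomputable def Aset (A : Set ℝ) (t : ℝ) : Set ℝ := A ∩ ann (sigma A t)

lemma measurableSet_Aset (hA : MeasurableSet A) (t : ℝ) : MeasurableSet (Aset A t) :=
  hA.inter (measurableSet_ann _)

lemma vol_Aset (hA : MeasurableSet A) (hAfin : volume A ≠ ⊤) {t : ℝ}
    (ht0 : 0 < t) (htc : t ≤ alpha A 0) : volume (Aset A t) = ENNReal.ofReal t := by
  have h := alpha_sigma hA hAfin ht0 htc
  rw [alpha] at h
  have hfin : volume (A ∩ ann (sigma A t)) ≠ ⊤ :=
    ne_top_of_le_ne_top hAfin (measure_mono Set.inter_subset_left)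
  rw [Aset, ← ENNReal.ofReal_toReal hfin, h]

lemma Aset_mono (hA : MeasurableSet A) (hAfin : volume A ≠ ⊤) {t t' : ℝ}
    (ht0 : 0 < t) (h : t ≤ t') (htc : t' ≤ alpha A 0) : Aset A t ⊆ Aset A t' :=
  Set.inter_subset_inter_right _ (ann_antitone (sigma_antitone hA hAfin ht0 h htc))



end Stmt4Aux

namespace Stmt4Aux

lemma nu_ac : nuMeasure ≪ (volume : Measure ℝ) :=
  MeasureTheory.withDensity_absolutelyContinuous _ _

lemma nu_apply {X : Set ℝ} (hX : MeasurableSet X) :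
    nuMeasure X = ∫⁻ x in X, ENNReal.ofReal (1 / (|x| * Real.log 4)) ∂volume :=
  MeasureTheory.withDensity_apply _ hX

lemma nu_le_of_subset_ann {X : Set ℝ} {s : ℝ} (hX : MeasurableSet X)
    (hXs : X ⊆ ann s) (hs : 0 < s) :
    nuMeasure X ≤ ENNReal.ofReal (1 / (s * Real.log 4)) * volume X := by
  rw [nu_apply hX]
  have hlog : 0 < Real.log 4 := Real.log_pos (by norm_num)
  calc ∫⁻ x in X, ENNReal.ofReal (1 / (|x| * Real.log 4)) ∂volume
      ≤ ∫⁻ _ in X, ENNReal.ofReal (1 / (s * Real.log 4)) ∂volume := by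
        refine setLIntegral_mono measurable_const fun x hx => ?_
        apply ENNReal.ofReal_le_ofReal
        have hxs : s ≤ |x| := hXs hx
        apply one_div_le_one_div_of_le (by positivity)
        exact mul_le_mul_of_nonneg_right hxs hlog.le
    _ = ENNReal.ofReal (1 / (s * Real.log 4)) * volume X := setLIntegral_const _ _

end Stmt4Aux

open Stmt4Aux Set

theorem stmt_4 (U V : Set ℝ) (hU : MeasurableSet U) (hV : MeasurableSet V)
    (hmU : volume U = 1) (hmV : volume V = 1)
    (hνU : nuMeasure U ≤ 1) (hνV : 1 ≤ nuMeasure V) :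
    ∃ W : Set ℝ, MeasurableSet W ∧ W ⊆ U ∪ V ∧
      volume W = 1 ∧ nuMeasure W = 1 := by
  by_cases hU1 : nuMeasure U = 1
  · exact ⟨U, hU, Set.subset_union_left, hmU, hU1⟩
  by_cases hV1 : nuMeasure V = 1
  · exact ⟨V, hV, Set.subset_union_right, hmV, hV1⟩
  have hνU' : nuMeasure U < 1 := lt_of_le_of_ne hνU hU1
  have hνV' : 1 < nuMeasure V := lt_of_le_of_ne hνV (Ne.symm hV1)
  set P : Set ℝ := U ∩ V with hPdef
  set D : Set ℝ := U \ V with hDdef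
  set E : Set ℝ := V \ U with hEdef
  have hP : MeasurableSet P := hU.inter hV
  have hD : MeasurableSet D := hU.diff hV
  have hE : MeasurableSet E := hV.diff hU
  have hmUfin : volume U ≠ ⊤ := by rw [hmU]; exact ENNReal.one_ne_top
  have hmVfin : volume V ≠ ⊤ := by rw [hmV]; exact ENNReal.one_ne_top
  have hDU : D ⊆ U := Set.diff_subset
  have hEV : E ⊆ V := Set.diff_subset
  have hPU : P ⊆ U := Set.inter_subset_left
  have hmDfin : volume D ≠ ⊤ := ne_top_of_le_ne_top hmUfin (measure_mono hDU)
  have hmEfin : volume E ≠ ⊤ := ne_top_of_le_ne_top hmVfin (measure_mono hEV)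
  have hmPfin : volume P ≠ ⊤ := ne_top_of_le_ne_top hmUfin (measure_mono hPU)
  have hdisjPD : Disjoint P D := by
    rw [Set.disjoint_left]; intro x hx hx'; exact hx'.2 hx.2
  have hdisjPE : Disjoint P E := by
    rw [Set.disjoint_left]; intro x hx hx'; exact hx'.2 hx.1
  have hUPD : P ∪ D = U := Set.inter_union_diff U V
  have hVPE : P ∪ E = V := by
    rw [hPdef, Set.inter_comm]; exact Set.inter_union_diff V U
  have hmU' : volume P + volume D = 1 := by
    rw [← measure_union hdisjPD hD, hUPD, hmU]
  have hmV' : volume P + volume E = 1 := by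
    rw [← measure_union hdisjPE hE, hVPE, hmV]
  have hmDE : volume D = volume E := by
    have := hmU'.trans hmV'.symm
    exact (ENNReal.add_right_inj hmPfin).mp this
  have hνUPD : nuMeasure U = nuMeasure P + nuMeasure D := by
    rw [← hUPD, measure_union hdisjPD hD]
  have hνVPE : nuMeasure V = nuMeasure P + nuMeasure E := by
    rw [← hVPE, measure_union hdisjPE hE]
  have hνPfin : nuMeasure P ≠ ⊤ := by
    intro h; rw [hνUPD, h] at hνU'
    exact absurd hνU' (by simp)
  have hνDfin : nuMeasure D ≠ ⊤ := by
    intro h; rw [hνUPD, h] at hνU'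
    exact absurd hνU' (by simp)
  set c : ℝ := (volume E).toReal with hcdef
  have hmEc : volume E = ENNReal.ofReal c := (ENNReal.ofReal_toReal hmEfin).symm
  have hmDc : volume D = ENNReal.ofReal c := by rw [hmDE, hmEc]
  have hcE : alpha E 0 = c := alpha_zero E
  have hcD : alpha D 0 = c := by rw [alpha_zero, hmDE]
  have hc0 : 0 < c := by
    rcases lt_or_eq_of_le (ENNReal.toReal_nonneg : 0 ≤ c) with h | h
    · exact h
    · exfalso
      have hE0 : volume E = 0 := by
        rw [hmEc, show c = (0:ℝ) from h.symm, ENNReal.ofReal_zero]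
      have hD0 : volume D = 0 := by rw [hmDE, hE0]
      have hνE0 : nuMeasure E = 0 := nu_ac hE0
      have hνD0 : nuMeasure D = 0 := nu_ac hD0
      rw [hνUPD, hνD0, add_zero] at hνU'
      rw [hνVPE, hνE0, add_zero] at hνV'
      exact absurd (hνU'.trans hνV') (lt_irrefl _)
  -- find t* < c with  1 < ν P + ν (Aset E t*)
  obtain ⟨tstar, htstar0, htstarc, hgt⟩ :
      ∃ t : ℝ, 0 < t ∧ t < c ∧ 1 < nuMeasure P + nuMeasure (Aset E t) := by
    set t : ℕ → ℝ := fun n => c - c / ((n : ℝ) + 2) with htdef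
    have hfrac : ∀ n : ℕ, 0 < c / ((n:ℝ) + 2) := fun n => div_pos hc0 (by positivity)
    have ht0 : ∀ n, 0 < t n := by
      intro n
      have h1 : c / ((n:ℝ)+2) < c := div_lt_self hc0 (by have : (0:ℝ) ≤ (n:ℝ) := n.cast_nonneg; linarith)
      simp only [htdef]; linarith
    have htc : ∀ n, t n < c := by
      intro n; have := hfrac n; simp only [htdef]; linarith
    have htmono : Monotone t := by
      intro m n h
      simp only [htdef, sub_le_sub_iff_left]
      apply div_le_div_of_nonneg_left hc0.le (by positivity)
      have : (m:ℝ) ≤ (n:ℝ) := by exact_mod_cast h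
      linarith
    set Un : ℕ → Set ℝ := fun n => Aset E (t n) with hUndef
    have hUnmono : Monotone Un := fun m n h =>
      Aset_mono hE hmEfin (ht0 m) (htmono h) (by rw [hcE]; exact (htc n).le)
    have hUnE : ∀ n, Un n ⊆ E := fun n => Set.inter_subset_left
    have hvolUn : ∀ n, volume (Un n) = ENNReal.ofReal (t n) := fun n =>
      vol_Aset hE hmEfin (ht0 n) (by rw [hcE]; exact (htc n).le)
    have hUnion : nuMeasure E ≤ ⨆ n, nuMeasure (Un n) := by
      have h1 : volume (E \ ⋃ n, Un n) = 0 := by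
        have hb : ∀ n : ℕ, volume (E \ ⋃ m, Un m) ≤ ENNReal.ofReal (c / ((n:ℝ)+2)) := by
          intro n
          calc volume (E \ ⋃ m, Un m)
              ≤ volume (E \ Un n) :=
                measure_mono (Set.diff_subset_diff_right (Set.subset_iUnion _ n))
            _ = volume E - volume (Un n) :=
                measure_diff (hUnE n) (measurableSet_Aset hE _).nullMeasurableSet
                  (by rw [hvolUn n]; exact ENNReal.ofReal_ne_top)
            _ = ENNReal.ofReal (c / ((n:ℝ)+2)) := by
                rw [hvolUn n, hmEc, ← ENNReal.ofReal_sub _ (ht0 n).le]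
                norm_num [htdef]
        have hr : Filter.Tendsto (fun n : ℕ => c / ((n:ℝ) + 2)) Filter.atTop (nhds 0) := by
          have hg : Filter.Tendsto (fun n : ℕ => (n:ℝ) + 2) Filter.atTop Filter.atTop :=
            Filter.tendsto_atTop_add_const_right _ 2 tendsto_natCast_atTop_atTop
          exact Filter.Tendsto.div_atTop tendsto_const_nhds hg
        have htends : Filter.Tendsto (fun n : ℕ => ENNReal.ofReal (c / ((n:ℝ)+2)))
            Filter.atTop (nhds 0) := by
          have := ENNReal.tendsto_ofReal hr
          simpa using this
        exact le_antisymm (ge_of_tendsto' htends hb) zero_le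
      have h2 : nuMeasure (E \ ⋃ n, Un n) = 0 := nu_ac h1
      have h3 : E ⊆ (⋃ n, Un n) ∪ (E \ ⋃ n, Un n) := by
        intro x hx
        by_cases hx' : x ∈ ⋃ n, Un n
        · exact Or.inl hx'
        · exact Or.inr ⟨hx, hx'⟩
      calc nuMeasure E ≤ nuMeasure ((⋃ n, Un n) ∪ (E \ ⋃ n, Un n)) := measure_mono h3
        _ ≤ nuMeasure (⋃ n, Un n) + nuMeasure (E \ ⋃ n, Un n) := measure_union_le _ _
        _ = nuMeasure (⋃ n, Un n) := by rw [h2, add_zero]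
        _ = ⨆ n, nuMeasure (Un n) := hUnmono.directed_le.measure_iUnion
    have hlt : 1 < ⨆ n, (nuMeasure P + nuMeasure (Un n)) := by
      calc (1:ENNReal) < nuMeasure V := hνV'
        _ = nuMeasure P + nuMeasure E := hνVPE
        _ ≤ nuMeasure P + ⨆ n, nuMeasure (Un n) := add_le_add_right hUnion _
        _ = ⨆ n, (nuMeasure P + nuMeasure (Un n)) := ENNReal.add_iSup _
    obtain ⟨n, hn⟩ := lt_iSup_iff.mp hlt
    exact ⟨t n, ht0 n, htc n, hn⟩
  -- setup of constants
  have htstarcE : tstar ≤ alpha E 0 := by rw [hcE]; exact htstarc.le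
  have htstarcD : tstar ≤ alpha D 0 := by rw [hcD]; exact htstarc.le
  have hsDpos : 0 < sigma D tstar :=
    sigma_pos hD hmDfin htstar0 htstarcD (by rw [hcD]; exact htstarc)
  have hsEpos : 0 < sigma E tstar :=
    sigma_pos hE hmEfin htstar0 htstarcE (by rw [hcE]; exact htstarc)
  set sstar : ℝ := min (sigma D tstar) (sigma E tstar) with hsdef
  have hsstar : 0 < sstar := lt_min hsDpos hsEpos
  have hlog4 : 0 < Real.log 4 := Real.log_pos (by norm_num)
  set C : ℝ := 1 / (sstar * Real.log 4) with hCdef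
  have hC : 0 < C := by rw [hCdef]; positivity
  -- generic bounds for A = D or E
  have key : ∀ A : Set ℝ, MeasurableSet A → volume A ≠ ⊤ → alpha A 0 = c →
      sstar ≤ sigma A tstar → ∀ t : ℝ, 0 < t → t ≤ tstar →
      (Aset A t ⊆ ann sstar) ∧ nuMeasure (Aset A t) ≤ ENNReal.ofReal (C * t) := by
    intro A hA hAfin hac hsA t ht0 htt
    have htc' : t ≤ alpha A 0 := by rw [hac]; linarith
    have hsub : Aset A t ⊆ ann sstar := by
      have h1 : sigma A tstar ≤ sigma A t :=
        sigma_antitone hA hAfin ht0 htt (by rw [hac]; exact htstarc.le)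
      exact Set.inter_subset_right.trans (ann_antitone (le_trans hsA h1))
    refine ⟨hsub, ?_⟩
    calc nuMeasure (Aset A t)
        ≤ ENNReal.ofReal (1 / (sstar * Real.log 4)) * volume (Aset A t) :=
          nu_le_of_subset_ann (measurableSet_Aset hA t) hsub hsstar
      _ = ENNReal.ofReal (C * t) := by
          rw [vol_Aset hA hAfin ht0 htc', ← ENNReal.ofReal_mul hC.le]
  have keyLip : ∀ A : Set ℝ, MeasurableSet A → volume A ≠ ⊤ → alpha A 0 = c →
      sstar ≤ sigma A tstar → ∀ t t' : ℝ, 0 < t → t ≤ t' → t' ≤ tstar →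
      (nuMeasure (Aset A t)).toReal ≤ (nuMeasure (Aset A t')).toReal ∧
      (nuMeasure (Aset A t')).toReal ≤ (nuMeasure (Aset A t)).toReal + C * (t' - t) := by
    intro A hA hAfin hac hsA t t' ht0 htt' ht'
    have h0' : 0 < t' := lt_of_lt_of_le ht0 htt'
    have hfin : nuMeasure (Aset A t) ≠ ⊤ :=
      ne_top_of_le_ne_top ENNReal.ofReal_ne_top ((key A hA hAfin hac hsA t ht0 (htt'.trans ht')).2)
    have hfin' : nuMeasure (Aset A t') ≠ ⊤ :=
      ne_top_of_le_ne_top ENNReal.ofReal_ne_top ((key A hA hAfin hac hsA t' h0' ht').2)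
    have hmono : Aset A t ⊆ Aset A t' :=
      Aset_mono hA hAfin ht0 htt' (by rw [hac]; exact ht'.trans htstarc.le)
    refine ⟨ENNReal.toReal_mono hfin' (measure_mono hmono), ?_⟩
    have hdiffsub : Aset A t' \ Aset A t ⊆ ann sstar :=
      Set.diff_subset.trans ((key A hA hAfin hac hsA t' h0' ht').1)
    have hmdiff : volume (Aset A t' \ Aset A t) = ENNReal.ofReal (t' - t) := by
      rw [measure_diff hmono (measurableSet_Aset hA t).nullMeasurableSet
          (by rw [vol_Aset hA hAfin ht0 (by rw [hac]; linarith)]; exact ENNReal.ofReal_ne_top),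
        vol_Aset hA hAfin ht0 (by rw [hac]; linarith),
        vol_Aset hA hAfin h0' (by rw [hac]; linarith),
        ← ENNReal.ofReal_sub _ ht0.le]
    have hb : nuMeasure (Aset A t' \ Aset A t) ≤ ENNReal.ofReal (C * (t' - t)) := by
      calc nuMeasure (Aset A t' \ Aset A t)
          ≤ ENNReal.ofReal (1 / (sstar * Real.log 4)) * volume (Aset A t' \ Aset A t) :=
            nu_le_of_subset_ann ((measurableSet_Aset hA t').diff (measurableSet_Aset hA t))
              hdiffsub hsstar
        _ = ENNReal.ofReal (C * (t' - t)) := by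
            rw [hmdiff, ← ENNReal.ofReal_mul hC.le]
    have hsplit : nuMeasure (Aset A t') ≤ nuMeasure (Aset A t) + ENNReal.ofReal (C * (t' - t)) := by
      calc nuMeasure (Aset A t') = nuMeasure (Aset A t ∪ (Aset A t' \ Aset A t)) := by
            rw [Set.union_diff_cancel hmono]
        _ ≤ nuMeasure (Aset A t) + nuMeasure (Aset A t' \ Aset A t) := measure_union_le _ _
        _ ≤ nuMeasure (Aset A t) + ENNReal.ofReal (C * (t' - t)) := add_le_add_right hb _
    have := ENNReal.toReal_mono (by
      exact ENNReal.add_ne_top.mpr ⟨hfin, ENNReal.ofReal_ne_top⟩) hsplit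
    rwa [ENNReal.toReal_add hfin ENNReal.ofReal_ne_top,
      ENNReal.toReal_ofReal (mul_nonneg hC.le (by linarith))] at this
  have hsD : sstar ≤ sigma D tstar := min_le_left _ _
  have hsE : sstar ≤ sigma E tstar := min_le_right _ _
  have keyD := keyLip D hD hmDfin hcD hsD
  have keyE := keyLip E hE hmEfin hcE hsE
  have finD : ∀ t : ℝ, 0 < t → t ≤ tstar → nuMeasure (Aset D t) ≤ ENNReal.ofReal (C * t) :=
    fun t a b => (key D hD hmDfin hcD hsD t a b).2
  have finE : ∀ t : ℝ, 0 < t → t ≤ tstar → nuMeasure (Aset E t) ≤ ENNReal.ofReal (C * t) :=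
    fun t a b => (key E hE hmEfin hcE hsE t a b).2
  -- the real-valued function for the intermediate value theorem
  set gD : ℝ → ℝ := fun t => (nuMeasure (Aset D t)).toReal with hgDdef
  set gE : ℝ → ℝ := fun t => (nuMeasure (Aset E t)).toReal with hgEdef
  set K : ℝ := (nuMeasure P).toReal + (nuMeasure D).toReal with hKdef
  set H : ℝ → ℝ := fun t => K - gD t + gE t with hHdef
  have hνUr : (nuMeasure U).toReal < 1 := by
    have := ENNReal.toReal_strict_mono ENNReal.one_ne_top hνU'
    rwa [ENNReal.toReal_one] at this
  set t1 : ℝ := min (tstar / 2) ((1 - (nuMeasure U).toReal) / (2 * C)) with ht1def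
  have ht1pos : 0 < t1 := lt_min (by linarith) (by apply div_pos <;> linarith)
  have ht1lt : t1 < tstar := lt_of_le_of_lt (min_le_left _ _) (by linarith)
  -- continuity of H on [t1, tstar]
  have hcont : ContinuousOn H (Set.Icc t1 tstar) := by
    have hkey2 : ∀ a b : ℝ, a ∈ Set.Icc t1 tstar → b ∈ Set.Icc t1 tstar → a ≤ b →
        |H a - H b| ≤ 2 * C * (b - a) := by
      intro a b ha hb hab
      have ha0 : 0 < a := lt_of_lt_of_le ht1pos ha.1
      obtain ⟨hD1, hD2⟩ := keyD a b ha0 hab hb.2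
      obtain ⟨hE1, hE2⟩ := keyE a b ha0 hab hb.2
      have : H a - H b = (gD b - gD a) - (gE b - gE a) := by
        simp only [hHdef]; ring
      rw [this, abs_le]
      constructor <;> nlinarith
    have hlip : LipschitzOnWith (Real.toNNReal (2 * C)) H (Set.Icc t1 tstar) := by
      apply LipschitzOnWith.of_dist_le_mul
      intro x hx y hy
      rw [Real.dist_eq, Real.dist_eq, Real.coe_toNNReal _ (by linarith)]
      rcases le_total x y with h | h
      · have h1 := hkey2 x y hx hy h
        have habs : |x - y| = y - x := by rw [abs_sub_comm, abs_of_nonneg (by linarith)]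
        rw [habs]; exact h1
      · have h1 := hkey2 y x hy hx h
        rw [abs_of_nonneg (by linarith : (0:ℝ) ≤ x - y), abs_sub_comm]
        exact h1
    exact hlip.continuousOn
  -- endpoint values
  have hνEtstar_fin : nuMeasure (Aset E tstar) ≠ ⊤ :=
    ne_top_of_le_ne_top ENNReal.ofReal_ne_top (finE tstar htstar0 le_rfl)
  have hHtstar : 1 < H tstar := by
    have h1 : gD tstar ≤ (nuMeasure D).toReal :=
      ENNReal.toReal_mono hνDfin (measure_mono Set.inter_subset_left)
    have h2 : (1:ℝ) < (nuMeasure P).toReal + (nuMeasure (Aset E tstar)).toReal := by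
      have h3 := ENNReal.toReal_strict_mono
        (ENNReal.add_ne_top.mpr ⟨hνPfin, hνEtstar_fin⟩) hgt
      rwa [ENNReal.toReal_one, ENNReal.toReal_add hνPfin hνEtstar_fin] at h3
    simp only [hHdef, hKdef]
    have hgEt : gE tstar = (nuMeasure (Aset E tstar)).toReal := rfl
    linarith
  have hHt1 : H t1 < 1 := by
    have h1 : gE t1 ≤ C * t1 :=
      ENNReal.toReal_le_of_le_ofReal (by positivity) (finE t1 ht1pos ht1lt.le)
    have h2 : 0 ≤ gD t1 := ENNReal.toReal_nonneg
    have hK : K = (nuMeasure U).toReal := by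
      rw [hKdef, hνUPD, ENNReal.toReal_add hνPfin hνDfin]
    have h3 : C * t1 ≤ (1 - (nuMeasure U).toReal) / 2 := by
      have h4 : t1 ≤ (1 - (nuMeasure U).toReal) / (2 * C) := min_le_right _ _
      have h5 := mul_le_mul_of_nonneg_left h4 hC.le
      calc C * t1 ≤ C * ((1 - (nuMeasure U).toReal) / (2 * C)) := h5
        _ = (1 - (nuMeasure U).toReal) / 2 := by field_simp
    simp only [hHdef]
    rw [hK]
    linarith
  -- intermediate value theorem
  obtain ⟨t₀, ht₀mem, hHt₀⟩ : ∃ t₀ ∈ Set.Icc t1 tstar, H t₀ = 1 := by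
    have hsub := intermediate_value_Icc ht1lt.le hcont
    have h1 : (1:ℝ) ∈ Set.Icc (H t1) (H tstar) := ⟨hHt1.le, hHtstar.le⟩
    obtain ⟨t₀, ht₀, h⟩ := hsub h1
    exact ⟨t₀, ht₀, h⟩
  have ht₀0 : 0 < t₀ := lt_of_lt_of_le ht1pos ht₀mem.1
  have ht₀star : t₀ ≤ tstar := ht₀mem.2
  have ht₀c : t₀ ≤ c := le_of_lt (lt_of_le_of_lt ht₀star htstarc)
  -- the final set
  set X : Set ℝ := Aset D t₀ with hXdef
  set Y : Set ℝ := Aset E t₀ with hYdef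
  have hXmeas : MeasurableSet X := measurableSet_Aset hD _
  have hYmeas : MeasurableSet Y := measurableSet_Aset hE _
  have hXD : X ⊆ D := Set.inter_subset_left
  have hYE : Y ⊆ E := Set.inter_subset_left
  refine ⟨(P ∪ (D \ X)) ∪ Y, ((hP.union (hD.diff hXmeas)).union hYmeas), ?_, ?_, ?_⟩
  · -- subset of U ∪ V
    intro x hx
    rcases hx with (hx | hx) | hx
    · exact Or.inl (hPU hx)
    · exact Or.inl (hDU hx.1)
    · exact Or.inr (hEV (hYE hx))
  · -- Lebesgue measure 1
    have hvolX : volume X = ENNReal.ofReal t₀ :=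
      vol_Aset hD hmDfin ht₀0 (by rw [hcD]; exact ht₀c)
    have hvolY : volume Y = ENNReal.ofReal t₀ :=
      vol_Aset hE hmEfin ht₀0 (by rw [hcE]; exact ht₀c)
    have hvolDX : volume (D \ X) = ENNReal.ofReal c - ENNReal.ofReal t₀ := by
      rw [measure_diff hXD hXmeas.nullMeasurableSet (by rw [hvolX]; exact ENNReal.ofReal_ne_top),
        hmDc, hvolX]
    have hd1 : Disjoint P (D \ X) := hdisjPD.mono_right Set.diff_subset
    have hd2 : Disjoint (P ∪ (D \ X)) Y := by
      rw [Set.disjoint_left]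
      intro x hx hx'
      have hxU : x ∈ U := by
        rcases hx with hx | hx
        · exact hPU hx
        · exact hDU hx.1
      exact (hYE hx').2 hxU
    calc volume ((P ∪ (D \ X)) ∪ Y) = (volume P + volume (D \ X)) + volume Y := by
          rw [measure_union hd2 hYmeas, measure_union hd1 (hD.diff hXmeas)]
      _ = volume P + ((ENNReal.ofReal c - ENNReal.ofReal t₀) + ENNReal.ofReal t₀) := by
          rw [hvolDX, hvolY, add_assoc]
      _ = volume P + ENNReal.ofReal c := by
          rw [tsub_add_cancel_of_le (ENNReal.ofReal_le_ofReal ht₀c)]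
      _ = volume P + volume D := by rw [hmDc]
      _ = 1 := hmU'
  · -- nu measure 1
    have hνXfin : nuMeasure X ≠ ⊤ :=
      ne_top_of_le_ne_top ENNReal.ofReal_ne_top (finD t₀ ht₀0 ht₀star)
    have hνYfin : nuMeasure Y ≠ ⊤ :=
      ne_top_of_le_ne_top ENNReal.ofReal_ne_top (finE t₀ ht₀0 ht₀star)
    have hνXle : nuMeasure X ≤ nuMeasure D := measure_mono hXD
    have hνDX : nuMeasure (D \ X) = nuMeasure D - nuMeasure X :=
      measure_diff hXD hXmeas.nullMeasurableSet hνXfin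
    have hνDXfin : nuMeasure (D \ X) ≠ ⊤ := by
      rw [hνDX]; exact ne_top_of_le_ne_top hνDfin tsub_le_self
    have hd1 : Disjoint P (D \ X) := hdisjPD.mono_right Set.diff_subset
    have hd2 : Disjoint (P ∪ (D \ X)) Y := by
      rw [Set.disjoint_left]
      intro x hx hx'
      have hxU : x ∈ U := by
        rcases hx with hx | hx
        · exact hPU hx
        · exact hDU hx.1
      exact (hYE hx').2 hxU
    have hsplit : nuMeasure ((P ∪ (D \ X)) ∪ Y)
        = (nuMeasure P + nuMeasure (D \ X)) + nuMeasure Y := by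
      rw [measure_union hd2 hYmeas, measure_union hd1 (hD.diff hXmeas)]
    have hWfin : nuMeasure ((P ∪ (D \ X)) ∪ Y) ≠ ⊤ := by
      rw [hsplit]
      exact ENNReal.add_ne_top.mpr ⟨ENNReal.add_ne_top.mpr ⟨hνPfin, hνDXfin⟩, hνYfin⟩
    have htoReal : (nuMeasure ((P ∪ (D \ X)) ∪ Y)).toReal = 1 := by
      rw [hsplit, ENNReal.toReal_add (ENNReal.add_ne_top.mpr ⟨hνPfin, hνDXfin⟩) hνYfin,
        ENNReal.toReal_add hνPfin hνDXfin, hνDX,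
        ENNReal.toReal_sub_of_le hνXle hνDfin]
      have hH := hHt₀
      simp only [hHdef, hKdef, hgDdef, hgEdef] at hH
      rw [← hXdef, ← hYdef] at hH
      linarith
    rw [← ENNReal.ofReal_toReal hWfin, htoReal, ENNReal.ofReal_one]
end

section
/- Let f : ℝ → ℝ be a nonnegative Lebesgue measurable function such that for almost every ξ ∈ ℝ, ∑_{k∈ℤ} f(ξ+k) = 1 (sum of nonnegative terms in [0,∞]). Then the support {ξ : f(ξ) ≠ 0} of f contains a Lebesgue measurable set G that tiles ℝ by integer translations, i.e., for almost every ξ ∈ ℝ there is exactly one k ∈ ℤ with ξ + k ∈ G. -/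
open MeasureTheory

theorem stmt_5 (f : ℝ → ℝ) (hmeas : Measurable f) (hf : ∀ x, 0 ≤ f x)
    (htrans : ∀ᵐ ξ ∂(volume : Measure ℝ),
      ∑' k : ℤ, ENNReal.ofReal (f (ξ + (k : ℝ))) = 1) :
    ∃ G : Set ℝ, MeasurableSet G ∧ G ⊆ {ξ : ℝ | f ξ ≠ 0} ∧
      ∀ᵐ ξ ∂(volume : Measure ℝ), ∃! k : ℤ, ξ + (k : ℝ) ∈ G := by
  classical
  set enc : ℤ → ℕ := Encodable.encode with henc
  have enc_inj : Function.Injective enc := Encodable.encode_injective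
  set G : Set ℝ := {η | f η ≠ 0 ∧ ∀ k : ℤ, f (η + (k : ℝ)) ≠ 0 →
      enc ⌊η⌋ ≤ enc (⌊η⌋ + k)} with hG
  have hGmeas : MeasurableSet G := by
    have h0 : MeasurableSet {η : ℝ | f η ≠ 0} :=
      (hmeas (measurableSet_singleton 0)).compl
    have h1 : ∀ k : ℤ, MeasurableSet {η : ℝ | f (η + (k : ℝ)) ≠ 0 →
        enc ⌊η⌋ ≤ enc (⌊η⌋ + k)} := by
      intro k
      have hA : MeasurableSet {η : ℝ | f (η + (k : ℝ)) ≠ 0} :=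
        ((hmeas.comp (measurable_add_const (k : ℝ))) (measurableSet_singleton 0)).compl
      have hfloor : Measurable fun η : ℝ => (⌊η⌋ : ℤ) := Int.measurable_floor
      have hB : MeasurableSet {η : ℝ | enc ⌊η⌋ ≤ enc (⌊η⌋ + k)} :=
        measurableSet_le ((measurable_from_top).comp hfloor)
          ((measurable_from_top).comp (hfloor.add_const k))
      have : {η : ℝ | f (η + (k : ℝ)) ≠ 0 → enc ⌊η⌋ ≤ enc (⌊η⌋ + k)} =
          {η : ℝ | f (η + (k : ℝ)) ≠ 0}ᶜ ∪ {η : ℝ | enc ⌊η⌋ ≤ enc (⌊η⌋ + k)} := by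
        ext η; simp [imp_iff_not_or]
      rw [this]
      exact hA.compl.union hB
    have : G = {η : ℝ | f η ≠ 0} ∩ ⋂ k : ℤ, {η : ℝ | f (η + (k : ℝ)) ≠ 0 →
        enc ⌊η⌋ ≤ enc (⌊η⌋ + k)} := by
      ext η; simp [hG, Set.mem_iInter]
    rw [this]
    exact h0.inter (MeasurableSet.iInter h1)
  refine ⟨G, hGmeas, fun η hη => hη.1, ?_⟩
  filter_upwards [htrans] with ξ hξ
  -- there is some k with f (ξ + k) ≠ 0
  have hex : ∃ k : ℤ, f (ξ + (k : ℝ)) ≠ 0 := by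
    by_contra h
    push_neg at h
    have : (∑' k : ℤ, ENNReal.ofReal (f (ξ + (k : ℝ)))) = 0 := by
      simp [h]
    rw [this] at hξ
    exact one_ne_zero hξ.symm
  set S : Set ℤ := {k | f (ξ + (k : ℝ)) ≠ 0} with hS
  have hSne : S.Nonempty := hex
  set A : Set ℕ := (fun k => enc (⌊ξ⌋ + k)) '' S with hA
  have hAne : A.Nonempty := hSne.image _
  obtain ⟨k₀, hk₀S, hk₀⟩ : ∃ k₀ ∈ S, enc (⌊ξ⌋ + k₀) = sInf A := by
    obtain ⟨n, hn⟩ := Nat.sInf_mem hAne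
    exact ⟨n, hn.1, hn.2⟩
  have hmin : ∀ k ∈ S, enc (⌊ξ⌋ + k₀) ≤ enc (⌊ξ⌋ + k) := by
    intro k hk
    rw [hk₀]
    exact Nat.sInf_le ⟨k, hk, rfl⟩
  have floor_shift : ∀ k : ℤ, ⌊ξ + (k : ℝ)⌋ = ⌊ξ⌋ + k := fun k => Int.floor_add_intCast ξ k
  refine ⟨k₀, ⟨hk₀S, ?_⟩, ?_⟩
  · intro j hj
    rw [floor_shift]
    have : f (ξ + ((k₀ + j : ℤ) : ℝ)) ≠ 0 := by
      push_cast
      rwa [← add_assoc]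
    have := hmin (k₀ + j) this
    rwa [← add_assoc] at this
  · intro k hk
    have hkS : k ∈ S := hk.1
    have h1 : enc (⌊ξ⌋ + k₀) ≤ enc (⌊ξ⌋ + k) := hmin k hkS
    have h2 : enc (⌊ξ⌋ + k) ≤ enc (⌊ξ⌋ + k₀) := by
      have := hk.2 (k₀ - k) ?_
      · rw [floor_shift] at this
        have h' : ⌊ξ⌋ + k + (k₀ - k) = ⌊ξ⌋ + k₀ := by ring
        rwa [h'] at this
      · have : ξ + (k : ℝ) + ((k₀ - k : ℤ) : ℝ) = ξ + (k₀ : ℝ) := by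
          push_cast; ring
        rw [this]
        exact hk₀S
    have : enc (⌊ξ⌋ + k) = enc (⌊ξ⌋ + k₀) := le_antisymm h2 h1
    have := enc_inj this
    omega
end

section
/- Let f : ℝ → ℝ be a nonnegative Lebesgue measurable function such that for almost every ξ ∈ ℝ, ∑_{j∈ℤ} f(2^j ξ) = 1 (sum of nonnegative terms in [0,∞]). Then the support {ξ : f(ξ) ≠ 0} of f contains a Lebesgue measurable set G that tiles ℝ by dyadic dilations, i.e., for almost every ξ ∈ ℝ there is exactly one j ∈ ℤ with 2^j ξ ∈ G. -/
open MeasureTheory ENNReal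

theorem stmt_6 (f : ℝ → ℝ) (hmeas : Measurable f) (hf : ∀ x, 0 ≤ f x)
    (hdil : ∀ᵐ ξ ∂(volume : Measure ℝ),
      ∑' j : ℤ, ENNReal.ofReal (f ((2 : ℝ) ^ j * ξ)) = 1) :
    ∃ G : Set ℝ, MeasurableSet G ∧ G ⊆ {ξ : ℝ | f ξ ≠ 0} ∧
      ∀ᵐ ξ ∂(volume : Measure ℝ), ∃! j : ℤ, (2 : ℝ) ^ j * ξ ∈ G := by
  classical
  set a : ℝ → ℤ → ℝ≥0∞ := fun ξ k => ENNReal.ofReal (f ((2:ℝ)^k * ξ)) with ha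
  set g : ℝ → ℤ → ℝ≥0∞ := fun ξ n => ∑' k : ℤ, if k ≤ n then a ξ k else 0 with hg
  -- monotonicity in n
  have hmono : ∀ (ξ : ℝ) (m n : ℤ), m ≤ n → g ξ m ≤ g ξ n := by
    intro ξ m n hmn
    refine ENNReal.tsum_le_tsum fun k => ?_
    by_cases h1 : k ≤ m
    · simp [h1, h1.trans hmn]
    · simp [h1]
  -- step relation
  have hstep : ∀ (ξ : ℝ) (n : ℤ), g ξ n = g ξ (n-1) + a ξ n := by
    intro ξ n
    have hpt : ∀ k : ℤ, (if k ≤ n then a ξ k else 0)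
        = (if k ≤ n - 1 then a ξ k else 0) + (if k = n then a ξ n else 0) := by
      intro k
      by_cases h1 : k = n
      · subst h1; simp [show ¬ (k ≤ k - 1) by omega]
      · by_cases h2 : k ≤ n - 1
        · simp [h1, h2, show k ≤ n by omega]
        · simp [h1, h2, show ¬ (k ≤ n) by omega]
    calc g ξ n = ∑' k : ℤ, ((if k ≤ n - 1 then a ξ k else 0) + (if k = n then a ξ n else 0)) :=
          tsum_congr hpt
      _ = g ξ (n-1) + a ξ n := by rw [ENNReal.tsum_add, tsum_ite_eq]
  -- scaling relation
  have hscale : ∀ (ξ : ℝ) (j n : ℤ), g ((2:ℝ)^j * ξ) n = g ξ (n + j) := by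
    intro ξ j n
    have h1 : ∀ k : ℤ, a ((2:ℝ)^j * ξ) k = a ξ (k + j) := by
      intro k
      simp only [ha]
      rw [← mul_assoc, ← zpow_add₀ (two_ne_zero)]
    calc g ((2:ℝ)^j * ξ) n
        = ∑' k : ℤ, (fun m : ℤ => if m ≤ n + j then a ξ m else 0) ((Equiv.addRight j) k) := by
          refine tsum_congr fun k => ?_
          simp only [Equiv.coe_addRight, add_le_add_iff_right, h1]
      _ = ∑' m : ℤ, (if m ≤ n + j then a ξ m else 0) :=
          Equiv.tsum_eq (Equiv.addRight j) (fun m : ℤ => if m ≤ n + j then a ξ m else 0)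
      _ = g ξ (n + j) := rfl
  -- measurability of g · n
  have hmeasg : ∀ n : ℤ, Measurable fun ξ => g ξ n := by
    intro n
    apply Measurable.ennreal_tsum
    intro k
    by_cases h : k ≤ n
    · have hk : Measurable fun ξ : ℝ => a ξ k :=
        (hmeas.comp (measurable_id.const_mul ((2:ℝ)^k))).ennreal_ofReal
      have he : (fun ξ : ℝ => if k ≤ n then a ξ k else 0) = fun ξ => a ξ k := by
        funext ξ; rw [if_pos h]
      rw [he]; exact hk
    · have he : (fun ξ : ℝ => if k ≤ n then a ξ k else 0) = fun _ => 0 := by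
        funext ξ; rw [if_neg h]
      rw [he]; exact measurable_const
  set G : Set ℝ := {ξ | (1:ℝ≥0∞)/2 < g ξ 0 ∧ g ξ (-1) ≤ 1/2} with hG
  refine ⟨G, ?_, ?_, ?_⟩
  · exact ((hmeasg 0) measurableSet_Ioi).inter ((hmeasg (-1)) measurableSet_Iic)
  · intro ξ hξ hfx
    have h0 : a ξ 0 = 0 := by simp [ha, hfx]
    have := hstep ξ 0
    rw [h0, add_zero] at this
    rcases hξ with ⟨h1, h2⟩
    rw [this] at h1
    exact absurd h2 (not_le.mpr (by simpa using h1))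
  · filter_upwards [hdil] with ξ hξ
    have hsum : ∑' k : ℤ, a ξ k = 1 := hξ
    -- find a finset with large sum
    have hlt : (1:ℝ≥0∞)/2 < ⨆ s : Finset ℤ, ∑ k ∈ s, a ξ k := by
      rw [← ENNReal.tsum_eq_iSup_sum, hsum]
      exact ENNReal.half_lt_self one_ne_zero one_ne_top
    obtain ⟨s, hs⟩ := lt_iSup_iff.mp hlt
    have hsne : s.Nonempty := by
      rcases Finset.eq_empty_or_nonempty s with h | h
      · exfalso; rw [h] at hs; simp at hs
      · exact h
    -- nonempty: some n with g ξ n > 1/2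
    have hub : ∃ n : ℤ, (1:ℝ≥0∞)/2 < g ξ n := by
      refine ⟨s.max' hsne, lt_of_lt_of_le hs ?_⟩
      have : ∑ k ∈ s, a ξ k = ∑ k ∈ s, (if k ≤ s.max' hsne then a ξ k else 0) :=
        Finset.sum_congr rfl (fun k hk => by simp [Finset.le_max' s k hk])
      rw [this]
      exact ENNReal.sum_le_tsum s
    -- bounded below
    have hbdd : ∀ n : ℤ, (1:ℝ≥0∞)/2 < g ξ n → s.min' hsne ≤ n := by
      intro n hn
      by_contra hcon
      push_neg at hcon
      -- g ξ n + ∑ s ≤ 1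
      have hins : ∑ k ∈ s, a ξ k = ∑' k : ℤ, Set.indicator (↑s : Set ℤ) (a ξ) k := by
        rw [← tsum_subtype]
        exact (Finset.tsum_subtype s (a ξ)).symm
      have hkey : g ξ n + ∑ k ∈ s, a ξ k ≤ 1 := by
        rw [hins, ← ENNReal.tsum_add, ← hsum]
        refine ENNReal.tsum_le_tsum fun k => ?_
        by_cases h1 : k ≤ n
        · have hks : k ∉ s := fun hk =>
            absurd (Finset.min'_le s k hk) (by omega)
          have hz : (↑s : Set ℤ).indicator (a ξ) k = 0 :=
            Set.indicator_of_notMem (by simpa using hks) _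
          simp [h1, hz]
        · simp only [h1, if_false, zero_add]
          exact Set.indicator_le_self _ _ k
      have : (1:ℝ≥0∞) < 1 := by
        calc (1:ℝ≥0∞) = 1/2 + 1/2 := by rw [ENNReal.add_halves]
          _ < g ξ n + ∑ k ∈ s, a ξ k := ENNReal.add_lt_add hn hs
          _ ≤ 1 := hkey
      exact absurd this (lt_irrefl _)
    obtain ⟨m, hm, hmin⟩ := Int.exists_least_of_bdd ⟨s.min' hsne, hbdd⟩ hub
    refine ⟨m, ?_, ?_⟩
    · constructor
      · rw [hscale]; simpa using hm
      · rw [hscale]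
        refine not_lt.mp fun h => ?_
        have := hmin _ h
        omega
    · intro j hj
      rcases hj with ⟨hj1, hj2⟩
      rw [hscale] at hj1 hj2
      have h1 : m ≤ j := by simpa using hmin _ hj1
      have h2 : ¬ (m ≤ -1 + j) := fun h =>
        absurd hj2 (not_le.mpr (lt_of_lt_of_le hm (hmono ξ m (-1+j) h)))
      omega
end

section
/- Let g : ℝ → ℝ be a nonnegative Lebesgue measurable function such that ∑_{j∈ℤ} g(2^j ξ) = 1 for almost every ξ ∈ ℝ (sum of nonnegative terms in [0,∞]). Then ∫_ℝ g(ξ)/|ξ| dξ = log 4 (natural logarithm). In particular, if ψ̂ is the Fourier transform of an orthonormal wavelet, taking g = |ψ̂|² gives ∫_ℝ |ψ̂(ξ)|² dξ/|ξ| = log 4. -/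
open MeasureTheory Set
open scoped ENNReal
-- auxiliary: integral of 1/x over [1,2)
lemma aux_log_int : ∫⁻ x in Set.Ico (1:ℝ) 2, (ENNReal.ofReal x)⁻¹ = ENNReal.ofReal (Real.log 2) := by
  have h1 : ∀ᵐ x ∂(volume.restrict (Set.Ico (1:ℝ) 2)),
      (ENNReal.ofReal x)⁻¹ = ENNReal.ofReal x⁻¹ := by
    filter_upwards [ae_restrict_mem measurableSet_Ico] with x hx
    rw [ENNReal.ofReal_inv_of_pos (lt_of_lt_of_le one_pos hx.1)]
  rw [lintegral_congr_ae h1]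
  have hint : IntegrableOn (fun x : ℝ => x⁻¹) (Set.Ico 1 2) := by
    apply (ContinuousOn.integrableOn_compact isCompact_Icc ?_).mono_set Set.Ico_subset_Icc_self
    exact continuousOn_id.inv₀ fun x hx h => by simp only [id_eq] at h; rw [h] at hx; exact absurd hx.1 (by norm_num)
  have hnn : 0 ≤ᵐ[volume.restrict (Set.Ico (1:ℝ) 2)] fun x : ℝ => x⁻¹ := by
    filter_upwards [ae_restrict_mem measurableSet_Ico] with x hx
    exact inv_nonneg.2 (by linarith [hx.1])
  rw [← ofReal_integral_eq_lintegral_ofReal hint hnn]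
  congr 1
  rw [MeasureTheory.integral_Ico_eq_integral_Ioo, ← MeasureTheory.integral_Ioc_eq_integral_Ioo,
    ← intervalIntegral.integral_of_le (by norm_num : (1:ℝ) ≤ 2),
    integral_inv (by rw [Set.uIcc_of_le (by norm_num : (1:ℝ) ≤ 2)]; intro h; exact absurd h.1 (by norm_num))]
  norm_num

lemma aux_union_eq : (⋃ j : ℤ, Set.Ico ((2:ℝ)^j) ((2:ℝ)^(j+1))) = Set.Ioi 0 := by
  ext x
  simp only [Set.mem_iUnion, Set.mem_Ioi, Set.mem_Ico]
  constructor
  · rintro ⟨j, h1, _⟩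
    exact lt_of_lt_of_le (zpow_pos (by norm_num) j) h1
  · intro hx
    obtain ⟨n, hn⟩ := exists_mem_Ico_zpow hx one_lt_two
    exact ⟨n, hn.1, hn.2⟩

lemma aux_core (h : ℝ → ℝ≥0∞) (hm : Measurable h)
    (hd : ∀ᵐ x : ℝ, ∑' j : ℤ, h ((2:ℝ) ^ j * x) = 1) :
    ∫⁻ x in Set.Ioi (0:ℝ), h x * (ENNReal.ofReal x)⁻¹ = ENNReal.ofReal (Real.log 2) := by
  have hFm : Measurable fun x : ℝ => h x * (ENNReal.ofReal x)⁻¹ :=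
    hm.mul measurable_id.ennreal_ofReal.inv
  have hdisj : Pairwise (Function.onFun Disjoint fun j : ℤ => Set.Ico ((2:ℝ)^j) ((2:ℝ)^(j+1))) := by
    intro i j hij
    refine Set.disjoint_left.2 fun x hxi hxj => hij ?_
    have h1 : (2:ℝ)^i < 2^(j+1) := lt_of_le_of_lt hxi.1 hxj.2
    have h2 : (2:ℝ)^j < 2^(i+1) := lt_of_le_of_lt hxj.1 hxi.2
    rw [zpow_lt_zpow_iff_right₀ (by norm_num : (1:ℝ) < 2)] at h1 h2
    omega
  rw [← aux_union_eq, lintegral_iUnion (fun j => measurableSet_Ico) hdisj]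
  have piece : ∀ j : ℤ, ∫⁻ x in Set.Ico ((2:ℝ)^j) ((2:ℝ)^(j+1)), h x * (ENNReal.ofReal x)⁻¹
      = ∫⁻ x in Set.Ico (1:ℝ) 2, h ((2:ℝ)^j * x) * (ENNReal.ofReal x)⁻¹ := by
    intro j
    set c : ℝ := (2:ℝ)^j with hc
    have hcpos : 0 < c := zpow_pos (by norm_num) j
    have hc2 : (2:ℝ)^(j+1) = 2 * c := by rw [hc, zpow_add_one₀ (by norm_num : (2:ℝ) ≠ 0)]; ring
    have key : ∀ G : ℝ → ℝ≥0∞, Measurable G →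
        ∫⁻ x, G x = ENNReal.ofReal c * ∫⁻ x, G (c * x) := by
      intro G hG
      rw [← lintegral_map hG (measurable_const_mul c), Real.map_volume_mul_left (ne_of_gt hcpos),
        lintegral_smul_measure, smul_eq_mul, ← mul_assoc, abs_of_pos (inv_pos.2 hcpos),
        ← ENNReal.ofReal_mul hcpos.le, mul_inv_cancel₀ (ne_of_gt hcpos), ENNReal.ofReal_one, one_mul]
    have hGm : Measurable ((Set.Ico c (2*c)).indicator fun x => h x * (ENNReal.ofReal x)⁻¹) :=
      hFm.indicator measurableSet_Ico
    rw [← lintegral_indicator measurableSet_Ico, hc2, key _ hGm]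
    have hmem : ∀ x : ℝ, c * x ∈ Set.Ico c (2*c) ↔ x ∈ Set.Ico (1:ℝ) 2 := by
      intro x
      simp only [Set.mem_Ico]
      constructor
      · intro ⟨h1, h2⟩
        constructor
        · by_contra hlt; push_neg at hlt; nlinarith
        · nlinarith
      · intro ⟨h1, h2⟩
        constructor <;> nlinarith
    have hind : ∀ x : ℝ, ((Set.Ico c (2*c)).indicator fun y => h y * (ENNReal.ofReal y)⁻¹) (c * x)
        = (Set.Ico (1:ℝ) 2).indicator (fun y => h (c*y) * (ENNReal.ofReal (c*y))⁻¹) x := by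
      intro x
      by_cases hx : x ∈ Set.Ico (1:ℝ) 2
      · rw [Set.indicator_of_mem ((hmem x).2 hx), Set.indicator_of_mem hx]
      · rw [Set.indicator_of_notMem (fun hmm => hx ((hmem x).1 hmm)), Set.indicator_of_notMem hx]
    simp only [hind]
    rw [lintegral_indicator measurableSet_Ico]
    have hint : ∀ᵐ x ∂(volume.restrict (Set.Ico (1:ℝ) 2)),
        h (c*x) * (ENNReal.ofReal (c*x))⁻¹
          = (ENNReal.ofReal c)⁻¹ * (h (c*x) * (ENNReal.ofReal x)⁻¹) := by
      filter_upwards [ae_restrict_mem measurableSet_Ico] with x hx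
      rw [ENNReal.ofReal_mul hcpos.le,
        ENNReal.mul_inv (Or.inl (ENNReal.ofReal_pos.2 hcpos).ne') (Or.inl ENNReal.ofReal_ne_top)]
      ring
    rw [lintegral_congr_ae hint,
      lintegral_const_mul (ENNReal.ofReal c)⁻¹
        (show Measurable fun x : ℝ => h (c * x) * (ENNReal.ofReal x)⁻¹ from
          (hm.comp (measurable_const_mul c)).mul measurable_id.ennreal_ofReal.inv),
      ← mul_assoc, ENNReal.mul_inv_cancel (ENNReal.ofReal_pos.2 hcpos).ne' ENNReal.ofReal_ne_top,
      one_mul]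
  have hmeas' : ∀ j : ℤ, AEMeasurable (fun x : ℝ => h ((2:ℝ)^j * x) * (ENNReal.ofReal x)⁻¹)
      (volume.restrict (Set.Ico (1:ℝ) 2)) :=
    fun j => ((hm.comp (measurable_const_mul _)).mul measurable_id.ennreal_ofReal.inv).aemeasurable
  rw [tsum_congr piece, ← lintegral_tsum hmeas']
  have : ∀ᵐ x ∂(volume.restrict (Set.Ico (1:ℝ) 2)),
      ∑' j : ℤ, h ((2:ℝ)^j * x) * (ENNReal.ofReal x)⁻¹ = (ENNReal.ofReal x)⁻¹ := by
    filter_upwards [ae_restrict_of_ae hd] with x hx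
    rw [ENNReal.tsum_mul_right, hx, one_mul]
  rw [lintegral_congr_ae this, aux_log_int]

theorem stmt_8 (g : ℝ → ℝ) (hmeas : Measurable g) (hg : ∀ x, 0 ≤ g x)
    (hdil : ∀ᵐ ξ ∂(volume : Measure ℝ),
      ∑' j : ℤ, ENNReal.ofReal (g ((2 : ℝ) ^ j * ξ)) = 1) :
    ∫⁻ ξ, ENNReal.ofReal (g ξ / |ξ|) ∂(volume : Measure ℝ) =
      ENNReal.ofReal (Real.log 4) := by
  have hΦm : Measurable fun ξ : ℝ => ENNReal.ofReal (g ξ / |ξ|) :=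
    (hmeas.div measurable_abs).ennreal_ofReal
  have hpos : ∫⁻ ξ in Set.Ioi (0:ℝ), ENNReal.ofReal (g ξ / |ξ|) = ENNReal.ofReal (Real.log 2) := by
    have heq : ∀ᵐ ξ ∂(volume.restrict (Set.Ioi (0:ℝ))),
        ENNReal.ofReal (g ξ / |ξ|) = ENNReal.ofReal (g ξ) * (ENNReal.ofReal ξ)⁻¹ := by
      filter_upwards [ae_restrict_mem measurableSet_Ioi] with ξ hξ
      rw [abs_of_pos hξ, div_eq_mul_inv, ENNReal.ofReal_mul (hg ξ), ENNReal.ofReal_inv_of_pos hξ]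
    rw [lintegral_congr_ae heq]
    exact aux_core _ hmeas.ennreal_ofReal hdil
  have hP : MeasurableSet {ξ : ℝ | ∑' j : ℤ, ENNReal.ofReal (g ((2:ℝ)^j * ξ)) = 1} := by
    have hmt : Measurable fun ξ : ℝ => ∑' j : ℤ, ENNReal.ofReal (g ((2:ℝ)^j * ξ)) :=
      Measurable.ennreal_tsum fun j => (hmeas.comp (measurable_const_mul _)).ennreal_ofReal
    exact hmt (measurableSet_singleton 1)
  have hdneg : ∀ᵐ x : ℝ, ∑' j : ℤ, ENNReal.ofReal (g (-((2:ℝ)^j * x))) = 1 := by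
    have h1 : ∀ᵐ x : ℝ, ∑' j : ℤ, ENNReal.ofReal (g ((2:ℝ)^j * (-x))) = 1 := by
      rw [← (Measure.measurePreserving_neg (volume : Measure ℝ)).map_eq] at hdil
      exact (ae_map_iff measurable_neg.aemeasurable hP).mp hdil
    filter_upwards [h1] with x hx
    simpa [mul_neg] using hx
  have hneg : ∫⁻ ξ in Set.Iio (0:ℝ), ENNReal.ofReal (g ξ / |ξ|) = ENNReal.ofReal (Real.log 2) := by
    have step1 : ∫⁻ ξ in Set.Iio (0:ℝ), ENNReal.ofReal (g ξ / |ξ|)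
        = ∫⁻ x in Set.Ioi (0:ℝ), ENNReal.ofReal (g (-x) / |(-x)|) := by
      rw [← lintegral_indicator measurableSet_Iio, ← lintegral_indicator measurableSet_Ioi]
      have hmap : ∫⁻ x, (Set.Iio (0:ℝ)).indicator (fun ξ => ENNReal.ofReal (g ξ / |ξ|)) x
            ∂(Measure.map Neg.neg (volume : Measure ℝ))
          = ∫⁻ x, ((Set.Iio (0:ℝ)).indicator (fun ξ => ENNReal.ofReal (g ξ / |ξ|))) (-x) := by
        exact lintegral_map (hΦm.indicator measurableSet_Iio) measurable_neg
      rw [(Measure.measurePreserving_neg (volume : Measure ℝ)).map_eq] at hmap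
      rw [hmap]
      refine lintegral_congr fun x => ?_
      by_cases hx : x ∈ Set.Ioi (0:ℝ)
      · rw [Set.indicator_of_mem (show -x ∈ Set.Iio (0:ℝ) by simpa using hx),
          Set.indicator_of_mem hx]
      · rw [Set.indicator_of_notMem (show -x ∉ Set.Iio (0:ℝ) by simpa using hx),
          Set.indicator_of_notMem hx]
    rw [step1]
    have heq : ∀ᵐ x ∂(volume.restrict (Set.Ioi (0:ℝ))),
        ENNReal.ofReal (g (-x) / |(-x)|) = ENNReal.ofReal (g (-x)) * (ENNReal.ofReal x)⁻¹ := by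
      filter_upwards [ae_restrict_mem measurableSet_Ioi] with x hx
      rw [abs_neg, abs_of_pos hx, div_eq_mul_inv, ENNReal.ofReal_mul (hg _),
        ENNReal.ofReal_inv_of_pos hx]
    rw [lintegral_congr_ae heq]
    exact aux_core _ (hmeas.comp measurable_neg).ennreal_ofReal hdneg
  have hsplit := (lintegral_add_compl (μ := (volume : Measure ℝ)) (fun ξ : ℝ => ENNReal.ofReal (g ξ / |ξ|))
    (measurableSet_Iio (a := (0:ℝ)))).symm
  rw [hsplit, compl_Iio, hneg,
    show (volume : Measure ℝ).restrict (Set.Ici (0:ℝ)) = volume.restrict (Set.Ioi 0) from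
      (Measure.restrict_congr_set Ioi_ae_eq_Ici).symm, hpos,
    ← ENNReal.ofReal_add (Real.log_nonneg one_le_two) (Real.log_nonneg one_le_two)]
  congr 1
  rw [show (4:ℝ) = 2*2 by norm_num, Real.log_mul two_ne_zero two_ne_zero]
end

section
/- Let φ : ℝ → ℂ be a measurable function such that for every odd integer q, for almost every ξ ∈ ℝ, the series ∑_{j=0}^∞ φ(2^j ξ)·conj(φ(2^j(ξ+q))) converges absolutely and its sum is 0. Let E = {ξ : φ(ξ) ≠ 0}. Then for every nonzero k ∈ ℤ, for almost every ξ ∈ ℝ with ξ ∈ E and ξ + k ∈ E, there exists a nonzero j ∈ ℤ such that 2^j·k ∈ ℤ, 2^j ξ ∈ E, and 2^j(ξ + k) ∈ E. -/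
open MeasureTheory

lemma ae_comp_const_mul {P : ℝ → Prop} (c : ℝ) (hc : c ≠ 0)
    (h : ∀ᵐ η ∂(volume : Measure ℝ), P η) :
    ∀ᵐ ξ ∂(volume : Measure ℝ), P (c * ξ) := by
  rw [ae_iff] at h ⊢
  have : {ξ : ℝ | ¬ P (c * ξ)} = (fun ξ => c * ξ) ⁻¹' {η | ¬ P η} := rfl
  rw [this, Real.volume_preimage_mul_left hc, h, mul_zero]

theorem stmt_9 (φ : ℝ → ℂ) (hmeas : Measurable φ)
    (h3 : ∀ q : ℤ, Odd q →
      ∀ᵐ ξ ∂(volume : Measure ℝ),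
        Summable (fun j : ℕ =>
          ‖φ ((2 : ℝ) ^ j * ξ) * (starRingEnd ℂ) (φ ((2 : ℝ) ^ j * (ξ + (q : ℝ))))‖) ∧
        ∑' j : ℕ, φ ((2 : ℝ) ^ j * ξ) * (starRingEnd ℂ) (φ ((2 : ℝ) ^ j * (ξ + (q : ℝ)))) = 0) :
    ∀ k : ℤ, k ≠ 0 →
      ∀ᵐ ξ ∂(volume : Measure ℝ),
        (φ ξ ≠ 0 ∧ φ (ξ + (k : ℝ)) ≠ 0) →
        ∃ j : ℤ, j ≠ 0 ∧ (∃ n : ℤ, (2 : ℝ) ^ j * (k : ℝ) = (n : ℝ)) ∧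
          φ ((2 : ℝ) ^ j * ξ) ≠ 0 ∧ φ ((2 : ℝ) ^ j * (ξ + (k : ℝ))) ≠ 0 := by
  intro k hk
  -- factor k = 2^m * q with q odd
  obtain ⟨m, q', hq', hnat⟩ := Nat.exists_eq_two_pow_mul_odd
    (Int.natAbs_ne_zero.mpr hk)
  -- let q be the signed odd part
  obtain hke | hke := Int.natAbs_eq k
  · -- k = 2^m * q'
    have hkeq : k = 2 ^ m * (q' : ℤ) := by rw [hke, hnat]; push_cast; ring
    have hq : Odd ((q' : ℤ)) := Int.odd_coe_nat q' |>.mpr hq'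
    have H := h3 (q' : ℤ) hq
    have H2 := ae_comp_const_mul ((2 : ℝ) ^ m)⁻¹ (by positivity) H
    filter_upwards [H2] with ξ hξ hφ
    obtain ⟨hsum, htsum⟩ := hξ
    push_cast at hsum htsum
    set η : ℝ := ((2 : ℝ) ^ m)⁻¹ * ξ with hη
    have h2m : (2 : ℝ) ^ m ≠ 0 := by positivity
    have hterm_m : φ ((2 : ℝ) ^ m * η) * (starRingEnd ℂ) (φ ((2 : ℝ) ^ m * (η + (q' : ℝ)))) ≠ 0 := by
      have e1 : (2 : ℝ) ^ m * η = ξ := by rw [hη, ← mul_assoc, mul_inv_cancel₀ h2m, one_mul]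
      have e2 : (2 : ℝ) ^ m * (η + (q' : ℝ)) = ξ + (k : ℝ) := by
        rw [hkeq]; push_cast; rw [← e1]; ring
      rw [e1, e2]
      exact mul_ne_zero hφ.1 (by simpa using hφ.2)
    -- there must exist j' ≠ m with nonzero term
    have hne : ∃ j' : ℕ, j' ≠ m ∧
        φ ((2 : ℝ) ^ j' * η) * (starRingEnd ℂ) (φ ((2 : ℝ) ^ j' * (η + (q' : ℝ)))) ≠ 0 := by
      by_contra hcon
      push_neg at hcon
      have := tsum_eq_single (L := SummationFilter.unconditional ℕ) (f := fun j : ℕ =>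
        φ ((2 : ℝ) ^ j * η) * (starRingEnd ℂ) (φ ((2 : ℝ) ^ j * (η + (q' : ℝ))))) m
        (fun b hb => hcon b hb)
      rw [htsum] at this
      exact hterm_m this.symm
    obtain ⟨j', hj'm, hj'⟩ := hne
    refine ⟨(j' : ℤ) - m, sub_ne_zero.mpr (by exact_mod_cast hj'm), ?_, ?_, ?_⟩
    · refine ⟨2 ^ j' * (q' : ℤ), ?_⟩
      rw [hkeq]
      push_cast
      rw [zpow_sub₀ (by norm_num : (2:ℝ) ≠ 0)]
      field_simp
      simp only [zpow_natCast]
      ring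
    · have e : (2 : ℝ) ^ ((j' : ℤ) - m) * ξ = (2 : ℝ) ^ j' * η := by
        rw [zpow_sub₀ (by norm_num : (2:ℝ) ≠ 0), hη]
        push_cast [zpow_natCast]
        ring
      rw [e]
      intro h0
      exact hj' (by rw [h0, zero_mul])
    · have e : (2 : ℝ) ^ ((j' : ℤ) - m) * (ξ + (k : ℝ)) = (2 : ℝ) ^ j' * (η + (q' : ℝ)) := by
        rw [zpow_sub₀ (by norm_num : (2:ℝ) ≠ 0), hη, hkeq]
        push_cast [zpow_natCast]
        field_simp
      rw [e]
      intro h0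
      exact hj' (by rw [h0, map_zero, mul_zero])
  · -- k = -(2^m * q'), use q = -q'
    have hkeq : k = 2 ^ m * (-(q' : ℤ)) := by rw [hke, hnat]; push_cast; ring
    have hq : Odd (-(q' : ℤ)) := (Int.odd_coe_nat q' |>.mpr hq').neg
    have H := h3 (-(q' : ℤ)) hq
    have H2 := ae_comp_const_mul ((2 : ℝ) ^ m)⁻¹ (by positivity) H
    filter_upwards [H2] with ξ hξ hφ
    obtain ⟨hsum, htsum⟩ := hξ
    push_cast at hsum htsum
    set η : ℝ := ((2 : ℝ) ^ m)⁻¹ * ξ with hη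
    have h2m : (2 : ℝ) ^ m ≠ 0 := by positivity
    have hterm_m : φ ((2 : ℝ) ^ m * η) *
        (starRingEnd ℂ) (φ ((2 : ℝ) ^ m * (η + (-(q' : ℝ))))) ≠ 0 := by
      have e1 : (2 : ℝ) ^ m * η = ξ := by rw [hη, ← mul_assoc, mul_inv_cancel₀ h2m, one_mul]
      have e2 : (2 : ℝ) ^ m * (η + (-(q' : ℝ))) = ξ + (k : ℝ) := by
        rw [hkeq]; push_cast; rw [← e1]; ring
      rw [e1, e2]
      exact mul_ne_zero hφ.1 (by simpa using hφ.2)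
    have hne : ∃ j' : ℕ, j' ≠ m ∧
        φ ((2 : ℝ) ^ j' * η) *
          (starRingEnd ℂ) (φ ((2 : ℝ) ^ j' * (η + (-(q' : ℝ))))) ≠ 0 := by
      by_contra hcon
      push_neg at hcon
      have := tsum_eq_single (L := SummationFilter.unconditional ℕ) (f := fun j : ℕ =>
        φ ((2 : ℝ) ^ j * η) *
          (starRingEnd ℂ) (φ ((2 : ℝ) ^ j * (η + (-(q' : ℝ)))))) m
        (fun b hb => hcon b hb)
      rw [htsum] at this
      exact hterm_m this.symm
    obtain ⟨j', hj'm, hj'⟩ := hne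
    refine ⟨(j' : ℤ) - m, sub_ne_zero.mpr (by exact_mod_cast hj'm), ?_, ?_, ?_⟩
    · refine ⟨2 ^ j' * (-(q' : ℤ)), ?_⟩
      rw [hkeq]
      push_cast
      rw [zpow_sub₀ (by norm_num : (2:ℝ) ≠ 0)]
      field_simp
      simp only [zpow_natCast]
      ring
    · have e : (2 : ℝ) ^ ((j' : ℤ) - m) * ξ = (2 : ℝ) ^ j' * η := by
        rw [zpow_sub₀ (by norm_num : (2:ℝ) ≠ 0), hη]
        push_cast [zpow_natCast]
        ring
      rw [e]
      intro h0
      exact hj' (by rw [h0, zero_mul])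
    · have e : (2 : ℝ) ^ ((j' : ℤ) - m) * (ξ + (k : ℝ)) =
          (2 : ℝ) ^ j' * (η + (-(q' : ℝ))) := by
        rw [zpow_sub₀ (by norm_num : (2:ℝ) ≠ 0), hη, hkeq]
        push_cast [zpow_natCast]
        field_simp
      rw [e]
      intro h0
      exact hj' (by rw [h0, map_zero, mul_zero])
end

section
/- Let φ : ℝ → ℂ be a measurable function such that for every integer j ≥ 1, for almost every ξ ∈ ℝ, the series ∑_{k∈ℤ} φ(2^j(ξ+k))·conj(φ(ξ+k)) converges absolutely and its sum is 0. Let E = {ξ : φ(ξ) ≠ 0}. Then for every nonzero j ∈ ℤ, for almost every ξ ∈ ℝ with ξ ∈ E and 2^j ξ ∈ E, there exists a nonzero k ∈ ℤ such that 2^j·k ∈ ℤ, ξ + k ∈ E, and 2^j(ξ + k) ∈ E. -/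
open MeasureTheory

lemma ae_comp_mul_left {c : ℝ} (hc : c ≠ 0) {p : ℝ → Prop}
    (h : ∀ᵐ x ∂(volume : Measure ℝ), p x) :
    ∀ᵐ x ∂(volume : Measure ℝ), p (c * x) := by
  have hq : Measure.QuasiMeasurePreserving (fun x : ℝ => c * x) volume volume := by
    refine ⟨(measurable_const_mul c), ?_⟩
    rw [Real.map_volume_mul_left hc]
    exact Measure.smul_absolutelyContinuous
  exact hq.ae h

lemma tsum_exists_ne {f : ℤ → ℂ} (h0 : f 0 ≠ 0) (hs : ∑' k, f k = 0) :
    ∃ k : ℤ, k ≠ 0 ∧ f k ≠ 0 := by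
  by_contra hcon
  push_neg at hcon
  have : ∑' k, f k = f 0 := tsum_eq_single 0 (fun b hb => hcon b hb)
  exact h0 (this ▸ hs)

theorem stmt_10 (φ : ℝ → ℂ) (hmeas : Measurable φ)
    (h4 : ∀ j : ℤ, 1 ≤ j →
      ∀ᵐ ξ ∂(volume : Measure ℝ),
        Summable (fun k : ℤ =>
          ‖φ ((2 : ℝ) ^ j * (ξ + (k : ℝ))) * (starRingEnd ℂ) (φ (ξ + (k : ℝ)))‖) ∧
        ∑' k : ℤ, φ ((2 : ℝ) ^ j * (ξ + (k : ℝ))) * (starRingEnd ℂ) (φ (ξ + (k : ℝ))) = 0) :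
    ∀ j : ℤ, j ≠ 0 →
      ∀ᵐ ξ ∂(volume : Measure ℝ),
        (φ ξ ≠ 0 ∧ φ ((2 : ℝ) ^ j * ξ) ≠ 0) →
        ∃ k : ℤ, k ≠ 0 ∧ (∃ n : ℤ, (2 : ℝ) ^ j * (k : ℝ) = (n : ℝ)) ∧
          φ (ξ + (k : ℝ)) ≠ 0 ∧ φ ((2 : ℝ) ^ j * (ξ + (k : ℝ))) ≠ 0 := by
  intro j hj
  rcases lt_or_gt_of_ne hj with hneg | hpos
  · -- j ≤ -1; apply h4 at j' = -j, pulled back along ξ ↦ 2^j * ξ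
    have hj' : (1 : ℤ) ≤ -j := by omega
    have h2j : ((2 : ℝ) ^ j) ≠ 0 := zpow_ne_zero _ two_ne_zero
    filter_upwards [ae_comp_mul_left h2j (h4 (-j) hj')] with ξ hξ hφ
    obtain ⟨hφ1, hφ2⟩ := hφ
    set f : ℤ → ℂ := fun k =>
      φ ((2 : ℝ) ^ (-j) * ((2 : ℝ) ^ j * ξ + (k : ℝ))) *
        (starRingEnd ℂ) (φ ((2 : ℝ) ^ j * ξ + (k : ℝ))) with hf
    have hinv : (2 : ℝ) ^ (-j) * (2 : ℝ) ^ j = 1 := by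
      rw [← zpow_add₀ (two_ne_zero (α := ℝ))]; simp
    have hf0 : f 0 ≠ 0 := by
      have : f 0 = φ ξ * (starRingEnd ℂ) (φ ((2 : ℝ) ^ j * ξ)) := by
        simp only [hf, Int.cast_zero, add_zero, ← mul_assoc, hinv, one_mul]
      rw [this]
      exact mul_ne_zero hφ1 ((map_ne_zero _).mpr hφ2)
    obtain ⟨k, hk0, hkne⟩ := tsum_exists_ne hf0 hξ.2
    refine ⟨2 ^ (-j).toNat * k, by positivity, ⟨k, ?_⟩, ?_, ?_⟩
    · have : ((2 ^ (-j).toNat * k : ℤ) : ℝ) = (2 : ℝ) ^ (-j) * (k : ℝ) := by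
        push_cast
        rw [← zpow_natCast (2 : ℝ), Int.toNat_of_nonneg (by omega)]
      rw [this, ← mul_assoc,
        show (2:ℝ)^j * (2:ℝ)^(-j) = 1 by rw [← zpow_add₀ (two_ne_zero (α := ℝ))]; simp,
        one_mul]
    · have h1 : φ ((2 : ℝ) ^ (-j) * ((2 : ℝ) ^ j * ξ + (k : ℝ))) ≠ 0 :=
        left_ne_zero_of_mul hkne
      have : ξ + ((2 ^ (-j).toNat * k : ℤ) : ℝ) =
          (2 : ℝ) ^ (-j) * ((2 : ℝ) ^ j * ξ + (k : ℝ)) := by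
        push_cast
        rw [← zpow_natCast (2 : ℝ), Int.toNat_of_nonneg (by omega)]
        rw [mul_add, ← mul_assoc, hinv, one_mul]
      rw [this]; exact h1
    · have h2 : φ ((2 : ℝ) ^ j * ξ + (k : ℝ)) ≠ 0 := by
        have := right_ne_zero_of_mul hkne
        exact fun h => this (by simp [h])
      have : (2 : ℝ) ^ j * (ξ + ((2 ^ (-j).toNat * k : ℤ) : ℝ)) =
          (2 : ℝ) ^ j * ξ + (k : ℝ) := by
        push_cast
        rw [← zpow_natCast (2 : ℝ), Int.toNat_of_nonneg (by omega)]
        rw [mul_add, ← mul_assoc]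
        rw [show (2:ℝ)^j * (2:ℝ)^(-j) = 1 by rw [← zpow_add₀ (two_ne_zero (α := ℝ))]; simp]
        ring
      rw [this]; exact h2
  · -- j ≥ 1
    filter_upwards [h4 j hpos] with ξ hξ hφ
    obtain ⟨hφ1, hφ2⟩ := hφ
    set f : ℤ → ℂ := fun k =>
      φ ((2 : ℝ) ^ j * (ξ + (k : ℝ))) * (starRingEnd ℂ) (φ (ξ + (k : ℝ))) with hf
    have hf0 : f 0 ≠ 0 := by
      have : f 0 = φ ((2 : ℝ) ^ j * ξ) * (starRingEnd ℂ) (φ ξ) := by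
        simp [hf]
      rw [this]
      exact mul_ne_zero hφ2 ((map_ne_zero _).mpr hφ1)
    obtain ⟨k, hk0, hkne⟩ := tsum_exists_ne hf0 hξ.2
    refine ⟨k, hk0, ⟨2 ^ j.toNat * k, ?_⟩, ?_, ?_⟩
    · push_cast
      rw [← zpow_natCast (2 : ℝ), Int.toNat_of_nonneg (by omega)]
    · have := right_ne_zero_of_mul hkne
      exact fun h => this (by simp [h])
    · exact left_ne_zero_of_mul hkne
end
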